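/- arXiv:2601.23111 — 6 statements merged into one kernel-verified Lean document; each statement's English description precedes it below -/
import Mathlib

section
/- Let W be a finite Coxeter group with simple reflections S, and let c be a Coxeter element (a product of all simple reflections in some order). For any w ∈ W, one has w ≤ wc in the Bruhat order if and only if ℓ(wc) = ℓ(w) + ℓ(c), where ℓ is the Coxeter length function. -/
open Matrix
set_option linter.unusedSectionVars false
set_option maxHeartbeats 1600000

namespace BruhatAux

noncomputable def cc (m : ℕ) : ℝ := Real.cos (Real.pi / m)

noncomputable def AA (m : ℕ) : Matrix (Fin 2) (Fin 2) ℝ :=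
  !![4*(cc m)^2-1, -2*(cc m); 2*(cc m), -1]

variable {B : Type*} [DecidableEq B] [Fintype B] (M : CoxeterMatrix B)

noncomputable def kf (i j : B) : ℝ := - Real.cos (Real.pi / M i j)
theorem kf_symm (i j : B) : kf M i j = kf M j i := by rw [kf, kf, M.symmetric i j]
theorem kf_diag (i : B) : kf M i i = 1 := by rw [kf, M.diagonal i]; simp
theorem kf_eq {i j : B} {m : ℕ} (hm : M i j = m) : kf M i j = -(cc m) := by
  rw [kf, hm, cc]
noncomputable def ev (i : B) : B → ℝ := Pi.single i 1
theorem ev_self (i : B) : ev i i = (1:ℝ) := by simp [ev]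
theorem ev_ne {i j : B} (h : j ≠ i) : ev i j = (0:ℝ) := by simp [ev, Pi.single_apply, h]
noncomputable def pair (i : B) : (B → ℝ) →ₗ[ℝ] ℝ where
  toFun v := ∑ j, v j * kf M j i
  map_add' v w := by simp [add_mul, Finset.sum_add_distrib]
  map_smul' a v := by simp [Finset.mul_sum, mul_assoc]
theorem pair_apply (i : B) (v : B → ℝ) : pair M i v = ∑ j, v j * kf M j i := rfl
theorem pair_ev (i j : B) : pair M i (ev j) = kf M j i := by
  rw [pair_apply]
  rw [Finset.sum_eq_single j]
  · rw [ev_self, one_mul]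
  · intro b _ hb; rw [ev_ne hb, zero_mul]
  · intro h; exact absurd (Finset.mem_univ j) h
noncomputable def refl (i : B) : Module.End ℝ (B → ℝ) :=
  LinearMap.id - (pair M i).smulRight ((2:ℝ) • ev i)
theorem refl_apply (i : B) (v : B → ℝ) :
    refl M i v = v - (2 * pair M i v) • ev i := by
  simp [refl, LinearMap.sub_apply, LinearMap.smulRight_apply, smul_smul, mul_comm]
theorem refl_apply_ne (i : B) (v : B → ℝ) {j : B} (h : j ≠ i) :
    refl M i v j = v j := by
  rw [refl_apply]; simp [ev_ne h]
theorem refl_apply_of_pair_eq_zero (i : B) {v : B → ℝ} (h : pair M i v = 0) :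
    refl M i v = v := by rw [refl_apply, h]; simp
theorem pair_refl_self (i : B) (v : B → ℝ) :
    pair M i (refl M i v) = - pair M i v := by
  rw [refl_apply, map_sub, LinearMap.map_smul, pair_ev, kf_diag]
  simp; ring
theorem refl_sq (i : B) : refl M i * refl M i = 1 := by
  apply LinearMap.ext
  intro v
  show refl M i (refl M i v) = v
  rw [refl_apply M i (refl M i v), pair_refl_self, refl_apply]
  simp
theorem refl_ev_self (i : B) : refl M i (ev i) = - ev i := by
  rw [refl_apply, pair_ev, kf_diag]
  module

section Braid

variable {i j : B} {m : ℕ}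

theorem braid_aux (hij : i ≠ j) (hm : M i j = m) (u : B → ℝ) (a b : ℝ)
    (hui : pair M i u = 0) (huj : pair M j u = 0) :
    (refl M i * refl M j) (u + a • ev i + b • ev j)
      = u + ((4*(cc m)^2-1) * a - 2*(cc m)*b) • ev i + (2*(cc m)*a - b) • ev j := by
  have hkij : kf M i j = -(cc m) := kf_eq M hm
  have hkji : kf M j i = -(cc m) := by rw [kf_symm, hkij]
  have h1 : pair M j (u + a • ev i + b • ev j) = -(cc m)*a + b := by
    rw [map_add, map_add, LinearMap.map_smul, LinearMap.map_smul, huj,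
      pair_ev, pair_ev, kf_diag, hkij]
    simp; ring
  show refl M i (refl M j (u + a • ev i + b • ev j)) = _
  rw [refl_apply M j _, h1]
  have step1 : u + a • ev i + b • ev j - (2 * (-(cc m)*a+b)) • ev j
      = u + a • ev i + (2*(cc m)*a - b) • ev j := by module
  rw [step1]
  have h2 : pair M i (u + a • ev i + (2*(cc m)*a - b) • ev j)
      = a - (cc m)*(2*(cc m)*a - b) := by
    rw [map_add, map_add, LinearMap.map_smul, LinearMap.map_smul, hui,
      pair_ev, pair_ev, kf_diag, hkji]
    simp; ring
  rw [refl_apply M i _, h2]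
  module

theorem braid_pow (hij : i ≠ j) (hm : M i j = m) (k : ℕ) (u : B → ℝ) (a b : ℝ)
    (hui : pair M i u = 0) (huj : pair M j u = 0) :
    ((refl M i * refl M j)^k) (u + a • ev i + b • ev j)
      = u + ((AA m ^ k) 0 0 * a + (AA m ^ k) 0 1 * b) • ev i
          + ((AA m ^ k) 1 0 * a + (AA m ^ k) 1 1 * b) • ev j := by
  induction k with
  | zero => simp [Matrix.one_apply]
  | succ k ih =>
    have hP : (refl M i * refl M j)^(k+1) = (refl M i * refl M j) * (refl M i * refl M j)^k :=
      pow_succ' _ _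
    rw [hP]
    show (refl M i * refl M j) (((refl M i * refl M j)^k) (u + a • ev i + b • ev j)) = _
    rw [ih, braid_aux M hij hm u _ _ hui huj]
    have hA : AA m ^(k+1) = AA m * AA m ^k := pow_succ' _ _
    rw [hA]
    have e00 : (AA m * AA m^k) 0 0 = (4*(cc m)^2-1) * (AA m^k) 0 0 + (-2*(cc m)) * (AA m^k) 1 0 := by
      rw [Matrix.mul_apply, Fin.sum_univ_two]; simp [AA]
    have e01 : (AA m * AA m^k) 0 1 = (4*(cc m)^2-1) * (AA m^k) 0 1 + (-2*(cc m)) * (AA m^k) 1 1 := by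
      rw [Matrix.mul_apply, Fin.sum_univ_two]; simp [AA]
    have e10 : (AA m * AA m^k) 1 0 = (2*(cc m)) * (AA m^k) 0 0 + (-1) * (AA m^k) 1 0 := by
      rw [Matrix.mul_apply, Fin.sum_univ_two]; simp [AA]
    have e11 : (AA m * AA m^k) 1 1 = (2*(cc m)) * (AA m^k) 0 1 + (-1) * (AA m^k) 1 1 := by
      rw [Matrix.mul_apply, Fin.sum_univ_two]; simp [AA]
    rw [e00, e01, e10, e11]
    module

theorem matrix_pow_eq_one' (hm2 : 2 ≤ m) : AA m ^ m = 1 := by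
  obtain ⟨c, hcdef⟩ : ∃ x : ℝ, x = cc m := ⟨_, rfl⟩
  obtain ⟨A, hAdef⟩ : ∃ X : Matrix (Fin 2) (Fin 2) ℝ, X = AA m := ⟨_, rfl⟩
  have hcc : c = Real.cos (Real.pi / m) := hcdef.trans rfl
  have hA : A = !![4*c^2-1, -2*c; 2*c, -1] := by
    rw [hAdef, hcdef]
    rfl
  rw [← hAdef]
  rcases eq_or_lt_of_le hm2 with h2 | h3
  · -- m = 2
    have hc : c = 0 := by
      rw [hcc, ← h2]
      norm_num [Real.cos_pi_div_two]
    have hA' : A = !![-1,0;0,-1] := by rw [hA, hc]; norm_num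
    rw [← h2, hA']
    ext i j
    fin_cases i <;> fin_cases j <;>
      simp [pow_succ, Matrix.mul_apply, Fin.sum_univ_two, Matrix.one_apply]
  · -- m ≥ 3
    have hm0 : (m : ℝ) ≠ 0 := by positivity
    set θ : ℝ := 2 * (Real.pi / m) with hθ
    have hθpos : 0 < θ := by positivity
    have hmpos : (0:ℝ) < m := by positivity
    have hθlt : θ < Real.pi := by
      have h3' : (3:ℝ) ≤ m := by exact_mod_cast h3
      calc θ = 2 * Real.pi / m := by rw [hθ]; ring
      _ < Real.pi := by
          rw [div_lt_iff₀ hmpos]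
          nlinarith [Real.pi_pos]
    have hs : Real.sin θ ≠ 0 := ne_of_gt (Real.sin_pos_of_pos_of_lt_pi hθpos hθlt)
    have hcθ : Real.cos θ = 2 * c ^ 2 - 1 := by
      rw [hcc, hθ]
      exact Real.cos_two_mul _
    have hA2 : A ^ 2 = (2 * Real.cos θ) • A - 1 := by
      ext i j
      fin_cases i <;> fin_cases j <;>
        simp [pow_succ, Matrix.mul_apply, Fin.sum_univ_two, hA, hcθ, Matrix.one_apply] <;> ring
    set u : ℕ → ℝ := fun k => Real.sin (k * θ) / Real.sin θ with hu
    have hu' : ∀ k : ℕ, u k = Real.sin (k * θ) / Real.sin θ := fun k => rfl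
    have key : ∀ k : ℕ, A ^ (k + 1) = u (k+1) • A - u k • 1 := by
      intro k
      induction k with
      | zero =>
        rw [hu' 1, hu' 0]
        push_cast
        rw [one_mul, div_self hs]
        simp
      | succ k ih =>
        have hrec : u (k+2) = 2 * Real.cos θ * u (k+1) - u k := by
          rw [hu' (k+2), hu' (k+1), hu' k]
          have h1 : ((k+2 : ℕ) : ℝ) * θ = ((k+1 : ℕ) : ℝ) * θ + θ := by push_cast; ring
          have h2 : ((k : ℕ) : ℝ) * θ = ((k+1 : ℕ) : ℝ) * θ - θ := by push_cast; ring
          rw [h1, h2, Real.sin_add, Real.sin_sub]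
          field_simp
          ring
        calc A ^ (k + 2) = A * A ^ (k+1) := by rw [pow_succ']
        _ = A * (u (k+1) • A - u k • 1) := by rw [ih]
        _ = u (k+1) • (A * A) - u k • A := by
            rw [Matrix.mul_sub, Matrix.mul_smul, Matrix.mul_smul, Matrix.mul_one]
        _ = u (k+1) • ((2 * Real.cos θ) • A - 1) - u k • A := by rw [← pow_two, hA2]
        _ = u (k+2) • A - u (k+1) • 1 := by
            rw [hrec]; rw [smul_sub]; rw [smul_smul]
            ext i j; simp [Matrix.sub_apply, Matrix.smul_apply, Matrix.one_apply]; ring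
    have hm1 : m = (m - 1) + 1 := by omega
    have hum : u m = 0 := by
      rw [hu' m]
      have : (m : ℝ) * θ = 2 * Real.pi := by rw [hθ]; field_simp
      simp [this, Real.sin_two_pi]
    have hum1 : u (m - 1) = -1 := by
      rw [hu' (m-1)]
      have : ((m - 1 : ℕ) : ℝ) * θ = 2 * Real.pi - θ := by
        have h1 : ((m - 1 : ℕ) : ℝ) = (m : ℝ) - 1 := by
          have : 1 ≤ m := by omega
          push_cast [this]; ring
        rw [h1, hθ]; field_simp
      rw [this, Real.sin_sub, Real.sin_two_pi, Real.cos_two_pi]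
      field_simp
      ring
    calc A ^ m = A ^ ((m-1) + 1) := by rw [← hm1]
    _ = u ((m-1)+1) • A - u (m-1) • 1 := key (m-1)
    _ = 1 := by rw [← hm1, hum, hum1]; simp

theorem braid_rel (hij : i ≠ j) (hm : M i j = m) (hm2 : 2 ≤ m) :
    (refl M i * refl M j)^m = 1 := by
  have hmpos : (0:ℝ) < m := by
    have : 0 < m := by omega
    exact_mod_cast this
  have hm2' : (2:ℝ) ≤ m := by exact_mod_cast hm2
  have hc1 : cc m < 1 := by
    have h0 : (0:ℝ) < Real.pi / m := div_pos Real.pi_pos hmpos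
    have h1 : Real.pi / m ≤ Real.pi := by
      rw [div_le_iff₀ hmpos]
      nlinarith [Real.pi_pos]
    calc cc m < Real.cos 0 := Real.cos_lt_cos_of_nonneg_of_le_pi le_rfl h1 h0
    _ = 1 := Real.cos_zero
  have hc0 : 0 ≤ cc m := by
    apply Real.cos_nonneg_of_mem_Icc
    constructor
    · have h0 : (0:ℝ) < Real.pi / m := div_pos Real.pi_pos hmpos
      linarith [Real.pi_pos]
    · rw [div_le_div_iff₀ hmpos two_pos]
      nlinarith [Real.pi_pos]
  have hd : (1:ℝ) - (cc m)^2 ≠ 0 := by nlinarith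
  apply LinearMap.ext
  intro v
  show ((refl M i * refl M j)^m) v = v
  set p := pair M i v with hp
  set q := pair M j v with hq
  set a := (p + (cc m)*q)/(1-(cc m)^2) with ha
  set b := ((cc m)*p + q)/(1-(cc m)^2) with hb
  set u := v - a • ev i - b • ev j with hu
  have hkij : kf M i j = -(cc m) := kf_eq M hm
  have hkji : kf M j i = -(cc m) := by rw [kf_symm, hkij]
  have hui : pair M i u = 0 := by
    rw [hu, map_sub, map_sub, LinearMap.map_smul, LinearMap.map_smul,
      pair_ev, pair_ev, kf_diag, hkji, ← hp, ha, hb]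
    field_simp
    linear_combination (-p) * inv_mul_cancel₀ hd
  have huj : pair M j u = 0 := by
    rw [hu, map_sub, map_sub, LinearMap.map_smul, LinearMap.map_smul,
      pair_ev, pair_ev, kf_diag, hkij, ← hq, ha, hb]
    field_simp
    linear_combination (-q) * inv_mul_cancel₀ hd
  have hv : v = u + a • ev i + b • ev j := by rw [hu]; module
  rw [hv, braid_pow M hij hm m u a b hui huj, matrix_pow_eq_one' hm2]
  simp [Matrix.one_apply]

end Braid

theorem liftable : M.IsLiftable (fun i => refl M i) := by
  intro i i'
  rcases eq_or_ne i i' with rfl | hne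
  · rw [M.diagonal i, pow_one]
    exact refl_sq M i
  · rcases Nat.lt_or_ge (M i i') 2 with h | h
    · interval_cases h' : M i i'
      · rw [pow_zero]
      · exact absurd h' (M.off_diagonal i i' hne)
    · exact braid_rel M hne rfl h

end BruhatAux

section DPart
namespace BruhatAux

variable {B : Type*} [DecidableEq B] [Fintype B] {M : CoxeterMatrix B}
variable {W : Type*} [Group W] (cs : CoxeterSystem M W)

/-- The geometric representation of the Coxeter group. -/
noncomputable def rho : W →* Module.End ℝ (B → ℝ) :=
  cs.lift ⟨fun i => refl M i, liftable M⟩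

theorem rho_simple (i : B) : rho cs (cs.simple i) = refl M i :=
  cs.lift_apply_simple (liftable M) i

theorem rho_mul_apply (x y : W) (v : B → ℝ) :
    rho cs (x * y) v = rho cs x (rho cs y v) := by
  rw [_root_.map_mul]; rfl

theorem rho_wordProd_coord (l : List B) (v : B → ℝ) {j : B} (hj : j ∉ l) :
    rho cs (cs.wordProd l) v j = v j := by
  induction l generalizing v with
  | nil => rw [cs.wordProd_nil, _root_.map_one]; rfl
  | cons i l ih =>
    rw [cs.wordProd_cons, rho_mul_apply, rho_simple]
    have hji : j ≠ i := by
      intro h; exact hj (by rw [h]; exact List.mem_cons_self)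
    rw [refl_apply_ne M i _ hji]
    exact ih _ (fun h => hj (List.mem_cons_of_mem i h))

theorem rho_wordProd_fixed (l : List B) (hl : l.Nodup) (v : B → ℝ)
    (hv : rho cs (cs.wordProd l) v = v) : ∀ i ∈ l, pair M i v = 0 := by
  induction l with
  | nil => intro i hi; exact absurd hi List.not_mem_nil
  | cons i l ih =>
    rw [cs.wordProd_cons, rho_mul_apply, rho_simple] at hv
    set v' := rho cs (cs.wordProd l) v with hv'
    have hinotl : i ∉ l := (List.nodup_cons.mp hl).1
    have hcoord : v' i = v i := rho_wordProd_coord cs l v hinotl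
    have hpair : pair M i v' = 0 := by
      have := congrFun hv i
      rw [refl_apply] at this
      simp only [Pi.sub_apply, Pi.smul_apply, ev_self, smul_eq_mul, mul_one] at this
      rw [hcoord] at this
      linarith
    have hfix : v' = v := by
      rw [← hv, refl_apply_of_pair_eq_zero M i hpair]
    intro i' hi'
    rcases List.mem_cons.mp hi' with rfl | hmem
    · rw [← hfix]; exact hpair
    · have h4 : rho cs (cs.wordProd l) v = v := by rw [← hv']; exact hfix
      exact ih (List.nodup_cons.mp hl).2 h4 i' hmem

/-- Dot product with a fixed vector, as a linear functional. -/
noncomputable def dotv (v : B → ℝ) : (B → ℝ) →ₗ[ℝ] ℝ where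
  toFun u := ∑ i, u i * v i
  map_add' u w := by simp [add_mul, Finset.sum_add_distrib]
  map_smul' a u := by simp [Finset.mul_sum, mul_assoc]

theorem ev_sum (v : B → ℝ) : ∑ i, v i • ev i = v := by
  funext j
  rw [Finset.sum_apply]
  rw [Finset.sum_eq_single j]
  · simp [ev_self]
  · intro b _ hb
    simp [ev_ne (Ne.symm hb)]
  · intro h; exact absurd (Finset.mem_univ j) h

include cs in
theorem fixed_eq_zero [Finite W] (v : B → ℝ)
    (hv : ∀ i, pair M i v = 0) : v = 0 := by
  classical
  letI : Fintype W := Fintype.ofFinite W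
  have hrefl : ∀ i, refl M i v = v := fun i => refl_apply_of_pair_eq_zero M i (hv i)
  have hfix : ∀ x : W, rho cs x v = v := by
    intro x
    have hx : x ∈ Submonoid.closure (Set.range cs.simple) := by
      rw [cs.submonoid_closure_range_simple]; trivial
    induction hx using Submonoid.closure_induction with
    | mem y hy => obtain ⟨i, rfl⟩ := hy; rw [rho_simple]; exact hrefl i
    | one => rw [_root_.map_one]; rfl
    | mul y z _ _ hy hz => rw [rho_mul_apply, hz, hy]
  set L : (B → ℝ) →ₗ[ℝ] ℝ := ∑ x : W, (dotv v) ∘ₗ (rho cs x : (B → ℝ) →ₗ[ℝ] (B → ℝ)) with hL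
  have hLapp : ∀ u, L u = ∑ x : W, dotv v (rho cs x u) := by
    intro u
    rw [hL, LinearMap.sum_apply]
    rfl
  have hLinv : ∀ (i : B) (u : B → ℝ), L (refl M i u) = L u := by
    intro i u
    rw [hLapp, hLapp]
    have : ∀ x : W, dotv v (rho cs x (refl M i u)) = dotv v (rho cs (x * cs.simple i) u) := by
      intro x
      rw [rho_mul_apply, rho_simple]
    simp_rw [this]
    exact Equiv.sum_comp (Equiv.mulRight (cs.simple i)) (fun y => dotv v (rho cs y u))
  have hLev : ∀ i, L (ev i) = 0 := by
    intro i
    have h1 : L (refl M i (ev i)) = L (ev i) := hLinv i (ev i)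
    rw [refl_ev_self, map_neg] at h1
    linarith
  have hLv0 : L v = 0 := by
    conv_lhs => rw [← ev_sum v]
    rw [map_sum]
    simp_rw [LinearMap.map_smul, hLev]
    simp
  have hLv : L v = (Fintype.card W : ℝ) * ∑ i, v i ^ 2 := by
    rw [hLapp]
    have : ∀ x : W, dotv v (rho cs x v) = ∑ i, v i ^ 2 := by
      intro x
      rw [hfix x]
      show (∑ i, v i * v i) = _
      simp [pow_two]
    simp_rw [this]
    rw [Finset.sum_const, Finset.card_univ, nsmul_eq_mul]
  have hsum : ∑ i, v i ^ 2 = 0 := by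
    have hcard : (0:ℝ) < Fintype.card W := by
      have : 0 < Fintype.card W := Fintype.card_pos
      exact_mod_cast this
    rw [hLv0] at hLv
    have := hLv.symm
    rcases mul_eq_zero.mp this with h | h
    · exact absurd h (ne_of_gt hcard)
    · exact h
  funext i
  have : v i ^ 2 = 0 := by
    have h := (Finset.sum_eq_zero_iff_of_nonneg (fun i _ => sq_nonneg (v i))).mp hsum i
      (Finset.mem_univ i)
    exact h
  exact pow_eq_zero_iff (n := 2) (by norm_num) |>.mp this

/-- rank of the displacement of an endomorphism -/
noncomputable def rk (f : Module.End ℝ (B → ℝ)) : ℕ :=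
  Module.finrank ℝ (LinearMap.range f)

theorem rk_zero : rk (0 : Module.End ℝ (B → ℝ)) = 0 := by
  rw [rk, LinearMap.range_zero, finrank_bot]

theorem rk_add_le (f g : Module.End ℝ (B → ℝ)) : rk (f + g) ≤ rk f + rk g := by
  have hle : LinearMap.range (f + g) ≤ LinearMap.range f ⊔ LinearMap.range g := by
    rintro _ ⟨x, rfl⟩
    exact Submodule.add_mem_sup (LinearMap.mem_range_self f x) (LinearMap.mem_range_self g x)
  calc rk (f + g) ≤ Module.finrank ℝ ↥(LinearMap.range f ⊔ LinearMap.range g) :=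
        Submodule.finrank_mono hle
  _ ≤ rk f + rk g := by
      have := Submodule.finrank_sup_add_finrank_inf_eq (LinearMap.range f) (LinearMap.range g)
      rw [rk, rk]
      omega

theorem rk_mul_le_right (f g : Module.End ℝ (B → ℝ)) : rk (f * g) ≤ rk g := by
  show Module.finrank ℝ (LinearMap.range (f ∘ₗ g)) ≤ _
  rw [LinearMap.range_comp]
  exact Submodule.finrank_map_le f (LinearMap.range g)

theorem rk_mul_le_left (f g : Module.End ℝ (B → ℝ)) : rk (f * g) ≤ rk f := by
  apply Submodule.finrank_mono
  exact LinearMap.range_comp_le_range g f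

theorem rk_refl_sub_one (i : B) : rk (refl M i - 1) ≤ 1 := by
  have hle : LinearMap.range (refl M i - 1) ≤ Submodule.span ℝ {ev i} := by
    rintro _ ⟨x, rfl⟩
    show refl M i x - x ∈ _
    rw [refl_apply]
    have : x - (2 * pair M i x) • ev i - x = (-(2 * pair M i x)) • ev i := by module
    rw [this]
    exact Submodule.smul_mem _ _ (Submodule.mem_span_singleton_self _)
  calc rk (refl M i - 1) ≤ Module.finrank ℝ ↥(Submodule.span ℝ {ev i}) :=
        Submodule.finrank_mono hle
  _ ≤ 1 := by
      have h : (ev i : B → ℝ) ≠ 0 := fun h => by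
        simpa [ev_self] using congrFun h i
      rw [finrank_span_singleton h]

theorem rk_reflection (t : W) (ht : cs.IsReflection t) : rk (rho cs t - 1) ≤ 1 := by
  obtain ⟨w, i, rfl⟩ := ht
  have key : rho cs (w * cs.simple i * w⁻¹) - 1
      = rho cs w * ((refl M i - 1) * rho cs w⁻¹) := by
    have h1 : rho cs (w * cs.simple i * w⁻¹) = rho cs w * refl M i * rho cs w⁻¹ := by
      rw [_root_.map_mul, _root_.map_mul, rho_simple]
    have h2 : (1 : Module.End ℝ (B → ℝ)) = rho cs w * rho cs w⁻¹ := by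
      rw [← _root_.map_mul, mul_inv_cancel, _root_.map_one]
    rw [h1]
    nth_rewrite 1 [h2]
    rw [sub_mul, one_mul, mul_sub, mul_assoc]
  rw [key]
  calc rk _ ≤ rk ((refl M i - 1) * rho cs w⁻¹) := rk_mul_le_right _ _
  _ ≤ rk (refl M i - 1) := rk_mul_le_left _ _
  _ ≤ 1 := rk_refl_sub_one i

theorem rk_prod_reflections (ts : List W) (hts : ∀ t ∈ ts, cs.IsReflection t) :
    rk (rho cs ts.prod - 1) ≤ ts.length := by
  induction ts with
  | nil =>
    simp only [List.prod_nil, _root_.map_one, sub_self, List.length_nil]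
    rw [rk_zero]
  | cons t ts ih =>
    have hdecomp : rho cs (t :: ts).prod - 1
        = rho cs t * (rho cs ts.prod - 1) + (rho cs t - 1) := by
      rw [List.prod_cons, _root_.map_mul, mul_sub, mul_one]
      abel
    rw [hdecomp]
    calc rk _ ≤ rk (rho cs t * (rho cs ts.prod - 1)) + rk (rho cs t - 1) := rk_add_le _ _
    _ ≤ rk (rho cs ts.prod - 1) + rk (rho cs t - 1) := by
        have := rk_mul_le_right (rho cs t) (rho cs ts.prod - 1)
        omega
    _ ≤ ts.length + 1 := by
        have h1 := ih (fun t ht => hts t (List.mem_cons_of_mem _ ht))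
        have h2 := rk_reflection cs t (hts t List.mem_cons_self)
        omega
    _ = (t :: ts).length := by rw [List.length_cons]

theorem rk_coxeter [Finite W] (l : List B) (hl : l.Nodup) (hl2 : ∀ i : B, i ∈ l) (w : W) :
    rk (rho cs (w * cs.wordProd l * w⁻¹) - 1) = Fintype.card B := by
  have hker : LinearMap.ker (rho cs (w * cs.wordProd l * w⁻¹) - 1) = ⊥ := by
    rw [Submodule.eq_bot_iff]
    intro v hv
    rw [LinearMap.mem_ker, LinearMap.sub_apply, Module.End.one_apply, sub_eq_zero] at hv
    -- hv : rho cs (w * π l * w⁻¹) v = v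
    have h1 : rho cs (cs.wordProd l) (rho cs w⁻¹ v) = rho cs w⁻¹ v := by
      have h0 := congrArg (rho cs w⁻¹) hv
      rw [← rho_mul_apply] at h0
      have heq : w⁻¹ * (w * cs.wordProd l * w⁻¹) = cs.wordProd l * w⁻¹ := by group
      rw [heq, rho_mul_apply] at h0
      exact h0
    have h2 : rho cs w⁻¹ v = 0 :=
      fixed_eq_zero cs _ (fun i => rho_wordProd_fixed cs l hl _ h1 i (hl2 i))
    have h3 : v = rho cs w (rho cs w⁻¹ v) := by
      rw [← rho_mul_apply, mul_inv_cancel, _root_.map_one]; rfl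
    rw [h3, h2, map_zero]
  have := LinearMap.finrank_range_add_finrank_ker (rho cs (w * cs.wordProd l * w⁻¹) - 1)
  rw [hker, finrank_bot, add_zero] at this
  rw [rk, this, Module.finrank_pi]

end BruhatAux
end DPart

/-- The Bruhat order on a Coxeter group: the reflexive–transitive closure of the
relation `a < t * a` whenever `t` is a reflection and left-multiplying by `t`
increases length. -/
def CoxeterSystem.BruhatLE {B W : Type*} [Group W] {M : CoxeterMatrix B}
    (cs : CoxeterSystem M W) (u v : W) : Prop :=
  Relation.ReflTransGen
    (fun a b => (∃ t, cs.IsReflection t ∧ b = t * a) ∧ cs.length a < cs.length b) u v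

/-- A Coxeter element: the product, in some order, of all the simple reflections,
each appearing exactly once. -/
def CoxeterSystem.IsCoxeterElement {B W : Type*} [Group W] {M : CoxeterMatrix B}
    (cs : CoxeterSystem M W) (c : W) : Prop :=
  ∃ l : List B, l.Nodup ∧ (∀ i : B, i ∈ l) ∧ cs.wordProd l = c

namespace BruhatAux

variable {B W : Type*} [Group W] {M : CoxeterMatrix B} (cs : CoxeterSystem M W)

theorem chain_of_bruhatLE {u v : W} (h : cs.BruhatLE u v) :
    ∃ ts : List W, (∀ t ∈ ts, cs.IsReflection t) ∧ ts.prod * u = v ∧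
      cs.length u + ts.length ≤ cs.length v := by
  induction h with
  | refl => exact ⟨[], by simp, by simp, by simp⟩
  | tail hab hstep ih =>
    obtain ⟨⟨t, htr, rfl⟩, hlt⟩ := hstep
    obtain ⟨ts, h1, h2, h3⟩ := ih
    refine ⟨t :: ts, ?_, ?_, ?_⟩
    · intro t' ht'
      rcases List.mem_cons.mp ht' with rfl | hmem
      · exact htr
      · exact h1 t' hmem
    · rw [List.prod_cons, mul_assoc, h2]
    · rw [List.length_cons]
      omega

theorem bruhat_of_additive (w : W) (l : List B)
    (h : cs.length (w * cs.wordProd l) = cs.length w + l.length) :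
    cs.BruhatLE w (w * cs.wordProd l) := by
  induction l using List.reverseRecOn with
  | nil =>
    rw [cs.wordProd_nil, mul_one]
    exact Relation.ReflTransGen.refl
  | append_singleton l' i ih =>
    have hπ : cs.wordProd (l' ++ [i]) = cs.wordProd l' * cs.simple i := by
      rw [cs.wordProd_append, cs.wordProd_singleton]
    rw [List.length_append, List.length_singleton] at h
    have hle1 : cs.length (w * cs.wordProd l') ≤ cs.length w + l'.length := by
      have h1 := cs.length_mul_le w (cs.wordProd l')
      have h2 := cs.length_wordProd_le l'
      omega
    have hle2 : cs.length (w * cs.wordProd (l' ++ [i]))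
        ≤ cs.length (w * cs.wordProd l') + 1 := by
      rw [hπ, ← mul_assoc]
      have h1 := cs.length_mul_le (w * cs.wordProd l') (cs.simple i)
      rw [cs.length_simple] at h1
      exact h1
    have heq : cs.length (w * cs.wordProd l') = cs.length w + l'.length := by omega
    have hB := ih heq
    refine Relation.ReflTransGen.tail hB ?_
    constructor
    · refine ⟨(w * cs.wordProd l') * cs.simple i * (w * cs.wordProd l')⁻¹,
        ⟨w * cs.wordProd l', i, rfl⟩, ?_⟩
      rw [hπ]
      group
    · rw [heq, h]
      omega

end BruhatAux

/-- For a finite Coxeter group `W` with Coxeter element `c`, and any `w ∈ W`,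
one has `w ≤ w * c` in Bruhat order iff `ℓ(w * c) = ℓ(w) + ℓ(c)`. -/
theorem bruhat_le_mul_coxeter_iff_length_add
    {B W : Type*} [Group W] [Finite W] {M : CoxeterMatrix B}
    (cs : CoxeterSystem M W) (c : W) (hc : cs.IsCoxeterElement c) (w : W) :
    cs.BruhatLE w (w * c) ↔ cs.length (w * c) = cs.length w + cs.length c := by
  classical
  obtain ⟨l, hnd, hall, hprod⟩ := hc
  constructor
  · intro h
    letI : Fintype B := ⟨l.toFinset, fun i => List.mem_toFinset.mpr (hall i)⟩
    have hcard : l.length = Fintype.card B := by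
      have h1 : Fintype.card B = l.toFinset.card := rfl
      rw [h1, List.toFinset_card_of_nodup hnd]
    obtain ⟨ts, hrefl, hprodts, hlen⟩ := BruhatAux.chain_of_bruhatLE cs h
    have hts : ts.prod = w * c * w⁻¹ := by
      rw [← hprodts]
      group
    have h1 : BruhatAux.rk (BruhatAux.rho cs ts.prod - 1) ≤ ts.length :=
      BruhatAux.rk_prod_reflections cs ts hrefl
    have h2 : BruhatAux.rk (BruhatAux.rho cs (w * cs.wordProd l * w⁻¹) - 1) = Fintype.card B :=
      BruhatAux.rk_coxeter cs l hnd hall w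
    rw [hprod, ← hts] at h2
    have h3 : Fintype.card B ≤ ts.length := by omega
    have hlc : cs.length c ≤ Fintype.card B := by
      rw [← hprod, ← hcard]
      exact cs.length_wordProd_le l
    have hmul : cs.length (w * c) ≤ cs.length w + cs.length c := cs.length_mul_le w c
    omega
  · intro h
    obtain ⟨ω, hω, hπ⟩ := cs.exists_reduced_word c
    have h' : cs.length (w * cs.wordProd ω) = cs.length w + ω.length := by
      rw [← hπ, h, hπ, show cs.length (cs.wordProd ω) = ω.length from hω]
    have := BruhatAux.bruhat_of_additive cs w ω h'
    rwa [← hπ] at this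
end

section
/- Let W be a finite Coxeter group with reflection set T, c a Coxeter element, and w ∈ W with ℓ(wc) = ℓ(w) + ℓ(c). Then for every x in the Bruhat interval [w, wc], the element w⁻¹x lies in the set NC(W,c) of noncrossing partitions, i.e. w⁻¹x ≤_T c in the absolute order. -/
/-- The absolute length: the minimal number of reflections in a factorization
of `w` as a product of reflections. -/
noncomputable def CoxeterSystem.absLength {B W : Type*} [Group W] {M : CoxeterMatrix B}
    (cs : CoxeterSystem M W) (w : W) : ℕ :=
  sInf {k | ∃ l : List W, l.length = k ∧ (∀ t ∈ l, cs.IsReflection t) ∧ l.prod = w}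

/-- Absolute order on a Coxeter group: `v ≤_T w` iff `ℓ_T(w) = ℓ_T(v) + ℓ_T(v⁻¹ w)`. -/
def CoxeterSystem.AbsLE {B W : Type*} [Group W] {M : CoxeterMatrix B}
    (cs : CoxeterSystem M W) (v w : W) : Prop :=
  cs.absLength w = cs.absLength v + cs.absLength (v⁻¹ * w)

set_option linter.unusedSectionVars false
namespace NCAux
open Real Finset

variable {B : Type*} [DecidableEq B] [Fintype B] (M : CoxeterMatrix B)

/-- Gram entries of the geometric representation. -/
noncomputable def kk (i j : B) : ℝ := -Real.cos (Real.pi / M i j)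

theorem kk_symm (i j : B) : kk M i j = kk M j i := by rw [kk, kk, M.symmetric]

theorem kk_diag (i : B) : kk M i i = 1 := by
  rw [kk, M.diagonal]; simp

/-- Simple root. -/
def al (i : B) : B → ℝ := Pi.single i 1

@[simp] theorem al_same (i : B) : al i i = (1:ℝ) := Pi.single_eq_same i 1

theorem al_ne {i j : B} (h : i ≠ j) : al j i = (0:ℝ) := Pi.single_eq_of_ne h 1

theorem al_ne_zero (i : B) : al i ≠ 0 := by
  intro h
  have := congrFun h i
  simp [al] at this

/-- The bilinear form of the geometric representation. -/
noncomputable def bil (x y : B → ℝ) : ℝ := ∑ i, x i * ∑ j, kk M i j * y j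

theorem bil_add_right (x y z : B → ℝ) : bil M x (y + z) = bil M x y + bil M x z := by
  simp [bil, mul_add, Finset.sum_add_distrib, Finset.mul_sum]

theorem bil_smul_right (r : ℝ) (x y : B → ℝ) : bil M x (r • y) = r * bil M x y := by
  simp only [bil, Finset.mul_sum, Pi.smul_apply, smul_eq_mul]
  congr 1; funext i; congr 1; funext j; ring

theorem bil_sub_right (x y z : B → ℝ) : bil M x (y - z) = bil M x y - bil M x z := by
  simp [bil, mul_sub, Finset.sum_sub_distrib, Finset.mul_sum]

theorem bil_neg_right (x y : B → ℝ) : bil M x (-y) = - bil M x y := by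
  have := bil_sub_right M x 0 y
  simpa [bil] using this

theorem bil_single_left (i : B) (y : B → ℝ) :
    bil M (al i) y = ∑ j, kk M i j * y j := by
  rw [bil, Finset.sum_eq_single i]
  · simp [al]
  · intro b _ hb; simp [al, Pi.single_eq_of_ne hb]
  · simp

theorem bil_single_single (i j : B) :
    bil M (al i) (al j) = kk M i j := by
  rw [bil_single_left, Finset.sum_eq_single j]
  · simp [al]
  · intro b _ hb; simp [al, Pi.single_eq_of_ne hb]
  · simp

/-- The simple reflection of the geometric representation. -/
noncomputable def sg (i : B) : Module.End ℝ (B → ℝ) where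
  toFun v := v - (2 * bil M (al i) v) • al i
  map_add' u v := by rw [bil_add_right]; module
  map_smul' r v := by rw [bil_smul_right]; simp only [RingHom.id_apply]; module

theorem sg_apply (i : B) (v : B → ℝ) :
    sg M i v = v - (2 * bil M (al i) v) • al i := rfl

theorem bil_sg (i j : B) (v : B → ℝ) :
    bil M (al i) (sg M j v)
      = bil M (al i) v - 2 * bil M (al j) v * kk M i j := by
  rw [sg_apply, bil_sub_right, bil_smul_right, bil_single_single]

theorem sg_fix {i : B} {v : B → ℝ} (h : bil M (al i) v = 0) :
    sg M i v = v := by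
  rw [sg_apply, h]; simp

theorem sg_sq (i : B) : sg M i * sg M i = 1 := by
  apply LinearMap.ext; intro v
  rw [Module.End.mul_apply, Module.End.one_apply]
  nth_rewrite 1 [sg_apply]
  rw [bil_sg, kk_diag, sg_apply]
  module

theorem sg_single_self (i : B) : sg M i (al i) = -al i := by
  rw [sg_apply, bil_single_single, kk_diag]
  module


/-! Trig helper identities -/

theorem trigL1 (y t : ℝ) : (4 * Real.cos t ^ 2 - 1) * Real.sin (y + t) - 2 * Real.cos t * Real.sin y
    = Real.sin (y + t + t + t) := by
  simp only [Real.sin_add, Real.cos_add]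
  linear_combination (3 * Real.cos t * Real.sin y + Real.sin t * Real.cos y) * (Real.sin_sq_add_cos_sq t)

theorem trigL2 (y t : ℝ) : 2 * Real.cos t * Real.sin (y + t) - Real.sin y
    = Real.sin (y + t + t) := by
  simp only [Real.sin_add, Real.cos_add]
  linear_combination (Real.sin y) * (Real.sin_sq_add_cos_sq t)

theorem trigL3 (y t : ℝ) : (4 * Real.cos t ^ 2 - 1) * Real.sin y - 2 * Real.cos t * Real.sin (y - t)
    = Real.sin (y + t + t) := by
  simp only [Real.sin_add, Real.cos_add, Real.sin_sub, Real.cos_sub]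
  linear_combination (Real.sin y) * (Real.sin_sq_add_cos_sq t)

theorem trigL4 (y t : ℝ) : 2 * Real.cos t * Real.sin y - Real.sin (y - t)
    = Real.sin (y + t) := by
  simp only [Real.sin_add, Real.sin_sub]
  ring

/-! Action of `sg M i * sg M j` on the two simple roots. -/

theorem A_al_i (i j : B) : (sg M i * sg M j) (al i)
    = (4 * kk M i j ^ 2 - 1) • al i + (-(2 * kk M i j)) • (al j : B → ℝ) := by
  rw [Module.End.mul_apply]
  rw [show sg M j (al i) = al i - (2 * kk M i j) • al j by
    rw [sg_apply, bil_single_single, kk_symm]]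
  rw [map_sub, map_smul, sg_apply, bil_single_single, kk_diag, sg_apply (v := al j),
    bil_single_single, kk_symm]
  module

theorem A_al_j (i j : B) : (sg M i * sg M j) (al j)
    = (2 * kk M i j) • al i + (-1 : ℝ) • (al j : B → ℝ) := by
  rw [Module.End.mul_apply]
  rw [show sg M j (al j) = -al j from sg_single_self M j]
  rw [map_neg, sg_apply, bil_single_single]
  module

theorem isLiftable : M.IsLiftable (fun i => sg M i) := by
  intro i j
  rcases eq_or_ne i j with rfl | hij
  · rw [M.diagonal, pow_one]; exact sg_sq M i
  rcases Nat.eq_zero_or_pos (M.M i j) with h0 | hpos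
  · rw [show M i j = 0 from h0, pow_zero]
  have h1 : M.M i j ≠ 1 := M.off_diagonal i j hij
  have hm2 : 2 ≤ M.M i j := by omega
  set m : ℕ := M.M i j with hm
  set θ : ℝ := Real.pi / m with hθ
  have hmR : (2:ℝ) ≤ (m:ℝ) := by exact_mod_cast hm2
  have hθpos : 0 < θ := by
    apply div_pos Real.pi_pos; linarith
  have hθlt : θ < Real.pi := by
    rw [hθ, div_lt_iff₀ (by linarith : (0:ℝ) < (m:ℝ))]
    nlinarith [Real.pi_pos]
  have hs : 0 < Real.sin θ := Real.sin_pos_of_pos_of_lt_pi hθpos hθlt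
  have hK : kk M i j = -Real.cos θ := by rw [kk, hθ]
  set A : Module.End ℝ (B → ℝ) := sg M i * sg M j with hA
  have key : ∀ n : ℕ,
      (A ^ n) (Real.sin θ • al i)
        = Real.sin (2*(n:ℝ)*θ + θ) • al i + Real.sin (2*(n:ℝ)*θ) • (al j : B → ℝ) ∧
      (A ^ n) (Real.sin θ • al j)
        = (-Real.sin (2*(n:ℝ)*θ)) • al i + (-Real.sin (2*(n:ℝ)*θ - θ)) • (al j : B → ℝ) := by
    intro n
    induction n with
    | zero =>
      constructor
      · simp
      · rw [pow_zero]
        rw [Module.End.one_apply]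
        norm_num [Real.sin_neg]
    | succ n ih =>
      obtain ⟨ih1, ih2⟩ := ih
      have hcast : ((n:ℕ)+1 : ℝ) = (n:ℝ) + 1 := by norm_num
      constructor
      · rw [pow_succ', Module.End.mul_apply, ih1, map_add, map_smul, map_smul,
          A_al_i, A_al_j, hK]
        push_cast
        rw [show 2*((n:ℝ)+1)*θ + θ = (2*(n:ℝ)*θ) + θ + θ + θ by ring,
          show 2*((n:ℝ)+1)*θ = (2*(n:ℝ)*θ) + θ + θ by ring,
          ← trigL1 (2*(n:ℝ)*θ) θ, ← trigL2 (2*(n:ℝ)*θ) θ]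
        module
      · rw [pow_succ', Module.End.mul_apply, ih2, map_add, map_smul, map_smul,
          A_al_i, A_al_j, hK]
        push_cast
        rw [show 2*((n:ℝ)+1)*θ - θ = (2*(n:ℝ)*θ) + θ by ring,
          show 2*((n:ℝ)+1)*θ = (2*(n:ℝ)*θ) + θ + θ by ring,
          ← trigL3 (2*(n:ℝ)*θ) θ, ← trigL4 (2*(n:ℝ)*θ) θ]
        module
  have hmθ : (m:ℝ) * θ = Real.pi := by
    rw [hθ]; field_simp
  have hfix_i : (A ^ m) (al i) = al i := by
    have h := (key m).1
    rw [show 2*(m:ℝ)*θ + θ = θ + 2*Real.pi by linear_combination 2*hmθ,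
      show 2*(m:ℝ)*θ = 2*Real.pi by linear_combination 2*hmθ,
      Real.sin_add_two_pi, Real.sin_two_pi] at h
    rw [map_smul] at h
    have := smul_right_injective (B → ℝ) hs.ne' (by simpa using h)
    exact this
  have hfix_j : (A ^ m) (al j) = al j := by
    have h := (key m).2
    rw [show 2*(m:ℝ)*θ - θ = 2*Real.pi - θ by linear_combination 2*hmθ,
      show 2*(m:ℝ)*θ = 2*Real.pi by linear_combination 2*hmθ,
      Real.sin_two_pi_sub, Real.sin_two_pi] at h
    rw [map_smul] at h
    have h' : Real.sin θ • (A ^ m) (al j) = Real.sin θ • (al j : B → ℝ) := by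
      rw [h]; module
    exact smul_right_injective (B → ℝ) hs.ne' h'
  -- decompose an arbitrary vector
  apply LinearMap.ext; intro v
  rw [Module.End.one_apply]
  set K : ℝ := kk M i j with hKdef
  have hK2 : K ^ 2 < 1 := by
    rw [hK]
    nlinarith [Real.sin_sq_add_cos_sq θ]
  have hD : 1 - K ^ 2 ≠ 0 := by nlinarith
  set a : ℝ := bil M (al i) v
  set b : ℝ := bil M (al j) v
  set p : ℝ := (a - K * b) / (1 - K ^ 2) with hp
  set q : ℝ := (b - K * a) / (1 - K ^ 2) with hq
  set h : B → ℝ := v - p • al i - q • al j with hh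
  have hbi : bil M (al i) h = 0 := by
    rw [hh, bil_sub_right, bil_sub_right, bil_smul_right, bil_smul_right,
      bil_single_single, bil_single_single, kk_diag, ← hKdef, hp, hq]
    field_simp
    ring
  have hbj : bil M (al j) h = 0 := by
    rw [hh, bil_sub_right, bil_sub_right, bil_smul_right, bil_smul_right,
      bil_single_single, bil_single_single, kk_diag, kk_symm, ← hKdef, hp, hq]
    field_simp
    ring
  have hAh : A h = h := by
    rw [hA, Module.End.mul_apply, sg_fix M hbj, sg_fix M hbi]
  have hAnh : (A ^ m) h = h := by
    clear hbi hbj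
    induction m with
    | zero => rw [pow_zero, Module.End.one_apply]
    | succ n ihn =>
      rw [pow_succ, Module.End.mul_apply, hAh, ihn]
  have hv : v = p • al i + q • al j + h := by rw [hh]; module
  rw [hv, map_add, map_add, map_smul, map_smul, hfix_i, hfix_j, hAnh]

section Rep

variable {W : Type*} [Group W] {M' : CoxeterMatrix B} (cs : CoxeterSystem M' W)

/-- The geometric representation. -/
noncomputable def rep : W →* Module.End ℝ (B → ℝ) :=
  cs.lift ⟨fun i => sg M' i, isLiftable M'⟩

theorem rep_simple (i : B) : rep cs (cs.simple i) = sg M' i :=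
  cs.lift_apply_simple (isLiftable M') i

theorem rep_inv_cancel (w : W) (v : B → ℝ) : rep cs w (rep cs w⁻¹ v) = v := by
  have : rep cs w * rep cs w⁻¹ = 1 := by rw [← map_mul, mul_inv_cancel, map_one]
  calc rep cs w (rep cs w⁻¹ v) = (rep cs w * rep cs w⁻¹) v := rfl
    _ = v := by rw [this, Module.End.one_apply]

/-- The image of a reflection moves vectors along a single line. -/
theorem refl_sub_mem_span {t : W} (ht : cs.IsReflection t) :
    ∃ u : B → ℝ, ∀ v : B → ℝ, v - rep cs t v ∈ Submodule.span ℝ ({u} : Set (B → ℝ)) := by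
  obtain ⟨w, i, rfl⟩ := ht
  refine ⟨rep cs w (al i), fun v => ?_⟩
  rw [map_mul, map_mul, Module.End.mul_apply, Module.End.mul_apply, rep_simple, sg_apply]
  rw [map_sub, map_smul, rep_inv_cancel]
  have : v - (v - (2 * bil M' (al i) (rep cs w⁻¹ v)) • rep cs w (al i))
      = (2 * bil M' (al i) (rep cs w⁻¹ v)) • rep cs w (al i) := by module
  rw [this]
  exact Submodule.smul_mem _ _ (Submodule.mem_span_singleton_self _)

theorem rank_one_sub_refl {t : W} (ht : cs.IsReflection t) :
    Module.finrank ℝ (LinearMap.range (1 - rep cs t)) ≤ 1 := by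
  obtain ⟨u, hu⟩ := refl_sub_mem_span cs ht
  have hle : LinearMap.range (1 - rep cs t) ≤ Submodule.span ℝ ({u} : Set (B → ℝ)) := by
    rintro z ⟨v, rfl⟩
    simpa [LinearMap.sub_apply] using hu v
  refine le_trans (Submodule.finrank_mono hle) ?_
  rcases eq_or_ne u 0 with rfl | hu0
  · rw [Submodule.span_zero_singleton]
    simp
  · rw [finrank_span_singleton hu0]

theorem rank_one_sub_prod (lt : List W) (h : ∀ t ∈ lt, cs.IsReflection t) :
    Module.finrank ℝ (LinearMap.range (1 - rep cs lt.prod)) ≤ lt.length := by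
  induction lt with
  | nil =>
    rw [List.prod_nil, map_one, sub_self]
    simp
  | cons t lt ih =>
    have hle : LinearMap.range (1 - rep cs (t :: lt).prod)
        ≤ LinearMap.range (1 - rep cs t) ⊔ LinearMap.range ((rep cs t) ∘ₗ (1 - rep cs lt.prod)) := by
      rintro z ⟨v, rfl⟩
      apply Submodule.mem_sup.mpr
      refine ⟨(1 - rep cs t) v, LinearMap.mem_range_self _ v,
        (rep cs t) ((1 - rep cs lt.prod) v), LinearMap.mem_range_self _ v, ?_⟩
      simp only [LinearMap.sub_apply, Module.End.one_apply, List.prod_cons, map_mul,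
        Module.End.mul_apply, map_sub]
      abel
    refine le_trans (Submodule.finrank_mono hle) ?_
    refine le_trans (Submodule.finrank_add_le_finrank_add_finrank _ _) ?_
    have h2 : Module.finrank ℝ (LinearMap.range ((rep cs t) ∘ₗ (1 - rep cs lt.prod)))
        ≤ Module.finrank ℝ (LinearMap.range (1 - rep cs lt.prod)) := by
      rw [LinearMap.range_comp]
      exact Submodule.finrank_map_le _ _
    have h1 := rank_one_sub_refl cs (h t (List.mem_cons_self : t ∈ t :: lt))
    have h3 := ih (fun t' ht' => h t' (List.mem_cons_of_mem _ ht'))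
    simp only [List.length_cons]
    omega

/-- Coordinates not touched by a word are preserved. -/
theorem rep_wordProd_coord (l : List B) (v : B → ℝ) (i : B) (hi : i ∉ l) :
    rep cs (cs.wordProd l) v i = v i := by
  induction l with
  | nil => rw [cs.wordProd_nil, map_one, Module.End.one_apply]
  | cons j l ih =>
    have hij : i ≠ j := fun h => hi (h ▸ (List.mem_cons_self : j ∈ j :: l))
    have hil : i ∉ l := fun h => hi (List.mem_cons_of_mem _ h)
    rw [cs.wordProd_cons, map_mul, Module.End.mul_apply, rep_simple, sg_apply]
    simp only [Pi.sub_apply, Pi.smul_apply, al, Pi.single_eq_of_ne hij, smul_eq_mul,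
      mul_zero, sub_zero]
    exact ih hil

/-- A vector fixed by the product of a duplicate-free word pairs to zero with all its letters. -/
theorem fix_word (l : List B) (hnd : l.Nodup) (v : B → ℝ)
    (hv : rep cs (cs.wordProd l) v = v) : ∀ i ∈ l, bil M' (al i) v = 0 := by
  induction l with
  | nil => intro i hi; exact absurd hi List.not_mem_nil
  | cons j l ih =>
    have hjl : j ∉ l := (List.nodup_cons.mp hnd).1
    have hnd' : l.Nodup := (List.nodup_cons.mp hnd).2
    rw [cs.wordProd_cons, map_mul, Module.End.mul_apply, rep_simple] at hv
    set u : B → ℝ := rep cs (cs.wordProd l) v with hu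
    have huj : u j = v j := rep_wordProd_coord cs l v j hjl
    -- evaluate the fixed-point equation at coordinate j
    have hcoord := congrFun hv j
    rw [sg_apply] at hcoord
    simp only [Pi.sub_apply, Pi.smul_apply, al_same, smul_eq_mul, mul_one] at hcoord
    have hbu : bil M' (al j) u = 0 := by
      rw [huj] at hcoord; linarith
    have huv : u = v := by
      rw [← hv, sg_fix M' hbu]
    intro i hi
    rcases List.mem_cons.mp hi with rfl | hil
    · rw [← huv]; exact hbu
    · exact ih hnd' huv i hil

section Avg

variable [Fintype W]

/-- Dot product as a linear map in the first argument. -/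
noncomputable def dotL (y : B → ℝ) : (B → ℝ) →ₗ[ℝ] ℝ where
  toFun x := ∑ i, x i * y i
  map_add' u v := by simp [add_mul, Finset.sum_add_distrib]
  map_smul' r v := by simp [Finset.mul_sum]; congr 1; funext i; ring

theorem dotL_nonneg (y : B → ℝ) : 0 ≤ dotL y y :=
  Finset.sum_nonneg fun i _ => mul_self_nonneg (y i)

theorem dotL_eq_zero {y : B → ℝ} (h : dotL y y = 0) : y = 0 := by
  have h' := (Finset.sum_eq_zero_iff_of_nonneg
    (fun i (_ : i ∈ Finset.univ) => mul_self_nonneg (y i))).mp h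
  funext i
  exact mul_self_eq_zero.mp (h' i (Finset.mem_univ i))

/-- The averaged invariant form, as a linear map in the first argument. -/
noncomputable def ggL (y : B → ℝ) : (B → ℝ) →ₗ[ℝ] ℝ :=
  ∑ w : W, (dotL (rep cs w y)) ∘ₗ (rep cs w : Module.End ℝ (B → ℝ))

theorem ggL_apply (y x : B → ℝ) :
    ggL cs y x = ∑ w : W, dotL (rep cs w y) (rep cs w x) := by
  rw [ggL, LinearMap.sum_apply]
  rfl

include cs in
theorem bil_zero_eq_zero (v : B → ℝ) (hv : ∀ i, bil M' (al i) v = 0) : v = 0 := by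
  have hfixsimple : ∀ i : B, rep cs (cs.simple i) v = v := by
    intro i
    rw [rep_simple]
    exact sg_fix M' (hv i)
  have h1 : ∀ i : B, ggL cs v (al i) = 0 := by
    intro i
    have hsum := Equiv.sum_comp (Equiv.mulRight (cs.simple i))
      (fun w => dotL (rep cs w v) (rep cs w (al i)))
    have hterm : ∀ w : W, dotL (rep cs (w * cs.simple i) v) (rep cs (w * cs.simple i) (al i))
        = - dotL (rep cs w v) (rep cs w (al i)) := by
      intro w
      rw [map_mul, Module.End.mul_apply, Module.End.mul_apply, hfixsimple i,
        rep_simple, sg_single_self, map_neg, map_neg]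
    simp only [Equiv.coe_mulRight, hterm] at hsum
    rw [Finset.sum_neg_distrib] at hsum
    rw [ggL_apply]
    linarith [hsum]
  have hexp : v = ∑ i : B, v i • al i := by
    funext j
    rw [Finset.sum_apply]
    rw [Finset.sum_eq_single j]
    · simp
    · intro b _ hb
      simp [al_ne (Ne.symm hb)]
    · simp
  have h2 : ggL cs v v = 0 := by
    nth_rewrite 2 [hexp]
    rw [map_sum]
    apply Finset.sum_eq_zero
    intro i _
    rw [map_smul, h1 i, smul_zero]
  rw [ggL_apply] at h2
  have h3 : dotL v v = 0 := by
    have := (Finset.sum_eq_zero_iff_of_nonneg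
      (fun w (_ : w ∈ Finset.univ) => dotL_nonneg (rep cs w v))).mp ?_ 1 (Finset.mem_univ 1)
    · rw [map_one, Module.End.one_apply] at this
      exact this
    · exact h2
  exact dotL_eq_zero h3

/-- Carter's bound: any reflection factorization of a Coxeter element has length at least
the rank. -/
theorem card_le_refl_factorization (l : List B) (hnd : l.Nodup) (hall : ∀ i : B, i ∈ l)
    (lt : List W) (hrefl : ∀ t ∈ lt, cs.IsReflection t) (hprod : lt.prod = cs.wordProd l) :
    Fintype.card B ≤ lt.length := by
  have hker : LinearMap.ker (1 - rep cs lt.prod) = ⊥ := by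
    rw [LinearMap.ker_eq_bot']
    intro v hvk
    have hfix : rep cs (cs.wordProd l) v = v := by
      rw [← hprod]
      have := congrArg (fun f => f) hvk
      rw [LinearMap.sub_apply, Module.End.one_apply, sub_eq_zero] at hvk
      exact hvk.symm
    exact bil_zero_eq_zero cs v (fun i => fix_word cs l hnd v hfix i (hall i))
  have hrank := LinearMap.finrank_range_add_finrank_ker (1 - rep cs lt.prod)
  rw [hker] at hrank
  rw [finrank_bot ℝ (B → ℝ), add_zero] at hrank
  have hdim : Module.finrank ℝ (B → ℝ) = Fintype.card B := by
    simp [Module.finrank_pi]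
  have := rank_one_sub_prod cs lt hrefl
  omega

end Avg

end Rep

section AbsLen

variable {B' W' : Type*} [Group W'] {Mx : CoxeterMatrix B'} (cs' : CoxeterSystem Mx W')

theorem absSet_nonempty (u : W') :
    {k | ∃ l : List W', l.length = k ∧ (∀ t ∈ l, cs'.IsReflection t) ∧ l.prod = u}.Nonempty := by
  obtain ⟨ω, rfl⟩ := cs'.wordProd_surjective u
  refine ⟨ω.length, ω.map cs'.simple, by simp, ?_, rfl⟩
  intro t ht
  obtain ⟨i, _, rfl⟩ := List.mem_map.mp ht
  exact cs'.isReflection_simple i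

theorem absLength_le (u : W') (l : List W') (hl : ∀ t ∈ l, cs'.IsReflection t)
    (hp : l.prod = u) : cs'.absLength u ≤ l.length :=
  Nat.sInf_le ⟨l, rfl, hl, hp⟩

theorem exists_min (u : W') : ∃ l : List W',
    l.length = cs'.absLength u ∧ (∀ t ∈ l, cs'.IsReflection t) ∧ l.prod = u :=
  Nat.sInf_mem (absSet_nonempty cs' u)

theorem absLength_mul_le (u v : W') :
    cs'.absLength (u * v) ≤ cs'.absLength u + cs'.absLength v := by
  obtain ⟨lu, hlu, hru, hpu⟩ := exists_min cs' u
  obtain ⟨lv, hlv, hrv, hpv⟩ := exists_min cs' v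
  have h := absLength_le cs' (u * v) (lu ++ lv) ?_ (by rw [List.prod_append, hpu, hpv])
  · rw [List.length_append, hlu, hlv] at h
    exact h
  · intro t ht
    rcases List.mem_append.mp ht with h' | h'
    · exact hru t h'
    · exact hrv t h'

theorem chain_exists {w x : W'} (h : cs'.BruhatLE w x) :
    ∃ lt : List W', (∀ t ∈ lt, cs'.IsReflection t) ∧ x = lt.prod * w ∧
      lt.length + cs'.length w ≤ cs'.length x := by
  induction h with
  | refl => exact ⟨[], by simp, by simp, by simp⟩
  | tail hab hrel ih =>
    obtain ⟨lt, h1, h2, h3⟩ := ih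
    obtain ⟨⟨t, ht, rfl⟩, hlen⟩ := hrel
    refine ⟨t :: lt, ?_, ?_, ?_⟩
    · intro t' ht'
      rcases List.mem_cons.mp ht' with rfl | h'
      · exact ht
      · exact h1 t' h'
    · rw [List.prod_cons, mul_assoc, ← h2]
    · rw [List.length_cons]
      omega

theorem conj_prod (w : W') (lt : List W') :
    (lt.map fun t => w⁻¹ * t * w).prod = w⁻¹ * lt.prod * w := by
  induction lt with
  | nil => simp
  | cons t lt ih =>
    rw [List.map_cons, List.prod_cons, List.prod_cons, ih]
    group

theorem absLength_conj_le (w : W') (lt : List W') (hr : ∀ t ∈ lt, cs'.IsReflection t) :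
    cs'.absLength (w⁻¹ * lt.prod * w) ≤ lt.length := by
  have h := absLength_le cs' (w⁻¹ * lt.prod * w) (lt.map fun t => w⁻¹ * t * w) ?_ (conj_prod w lt)
  · rw [List.length_map] at h
    exact h
  · intro t' ht'
    obtain ⟨t, ht, rfl⟩ := List.mem_map.mp ht'
    have := (hr t ht).conj w⁻¹
    rwa [inv_inv] at this

end AbsLen

end NCAux

/-- If `ℓ(wc) = ℓ(w) + ℓ(c)` for a Coxeter element `c`, then for every `x` in the
Bruhat interval `[w, wc]`, the element `w⁻¹ x` is a `c`-noncrossing partition,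
i.e. `w⁻¹ x ≤_T c` in the absolute order. -/
theorem mem_noncrossing_of_mem_bruhat_interval
    {B W : Type*} [Group W] [Finite W] {M : CoxeterMatrix B}
    (cs : CoxeterSystem M W) (c : W) (hc : cs.IsCoxeterElement c) (w : W)
    (hlen : cs.length (w * c) = cs.length w + cs.length c)
    (x : W) (hwx : cs.BruhatLE w x) (hxwc : cs.BruhatLE x (w * c)) :
    cs.AbsLE (w⁻¹ * x) c := by
  obtain ⟨l, hnd, hall, hcw⟩ := hc
  letI : DecidableEq B := Classical.decEq B
  letI : Fintype B := Fintype.ofList l hall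
  letI : Fintype W := Fintype.ofFinite W
  have hcardB : Fintype.card B = l.length := by
    have huniv : l.toFinset = (Finset.univ : Finset B) :=
      Finset.eq_univ_iff_forall.mpr (by simp [hall])
    rw [← List.toFinset_card_of_nodup hnd, huniv]
    rfl
  have hCarter : Fintype.card B ≤ cs.absLength c := by
    obtain ⟨lt, hlen0, hr, hp⟩ := NCAux.exists_min cs c
    rw [← hlen0]
    exact NCAux.card_le_refl_factorization cs l hnd hall lt hr (by rw [hp, hcw])
  have hlc : cs.length c ≤ l.length := by
    rw [← hcw]; exact cs.length_wordProd_le l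
  obtain ⟨l1, hr1, hx1, hb1⟩ := NCAux.chain_exists cs hwx
  obtain ⟨l2, hr2, hx2, hb2⟩ := NCAux.chain_exists cs hxwc
  have ha1 : cs.absLength (w⁻¹ * x) ≤ l1.length := by
    have h := NCAux.absLength_conj_le cs w l1 hr1
    rw [show w⁻¹ * l1.prod * w = w⁻¹ * (l1.prod * w) by group, ← hx1] at h
    exact h
  have ha2 : cs.absLength (x⁻¹ * (w * c)) ≤ l2.length := by
    have h := NCAux.absLength_conj_le cs x l2 hr2
    rw [show x⁻¹ * l2.prod * x = x⁻¹ * (l2.prod * x) by group, ← hx2] at h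
    exact h
  have htri : cs.absLength c ≤ cs.absLength (w⁻¹ * x) + cs.absLength (x⁻¹ * (w * c)) := by
    have h := NCAux.absLength_mul_le cs (w⁻¹ * x) (x⁻¹ * (w * c))
    rw [show (w⁻¹ * x) * (x⁻¹ * (w * c)) = c by group] at h
    exact h
  show cs.absLength c = cs.absLength (w⁻¹ * x) + cs.absLength ((w⁻¹ * x)⁻¹ * c)
  rw [show (w⁻¹ * x)⁻¹ * c = x⁻¹ * (w * c) by group]
  omega
end

section
/- Let W be a finite Coxeter group of rank n with Coxeter element c, and let w ∈ W satisfy ℓ(wc) = ℓ(w) + ℓ(c). Then for every x in the Bruhat interval [w, wc], the absolute length of w⁻¹x equals ℓ(x) − ℓ(w). In particular every maximal chain in [w, wc] in Bruhat order has length exactly n. -/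
/-- Strict Bruhat order. -/
def CoxeterSystem.BruhatLT {B W : Type*} [Group W] {M : CoxeterMatrix B}
    (cs : CoxeterSystem M W) (u v : W) : Prop :=
  cs.BruhatLE u v ∧ u ≠ v

/-- A covering relation in Bruhat order: `u < v` with no element strictly between. -/
def CoxeterSystem.BruhatCovBy {B W : Type*} [Group W] {M : CoxeterMatrix B}
    (cs : CoxeterSystem M W) (u v : W) : Prop :=
  cs.BruhatLT u v ∧ ∀ z, cs.BruhatLT u z → cs.BruhatLT z v → False

set_option linter.unusedSectionVars false
set_option maxHeartbeats 1000000
namespace CoxAux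

section Bruhat

open CoxeterSystem

variable {B W : Type*} [Group W] {M : CoxeterMatrix B} (cs : CoxeterSystem M W)

lemma conj_list_prod (u : W) : ∀ l : List W,
    (l.map fun t => u⁻¹ * t * u).prod = u⁻¹ * l.prod * u
  | [] => by simp
  | t :: l => by
      rw [List.map_cons, List.prod_cons, List.prod_cons, conj_list_prod u l]; group

lemma absSet_nonempty (w : W) :
    {k | ∃ l : List W, l.length = k ∧ (∀ t ∈ l, cs.IsReflection t) ∧ l.prod = w}.Nonempty := by
  obtain ⟨ω, hω, rfl⟩ := cs.exists_reduced_word w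
  refine ⟨ω.length, ω.map cs.simple, by simp, ?_, rfl⟩
  intro t ht
  obtain ⟨i, _, rfl⟩ := List.mem_map.mp ht
  exact cs.isReflection_simple i

lemma absLength_le {w : W} {l : List W} (h1 : ∀ t ∈ l, cs.IsReflection t) (h2 : l.prod = w) :
    cs.absLength w ≤ l.length :=
  Nat.sInf_le ⟨l, rfl, h1, h2⟩

lemma exists_absLength (w : W) :
    ∃ l : List W, l.length = cs.absLength w ∧ (∀ t ∈ l, cs.IsReflection t) ∧ l.prod = w :=
  Nat.sInf_mem (absSet_nonempty cs w)

lemma absLength_mul_le (a b : W) :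
    cs.absLength (a * b) ≤ cs.absLength a + cs.absLength b := by
  obtain ⟨l1, hl1, hr1, hp1⟩ := exists_absLength cs a
  obtain ⟨l2, hl2, hr2, hp2⟩ := exists_absLength cs b
  have := absLength_le cs (l := l1 ++ l2) (w := a * b)
    (by intro t ht; rcases List.mem_append.mp ht with h | h; exacts [hr1 t h, hr2 t h])
    (by rw [List.prod_append, hp1, hp2])
  simpa [hl1, hl2] using this

lemma absLength_reflection {t : W} (ht : cs.IsReflection t) : cs.absLength t = 1 := by
  have hle : cs.absLength t ≤ 1 := absLength_le cs (l := [t]) (by simpa using ht) (by simp)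
  have hne : cs.absLength t ≠ 0 := by
    intro h0
    have h0' : 0 ∈ {k | ∃ l : List W, l.length = k ∧ (∀ t ∈ l, cs.IsReflection t) ∧ l.prod = t} := by
      rw [← h0]
      exact Nat.sInf_mem (absSet_nonempty cs t)
    obtain ⟨l, hl, -, hp⟩ := h0'
    rw [List.length_eq_zero_iff] at hl
    subst hl
    simp only [List.prod_nil] at hp
    have := ht.odd_length
    rw [← hp] at this
    simp at this
  omega

lemma chain_of_le {u v : W} (h : cs.BruhatLE u v) :
    ∃ l : List W, (∀ t ∈ l, cs.IsReflection t) ∧ l.prod * u = v ∧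
      l.length + cs.length u ≤ cs.length v := by
  induction h with
  | refl => exact ⟨[], by simp, by simp, by simp⟩
  | tail h1 h2 ih =>
      obtain ⟨l, hrefl, hprod, hlen⟩ := ih
      obtain ⟨⟨t, ht, rfl⟩, hlt⟩ := h2
      refine ⟨t :: l, ?_, ?_, ?_⟩
      · intro t' ht'
        rcases List.mem_cons.mp ht' with rfl | h; exacts [ht, hrefl t' h]
      · rw [List.prod_cons, mul_assoc, hprod]
      · simp only [List.length_cons]; omega

lemma length_le_of_bruhatLE {u v : W} (h : cs.BruhatLE u v) : cs.length u ≤ cs.length v := by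
  obtain ⟨l, -, -, h⟩ := chain_of_le cs h; omega

lemma absLength_le_of_bruhatLE {u v : W} (h : cs.BruhatLE u v) :
    cs.absLength (u⁻¹ * v) + cs.length u ≤ cs.length v := by
  obtain ⟨l, hrefl, hprod, hlen⟩ := chain_of_le cs h
  have hconj : (l.map fun t => u⁻¹ * t * u).prod = u⁻¹ * v := by
    rw [conj_list_prod, ← hprod]; group
  have h1 : cs.absLength (u⁻¹ * v) ≤ l.length := by
    have := absLength_le cs (l := l.map fun t => u⁻¹ * t * u) (w := u⁻¹ * v)
      (by
        intro t' ht'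
        obtain ⟨t, htl, rfl⟩ := List.mem_map.mp ht'
        have := (hrefl t htl).conj u⁻¹
        rwa [inv_inv] at this) hconj
    simpa using this
  omega

end Bruhat

section Geometry
open Real

section Basic
variable {B : Type*} [Fintype B] [DecidableEq B]

/-- Entries of the matrix of the standard bilinear form. -/
noncomputable def kM (M : CoxeterMatrix B) (i j : B) : ℝ := - Real.cos (Real.pi / (M i j : ℕ))

lemma kM_diag (M : CoxeterMatrix B) (i : B) : kM M i i = 1 := by
  simp [kM, M.diagonal i]

lemma kM_symm (M : CoxeterMatrix B) (i i' : B) : kM M i i' = kM M i' i := by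
  unfold kM
  rw [M.isSymm.apply i' i]

/-- The standard basis vector. -/
noncomputable def al (i : B) : B → ℝ := Pi.single i 1

lemma al_ne_zero (i : B) : al i ≠ 0 := by
  intro h
  have := congrFun h i
  simp [al] at this

/-- The standard bilinear form, partially applied, as a linear map. -/
noncomputable def bfl (M : CoxeterMatrix B) (x : B → ℝ) : (B → ℝ) →ₗ[ℝ] ℝ where
  toFun y := ∑ p, ∑ q, x p * (kM M p q * y q)
  map_add' y z := by
    simp only [Pi.add_apply, mul_add, Finset.sum_add_distrib]
  map_smul' c y := by
    simp only [Pi.smul_apply, smul_eq_mul, RingHom.id_apply, Finset.mul_sum]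
    exact Finset.sum_congr rfl fun p _ => Finset.sum_congr rfl fun q _ => by ring

lemma bfl_single (M : CoxeterMatrix B) (i : B) (y : B → ℝ) :
    bfl M (al i) y = ∑ q, kM M i q * y q := by
  unfold bfl al
  simp only [LinearMap.coe_mk, AddHom.coe_mk]
  rw [Finset.sum_eq_single i]
  · simp
  · intro p _ hp
    simp [Pi.single_apply, hp]
  · simp

lemma bfl_single_single (M : CoxeterMatrix B) (i j : B) :
    bfl M (al i) (al j) = kM M i j := by
  rw [bfl_single]
  unfold al
  rw [Finset.sum_eq_single j]
  · simp
  · intro q _ hq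
    simp [Pi.single_apply, hq]
  · simp

lemma bfl_symm (M : CoxeterMatrix B) (x y : B → ℝ) : bfl M x y = bfl M y x := by
  unfold bfl
  simp only [LinearMap.coe_mk, AddHom.coe_mk]
  rw [Finset.sum_comm]
  exact Finset.sum_congr rfl fun q _ => Finset.sum_congr rfl fun p _ => by
    rw [kM_symm]; ring

/-- The simple reflection, as a linear map. -/
noncomputable def sigL (M : CoxeterMatrix B) (i : B) : (B → ℝ) →ₗ[ℝ] (B → ℝ) where
  toFun v := v - (2 * bfl M (al i) v) • al i
  map_add' v w := by
    show (v + w) - (2 * bfl M (al i) (v + w)) • al i =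
      (v - (2 * bfl M (al i) v) • al i) + (w - (2 * bfl M (al i) w) • al i)
    rw [map_add]
    module
  map_smul' c v := by
    show (c • v) - (2 * bfl M (al i) (c • v)) • al i =
      c • (v - (2 * bfl M (al i) v) • al i)
    rw [map_smul]
    simp only [smul_eq_mul]
    match_scalars <;> ring

lemma sigL_apply (M : CoxeterMatrix B) (i : B) (v : B → ℝ) :
    sigL M i v = v - (2 * bfl M (al i) v) • al i := rfl

lemma sigL_invol (M : CoxeterMatrix B) (i : B) : Function.Involutive (sigL M i) := by
  intro v
  rw [sigL_apply, sigL_apply, map_sub, map_smul, bfl_single_single, kM_diag]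
  match_scalars <;> simp only [smul_eq_mul] <;> ring

/-- The simple reflection, as a linear equivalence. -/
noncomputable def sig (M : CoxeterMatrix B) (i : B) : (B → ℝ) ≃ₗ[ℝ] (B → ℝ) :=
  LinearEquiv.ofInvolutive (sigL M i) (sigL_invol M i)

lemma sig_apply (M : CoxeterMatrix B) (i : B) (v : B → ℝ) :
    sig M i v = v - (2 * bfl M (al i) v) • al i := rfl

lemma sig_apply_self (M : CoxeterMatrix B) (i : B) : sig M i (al i) = -(al i) := by
  rw [sig_apply, bfl_single_single, kM_diag]
  module

lemma sig_apply_of_bfl_eq_zero (M : CoxeterMatrix B) {i : B} {v : B → ℝ}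
    (h : bfl M (al i) v = 0) : sig M i v = v := by
  rw [sig_apply, h]
  module

lemma mul_apply (f g : (B → ℝ) ≃ₗ[ℝ] (B → ℝ)) (v : B → ℝ) : (f * g) v = f (g v) := rfl

lemma one_apply (v : B → ℝ) : (1 : (B → ℝ) ≃ₗ[ℝ] (B → ℝ)) v = v := rfl

lemma sig_liftable (M : CoxeterMatrix B) : M.IsLiftable (sig M) := by
  intro i j
  rcases eq_or_ne i j with rfl | hij
  · rw [M.diagonal i, pow_one]
    exact LinearEquiv.ext fun v => sigL_invol M i v
  rcases Nat.eq_zero_or_pos (M i j) with hm | hmpos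
  · rw [hm, pow_zero]
  have hm2 : 2 ≤ M i j := by have := M.off_diagonal i j hij; omega
  set m := M i j with hmdef
  set θ : ℝ := Real.pi / m with hθdef
  set a : ℝ := Real.cos θ with hadef
  set s : ℝ := Real.sin θ with hsdef
  have hmR : (2:ℝ) ≤ (m:ℝ) := by exact_mod_cast hm2
  have hθpos : 0 < θ := div_pos Real.pi_pos (by linarith)
  have hθlt : θ < Real.pi := by
    rw [hθdef]
    exact div_lt_self Real.pi_pos (by linarith)
  have hs : 0 < s := Real.sin_pos_of_pos_of_lt_pi hθpos hθlt
  have hs2 : s ^ 2 = 1 - a ^ 2 := by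
    have := Real.sin_sq_add_cos_sq θ
    rw [hadef, hsdef]
    nlinarith [this]
  have hkij : kM M i j = -a := by rw [kM, hadef, hθdef]
  have hkji : kM M j i = -a := by rw [kM_symm]; exact hkij
  obtain ⟨e1, he1⟩ : ∃ e : B → ℝ, e = al i := ⟨_, rfl⟩
  obtain ⟨e2, he2⟩ : ∃ e : B → ℝ, e = s⁻¹ • (al j + a • al i) := ⟨_, rfl⟩
  have hb_i_e2 : bfl M (al i) e2 = 0 := by
    rw [he2, map_smul, map_add, map_smul, bfl_single_single, bfl_single_single, hkij, kM_diag]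
    simp
  have hb_j_e2 : bfl M (al j) e2 = s := by
    rw [he2, map_smul, map_add, map_smul, bfl_single_single, bfl_single_single, hkji, kM_diag]
    simp only [smul_eq_mul]
    field_simp
    nlinarith [hs2]
  have hσi_e1 : sig M i e1 = -e1 := by rw [he1]; exact sig_apply_self M i
  have hσi_e2 : sig M i e2 = e2 := sig_apply_of_bfl_eq_zero M hb_i_e2
  have hσj_e1 : sig M j e1 = (1 - 2*a^2) • e1 + (2*a*s) • e2 := by
    rw [sig_apply, he1, he2, bfl_single_single, hkji]
    match_scalars
    all_goals field_simp
    all_goals ring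
  have hσj_e2 : sig M j e2 = (2*a*s) • e1 + (2*a^2 - 1) • e2 := by
    rw [sig_apply, hb_j_e2, he2, he1]
    match_scalars
    · field_simp
      linear_combination (-2:ℝ) * hs2
    · field_simp
      linear_combination (-2*a:ℝ) * hs2
  set g := sig M i * sig M j with hg
  have hge1 : g e1 = (2*a^2 - 1) • e1 + (2*a*s) • e2 := by
    rw [hg, mul_apply, hσj_e1, map_add, map_smul, map_smul, hσi_e1, hσi_e2]
    match_scalars <;> ring
  have hge2 : g e2 = (-(2*a*s)) • e1 + (2*a^2 - 1) • e2 := by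
    rw [hg, mul_apply, hσj_e2, map_add, map_smul, map_smul, hσi_e1, hσi_e2]
    match_scalars <;> ring
  have hc2 : (2*a^2 - 1) = Real.cos (2*θ) := by rw [Real.cos_two_mul, hadef]
  have hs2' : 2*a*s = Real.sin (2*θ) := by rw [Real.sin_two_mul, hadef, hsdef]; ring
  rw [hc2, hs2'] at hge1 hge2
  have hpow : ∀ t : ℕ, (g^t) e1 = Real.cos (2*t*θ) • e1 + Real.sin (2*t*θ) • e2 ∧
      (g^t) e2 = (-Real.sin (2*t*θ)) • e1 + Real.cos (2*t*θ) • e2 := by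
    intro t
    induction t with
    | zero => simp [one_apply]
    | succ t ih =>
      have hang : 2*((t:ℝ)+1)*θ = 2*t*θ + 2*θ := by ring
      constructor
      · rw [pow_succ', mul_apply, ih.1, map_add, map_smul, map_smul, hge1, hge2]
        push_cast
        rw [hang, Real.cos_add, Real.sin_add]
        match_scalars <;> ring
      · rw [pow_succ', mul_apply, ih.2, map_add, map_smul, map_smul, hge1, hge2]
        push_cast
        rw [hang, Real.cos_add, Real.sin_add]
        match_scalars <;> ring
  have hangm : 2*(m:ℝ)*θ = 2*Real.pi := by
    rw [hθdef]
    field_simp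
  have hgm1 : (g^m) e1 = e1 := by
    rw [(hpow m).1, hangm, Real.cos_two_pi, Real.sin_two_pi]
    module
  have hgm2 : (g^m) e2 = e2 := by
    rw [(hpow m).2, hangm, Real.cos_two_pi, Real.sin_two_pi]
    module
  have hgmz : ∀ z : B → ℝ, bfl M (al i) z = 0 → bfl M (al j) z = 0 → (g^m) z = z := by
    intro z h1 h2
    have hgz : g z = z := by
      rw [hg, mul_apply, sig_apply_of_bfl_eq_zero M h2, sig_apply_of_bfl_eq_zero M h1]
    induction m with
    | zero => simp [one_apply]
    | succ t ih => rw [pow_succ', mul_apply, ih, hgz]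
  have hd : (1 - a^2) ≠ 0 := by nlinarith [hs2, hs]
  have hαj : al j = s • e2 - a • al i := by
    rw [he2]
    match_scalars <;> field_simp <;> ring
  have hfix_j : (g^m) (al j) = al j := by
    have hgm1' : (g^m) (al i) = al i := by rw [← he1]; exact hgm1
    conv_lhs => rw [hαj]
    rw [map_sub, map_smul, map_smul, hgm2, hgm1']
    exact hαj.symm
  have hdecomp : ∀ v : B → ℝ, ∃ x y : ℝ, ∃ z : B → ℝ,
      v = x • al i + y • al j + z ∧ bfl M (al i) z = 0 ∧ bfl M (al j) z = 0 := by
    intro v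
    set bi := bfl M (al i) v with hbi
    set bj := bfl M (al j) v with hbj
    refine ⟨(bi + a*bj)/(1-a^2), (bj + a*bi)/(1-a^2),
      v - ((bi + a*bj)/(1-a^2)) • al i - ((bj + a*bi)/(1-a^2)) • al j, by module, ?_, ?_⟩
    · rw [map_sub, map_sub, map_smul, map_smul, bfl_single_single, bfl_single_single,
        kM_diag, hkij, ← hbi]
      simp only [smul_eq_mul]
      field_simp
      ring
    · rw [map_sub, map_sub, map_smul, map_smul, bfl_single_single, bfl_single_single,
        kM_diag, hkji, ← hbj]
      simp only [smul_eq_mul]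
      field_simp
      ring
  have hfix_i : (g^m) (al i) = al i := by rw [← he1]; exact hgm1
  refine LinearEquiv.ext fun v => ?_
  obtain ⟨x, y, z, hv, hz1, hz2⟩ := hdecomp v
  rw [one_apply, hv, map_add, map_add, map_smul, map_smul, hfix_i, hfix_j, hgmz z hz1 hz2]


end Basic
open Real Module

section Rep

variable {B : Type*} [Fintype B] [DecidableEq B] {W : Type*} [Group W]
  {M : CoxeterMatrix B} (cs : CoxeterSystem M W)

/-- The standard geometric representation. -/
noncomputable def rhoW : W →* ((B → ℝ) ≃ₗ[ℝ] (B → ℝ)) := cs.lift ⟨sig M, sig_liftable M⟩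

lemma rhoW_simple (i : B) : rhoW cs (cs.simple i) = sig M i := cs.lift_apply_simple _ i

/-- The fixed subspace of a linear automorphism. -/
noncomputable def fixSpace (f : (B → ℝ) ≃ₗ[ℝ] (B → ℝ)) : Submodule ℝ (B → ℝ) :=
  LinearMap.ker ((f : (B → ℝ) →ₗ[ℝ] (B → ℝ)) - LinearMap.id)

lemma mem_fixSpace {f : (B → ℝ) ≃ₗ[ℝ] (B → ℝ)} {v : B → ℝ} :
    v ∈ fixSpace f ↔ f v = v := by
  simp [fixSpace, LinearMap.mem_ker, LinearMap.sub_apply, sub_eq_zero]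

lemma fix_sig_finrank (i : B) :
    Fintype.card B ≤ finrank ℝ (fixSpace (sig M i)) + 1 := by
  have h1 : LinearMap.ker (bfl M (al i)) ≤ fixSpace (sig M i) := by
    intro v hv
    rw [LinearMap.mem_ker] at hv
    rw [mem_fixSpace]
    exact sig_apply_of_bfl_eq_zero M hv
  have h2 := LinearMap.finrank_range_add_finrank_ker (bfl M (al i))
  have h3 : finrank ℝ (LinearMap.range (bfl M (al i))) ≤ 1 := by
    have := Submodule.finrank_le (LinearMap.range (bfl M (al i)))
    simpa using this
  have h4 : finrank ℝ (B → ℝ) = Fintype.card B := Module.finrank_fintype_fun_eq_card ℝ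
  have h5 := Submodule.finrank_mono h1
  omega

lemma fixSpace_conj (u f : (B → ℝ) ≃ₗ[ℝ] (B → ℝ)) :
    fixSpace (u * f * u⁻¹) = (fixSpace f).map (u : (B → ℝ) →ₗ[ℝ] (B → ℝ)) := by
  ext v
  rw [mem_fixSpace, Submodule.mem_map_equiv, mem_fixSpace]
  have he : (u * f * u⁻¹) v = u (f (u.symm v)) := rfl
  rw [he]
  constructor
  · intro h
    have := congrArg u.symm h
    simpa using this
  · intro h
    rw [h]
    simp

lemma fix_reflection_finrank {t : W} (ht : cs.IsReflection t) :
    Fintype.card B ≤ finrank ℝ (fixSpace (rhoW cs t)) + 1 := by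
  obtain ⟨u, i, rfl⟩ := ht
  rw [map_mul, map_mul, map_inv, rhoW_simple, fixSpace_conj, LinearEquiv.finrank_map_eq]
  exact fix_sig_finrank i

lemma fix_one : fixSpace (1 : (B → ℝ) ≃ₗ[ℝ] (B → ℝ)) = ⊤ := by
  ext v; simp [mem_fixSpace, one_apply]

lemma fix_mul_ge (f g : (B → ℝ) ≃ₗ[ℝ] (B → ℝ)) :
    fixSpace f ⊓ fixSpace g ≤ fixSpace (f * g) := by
  intro v hv
  obtain ⟨h1, h2⟩ := Submodule.mem_inf.mp hv
  rw [mem_fixSpace] at h1 h2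
  rw [mem_fixSpace, mul_apply, h2, h1]

lemma fix_prod (l : List W) (h : ∀ t ∈ l, cs.IsReflection t) :
    Fintype.card B ≤ finrank ℝ (fixSpace (rhoW cs l.prod)) + l.length := by
  induction l with
  | nil =>
      rw [List.prod_nil, map_one, fix_one]
      simp [Module.finrank_fintype_fun_eq_card ℝ]
  | cons t l ih =>
      rw [List.prod_cons, map_mul]
      have h1 := fix_reflection_finrank cs (h t List.mem_cons_self)
      have h2 := ih (fun t' ht' => h t' (List.mem_cons_of_mem _ ht'))
      have h3 := Submodule.finrank_sup_add_finrank_inf_eq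
        (fixSpace (rhoW cs t)) (fixSpace (rhoW cs l.prod))
      have h4 : finrank ℝ ((fixSpace (rhoW cs t)) ⊔ (fixSpace (rhoW cs l.prod)) :
          Submodule ℝ (B → ℝ)) ≤ Fintype.card B := by
        have := Submodule.finrank_le ((fixSpace (rhoW cs t)) ⊔ (fixSpace (rhoW cs l.prod)))
        rwa [Module.finrank_fintype_fun_eq_card ℝ] at this
      have h5 := Submodule.finrank_mono (fix_mul_ge (rhoW cs t) (rhoW cs l.prod))
      simp only [List.length_cons]
      omega

lemma prod_sub_mem_span : ∀ (l : List B) (v : B → ℝ),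
    rhoW cs (cs.wordProd l) v - v ∈ Submodule.span ℝ ((fun i => al i) '' {i | i ∈ l}) := by
  intro l
  induction l with
  | nil => intro v; simp [CoxeterSystem.wordProd_nil, one_apply]
  | cons i l ih =>
      intro v
      rw [CoxeterSystem.wordProd_cons, map_mul, mul_apply, rhoW_simple, sig_apply]
      have hmem1 : rhoW cs (cs.wordProd l) v - v ∈
          Submodule.span ℝ ((fun i => al i) '' {j | j ∈ (i :: l)}) := by
        apply Submodule.span_mono (Set.image_mono ?_) (ih v)
        intro j hj
        exact List.mem_cons_of_mem _ hj
      have hmem2 : al i ∈ Submodule.span ℝ ((fun i => al i) '' {j | j ∈ (i :: l)}) :=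
        Submodule.subset_span ⟨i, by simp, rfl⟩
      have : rhoW cs (cs.wordProd l) v
          - (2 * (bfl M (al i)) (rhoW cs (cs.wordProd l) v)) • al i - v
          = (rhoW cs (cs.wordProd l) v - v)
            - (2 * (bfl M (al i)) (rhoW cs (cs.wordProd l) v)) • al i := by
        abel
      rw [this]
      exact Submodule.sub_mem _ hmem1 (Submodule.smul_mem _ _ hmem2)

lemma al_linearIndependent : LinearIndependent ℝ (fun i : B => (al i : B → ℝ)) := by
  have he : (fun i : B => (al i : B → ℝ)) = ⇑(Pi.basisFun ℝ B) := by
    funext i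
    rw [Pi.basisFun_apply]
    rfl
  rw [he]
  exact (Pi.basisFun ℝ B).linearIndependent

lemma peel : ∀ (l : List B), l.Nodup → ∀ v : B → ℝ,
    rhoW cs (cs.wordProd l) v = v → ∀ i ∈ l, sig M i v = v := by
  intro l
  induction l with
  | nil => intro _ v _ i hi; simp at hi
  | cons i l ih =>
      intro hnd v h
      rw [List.nodup_cons] at hnd
      obtain ⟨hi, hndl⟩ := hnd
      rw [CoxeterSystem.wordProd_cons, map_mul, mul_apply, rhoW_simple] at h
      have hspan := prod_sub_mem_span cs l v
      by_cases hb : bfl M (al i) (rhoW cs (cs.wordProd l) v) = 0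
      · have huv : rhoW cs (cs.wordProd l) v = v := by
          rw [sig_apply_of_bfl_eq_zero M hb] at h
          exact h
        intro j hj
        rcases List.mem_cons.mp hj with rfl | hj'
        · rw [huv] at h
          exact h
        · exact ih hndl v huv j hj'
      · exfalso
        have heq : (2 * bfl M (al i) (rhoW cs (cs.wordProd l) v)) • al i
            = rhoW cs (cs.wordProd l) v - v := by
          rw [sig_apply] at h
          have := congrArg (fun z => rhoW cs (cs.wordProd l) v - z) h
          simpa using this
        have hne : (2 * bfl M (al i) (rhoW cs (cs.wordProd l) v)) ≠ 0 := by
          intro h0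
          apply hb
          linarith [h0]
        have hal : al i = (2 * bfl M (al i) (rhoW cs (cs.wordProd l) v))⁻¹
            • (rhoW cs (cs.wordProd l) v - v) := by
          rw [← heq, smul_smul, inv_mul_cancel₀ hne, one_smul]
        have hmem : al i ∈ Submodule.span ℝ ((fun i => al i) '' {j | j ∈ l}) := by
          rw [hal]
          exact Submodule.smul_mem _ _ hspan
        exact absurd hmem (al_linearIndependent.notMem_span_image (s := {j | j ∈ l})
          (by simpa using hi))

end Rep


end Geometry

section Final

variable {B W : Type*} [Group W] {M : CoxeterMatrix B} (cs : CoxeterSystem M W)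
variable [Fintype B]

/-- The key geometric fact: a Coxeter element has absolute length at least the rank. -/
lemma card_le_absLength_coxeter [Finite W] {c : W} (hc : cs.IsCoxeterElement c) :
    Fintype.card B ≤ cs.absLength c := by
  classical
  by_contra hlt
  push_neg at hlt
  obtain ⟨l, hlen, hrefl, hprod⟩ := exists_absLength cs c
  have h1 := fix_prod cs l hrefl
  rw [hprod] at h1
  have h2 : 0 < Module.finrank ℝ (fixSpace (rhoW cs c)) := by omega
  have h3 : fixSpace (rhoW cs c) ≠ ⊥ := by
    intro h
    rw [h, finrank_bot] at h2
    omega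
  obtain ⟨v, hvmem, hv0⟩ := (Submodule.ne_bot_iff _).mp h3
  rw [mem_fixSpace] at hvmem
  obtain ⟨lc, hnd, hall, hcprod⟩ := hc
  have hsig : ∀ i, sig M i v = v :=
    fun i => peel cs lc hnd v (by rw [hcprod]; exact hvmem) i (hall i)
  letI := Fintype.ofFinite W
  set Lv : (B → ℝ) →ₗ[ℝ] ℝ :=
    { toFun := fun y => ∑ g : W, ∑ k, (rhoW cs g v k) * (rhoW cs g y k)
      map_add' := by
        intro y z
        simp only [map_add, Pi.add_apply, mul_add, Finset.sum_add_distrib]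
      map_smul' := by
        intro cc y
        simp only [map_smul, Pi.smul_apply, smul_eq_mul, RingHom.id_apply, Finset.mul_sum]
        exact Finset.sum_congr rfl fun g _ => Finset.sum_congr rfl fun k _ => by ring }
    with hLvdef
  have hLv_apply : ∀ y, Lv y = ∑ g : W, ∑ k, (rhoW cs g v k) * (rhoW cs g y k) :=
    fun y => rfl
  have h6 : ∀ (i : B) (y : B → ℝ), Lv (sig M i y) = Lv y := by
    intro i y
    rw [hLv_apply, hLv_apply]
    calc ∑ g : W, ∑ k, (rhoW cs g v k) * (rhoW cs g (sig M i y) k)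
        = ∑ g : W, ∑ k, (rhoW cs g (sig M i v) k) * (rhoW cs g (sig M i y) k) := by
          rw [hsig i]
      _ = ∑ g : W, ∑ k, (rhoW cs (g * cs.simple i) v k) * (rhoW cs (g * cs.simple i) y k) := by
          refine Finset.sum_congr rfl fun g _ => ?_
          simp only [map_mul, rhoW_simple, mul_apply]
      _ = ∑ g : W, ∑ k, (rhoW cs g v k) * (rhoW cs g y k) :=
          Fintype.sum_equiv (Equiv.mulRight (cs.simple i)) _ _ (fun g => rfl)
  have h7 : ∀ i : B, Lv (al i) = 0 := by
    intro i
    have := h6 i (al i)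
    rw [sig_apply_self, map_neg] at this
    linarith
  have h8 : Lv = 0 := by
    refine (Pi.basisFun ℝ B).ext fun i => ?_
    rw [Pi.basisFun_apply]
    exact h7 i
  have h9 : ∑ g : W, ∑ k, (rhoW cs g v k) * (rhoW cs g v k) = 0 := by
    rw [← hLv_apply v, h8]
    rfl
  have h10 := (Finset.sum_eq_zero_iff_of_nonneg
    (fun g _ => Finset.sum_nonneg fun k _ => mul_self_nonneg _)).mp h9
  have h11 := h10 1 (Finset.mem_univ 1)
  rw [map_one] at h11
  have h12 := (Finset.sum_eq_zero_iff_of_nonneg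
    (fun k _ => mul_self_nonneg ((1 : (B → ℝ) ≃ₗ[ℝ] (B → ℝ)) v k))).mp h11
  apply hv0
  funext k
  have := h12 k (Finset.mem_univ k)
  have h13 : (1 : (B → ℝ) ≃ₗ[ℝ] (B → ℝ)) v k = v k := rfl
  rw [h13] at this
  exact mul_self_eq_zero.mp this


lemma coxeter_word_length {l : List B} (h1 : l.Nodup) (h2 : ∀ i : B, i ∈ l) :
    l.length = Fintype.card B := by
  classical
  have : l.toFinset = Finset.univ := Finset.eq_univ_iff_forall.mpr (by simpa using h2)
  rw [← List.toFinset_card_of_nodup h1, this, Finset.card_univ]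

lemma length_coxeter_le {c : W} (hc : cs.IsCoxeterElement c) :
    cs.length c ≤ Fintype.card B := by
  obtain ⟨l, h1, h2, rfl⟩ := hc
  rw [← coxeter_word_length h1 h2]
  exact cs.length_wordProd_le l

lemma key [Finite W] {c w u v : W} (hc : cs.IsCoxeterElement c)
    (hlen : cs.length (w * c) = cs.length w + cs.length c)
    (hu : cs.BruhatLE w u) (huv : cs.BruhatLE u v) (hv : cs.BruhatLE v (w * c)) :
    cs.absLength (u⁻¹ * v) + cs.length u = cs.length v ∧
      cs.length c = Fintype.card B := by
  have h1 := absLength_le_of_bruhatLE cs hu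
  have h2 := absLength_le_of_bruhatLE cs huv
  have h3 := absLength_le_of_bruhatLE cs hv
  have h4 : cs.absLength c ≤ cs.absLength (w⁻¹ * u) + (cs.absLength (u⁻¹ * v)
      + cs.absLength (v⁻¹ * (w * c))) := by
    have hce : c = (w⁻¹ * u) * ((u⁻¹ * v) * (v⁻¹ * (w * c))) := by group
    calc cs.absLength c = cs.absLength ((w⁻¹ * u) * ((u⁻¹ * v) * (v⁻¹ * (w * c)))) := by
            rw [← hce]
      _ ≤ cs.absLength (w⁻¹ * u) + cs.absLength ((u⁻¹ * v) * (v⁻¹ * (w * c))) :=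
            absLength_mul_le cs _ _
      _ ≤ _ := by
            have := absLength_mul_le cs (u⁻¹ * v) (v⁻¹ * (w * c))
            omega
  have h5 := card_le_absLength_coxeter cs hc
  have h6 := length_coxeter_le cs hc
  constructor <;> omega

lemma cover_step [Finite W] {c w u v : W} (hc : cs.IsCoxeterElement c)
    (hlen : cs.length (w * c) = cs.length w + cs.length c)
    (hwu : cs.BruhatLE w u) (hvwc : cs.BruhatLE v (w * c))
    (hcov : cs.BruhatCovBy u v) : cs.length v = cs.length u + 1 := by
  obtain ⟨⟨hle, hne⟩, hmax⟩ := hcov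
  rcases (Relation.ReflTransGen.cases_head hle) with heq | ⟨z, hstep1, hz⟩
  · exact absurd heq hne
  · by_cases hzv : z = v
    · subst hzv
      obtain ⟨⟨t, ht, hveq⟩, hlt⟩ := hstep1
      have habs1 : cs.absLength (u⁻¹ * z) = 1 := by
        have h' : u⁻¹ * z = u⁻¹ * t * u := by rw [hveq]; group
        rw [h']
        have := ht.conj u⁻¹
        rw [inv_inv] at this
        exact absLength_reflection cs this
      have hk := (key cs hc hlen hwu
        (Relation.ReflTransGen.single ⟨⟨t, ht, hveq⟩, hlt⟩) hvwc).1
      rw [habs1] at hk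
      omega
    · exfalso
      have hlt1 : cs.length u < cs.length z := hstep1.2
      have hlt2 : cs.length z < cs.length v := by
        rcases (Relation.ReflTransGen.cases_head hz) with heq | ⟨z', hstep2, hz'⟩
        · exact absurd heq hzv
        · have := length_le_of_bruhatLE cs hz'
          have := hstep2.2
          omega
      exact hmax z ⟨Relation.ReflTransGen.single hstep1, by intro h; subst h; omega⟩
        ⟨hz, hzv⟩

end Final

end CoxAux

open CoxAux in
/-- Let `W` be a finite Coxeter group of rank `n` with Coxeter element `c`, and
`w ∈ W` with `ℓ(wc) = ℓ(w) + ℓ(c)`.  Then for every `x` in the Bruhat interval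
`[w, wc]`, the absolute length of `w⁻¹ x` equals `ℓ(x) − ℓ(w)`; in particular,
every maximal chain in `[w, wc]` (i.e. every chain of Bruhat covers from `w`
to `wc`) has length exactly `n`. -/
theorem absLength_eq_length_sub_of_mem_bruhat_interval
    {B W : Type*} [Group W] [Finite W] [Fintype B] {M : CoxeterMatrix B}
    (cs : CoxeterSystem M W) (c : W) (hc : cs.IsCoxeterElement c) (w : W)
    (hlen : cs.length (w * c) = cs.length w + cs.length c) :
    (∀ x : W, cs.BruhatLE w x → cs.BruhatLE x (w * c) →
      cs.absLength (w⁻¹ * x) = cs.length x - cs.length w) ∧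
    (∀ (m : ℕ) (x : Fin (m + 1) → W), x 0 = w → x (Fin.last m) = w * c →
      (∀ i : Fin m, cs.BruhatCovBy (x i.castSucc) (x i.succ)) → m = Fintype.card B) := by
  constructor
  · intro x hwx hxwc
    have := (key cs hc hlen Relation.ReflTransGen.refl hwx hxwc).1
    omega
  · intro m x h0 hlast hcov
    -- Bruhat comparabilities along the chain
    have hcx : ∀ (k : ℕ) (i j : Fin (m+1)), (j : ℕ) = (i : ℕ) + k → cs.BruhatLE (x i) (x j) := by
      intro k
      induction k with
      | zero =>
          intro i j hij
          have : i = j := Fin.ext (by omega)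
          subst this
          exact Relation.ReflTransGen.refl
      | succ k ih =>
          intro i j hij
          have hjlt := j.isLt
          have hk : (i : ℕ) + k < m + 1 := by omega
          have hq : (i : ℕ) + k < m := by omega
          have h1 : cs.BruhatLE (x i) (x ⟨(i : ℕ) + k, hk⟩) := ih i _ rfl
          have hcovq := hcov ⟨(i : ℕ) + k, hq⟩
          have e1 : (⟨(i : ℕ) + k, hq⟩ : Fin m).castSucc = (⟨(i : ℕ) + k, hk⟩ : Fin (m+1)) := by
            ext; simp
          have e2 : (⟨(i : ℕ) + k, hq⟩ : Fin m).succ = j := by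
            ext; simp; omega
          rw [e1, e2] at hcovq
          exact h1.trans hcovq.1.1
    have hwle : ∀ i : Fin (m+1), cs.BruhatLE w (x i) := by
      intro i
      have := hcx (i : ℕ) 0 i (by simp)
      rwa [h0] at this
    have hlewc : ∀ i : Fin (m+1), cs.BruhatLE (x i) (w * c) := by
      intro i
      have hile : (i : ℕ) ≤ m := by omega
      have := hcx (m - (i : ℕ)) i (Fin.last m) (by simp [Fin.last]; omega)
      rwa [hlast] at this
    -- each cover increases length by exactly 1
    have hstep : ∀ i : Fin m, cs.length (x i.succ) = cs.length (x i.castSucc) + 1 :=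
      fun i => cover_step cs hc hlen (hwle i.castSucc) (hlewc i.succ) (hcov i)
    -- lengths along the chain
    have hlen_i : ∀ (k : ℕ) (hk : k < m + 1), cs.length (x ⟨k, hk⟩) = cs.length w + k := by
      intro k
      induction k with
      | zero => intro hk; have : (⟨0, hk⟩ : Fin (m+1)) = 0 := rfl; rw [this, h0]; simp
      | succ k ih =>
          intro hk
          have hkm : k < m + 1 := by omega
          have hkm' : k < m := by omega
          have e1 : (⟨k, hkm'⟩ : Fin m).castSucc = (⟨k, hkm⟩ : Fin (m+1)) := by ext; simp
          have e2 : (⟨k, hkm'⟩ : Fin m).succ = (⟨k+1, hk⟩ : Fin (m+1)) := by ext; simp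
          have := hstep ⟨k, hkm'⟩
          rw [e1, e2] at this
          rw [this, ih hkm]
          omega
    have hm : cs.length (x (Fin.last m)) = cs.length w + m := by
      have := hlen_i m (by omega)
      have e : (⟨m, by omega⟩ : Fin (m+1)) = Fin.last m := rfl
      rwa [e] at this
    rw [hlast, hlen] at hm
    have hcn := (key cs hc hlen (u := w) (v := w) Relation.ReflTransGen.refl
      Relation.ReflTransGen.refl (by
        have := hcx m 0 (Fin.last m) (by simp [Fin.last])
        rwa [h0, hlast] at this)).2
    omega
end

section
/- Let W be a finite Coxeter group acting on its standard geometric representation, and let c = s_{β₁}s_{β₂}⋯s_{βₙ} be a minimal-length factorization of a Coxeter element c into reflections s_{βᵢ} with corresponding positive roots βᵢ. Then the roots γᵢ := s_{β₁}⋯s_{β_{i−1}}(βᵢ), for 1 ≤ i ≤ n, are linearly independent. -/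
open scoped RealInnerProductSpace

/-- The orthogonal reflection in the hyperplane orthogonal to a vector `β`. -/
noncomputable def hypReflection {E : Type*} [NormedAddCommGroup E] [InnerProductSpace ℝ E]
    [FiniteDimensional ℝ E] (β : E) : E ≃ₗᵢ[ℝ] E :=
  Submodule.reflection (ℝ ∙ β)ᗮ

namespace Carter

set_option linter.unusedSectionVars false
set_option linter.unusedVariables false
set_option maxHeartbeats 1000000

variable {E : Type*} [NormedAddCommGroup E] [InnerProductSpace ℝ E] [FiniteDimensional ℝ E]

local notation "s" => hypReflection

lemma hypReflection_apply_apply (β v : E) : s β (s β v) = v :=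
  Submodule.reflection_reflection _ v

lemma hypReflection_apply (β v : E) :
    s β v = v - ((2 * ⟪β, v⟫) / (‖β‖ ^ 2)) • β := by
  rw [hypReflection, Submodule.reflection_apply]
  have h : (ℝ ∙ β)ᗮ.starProjection v
      = v - (ℝ ∙ β).starProjection v := by
    rw [eq_sub_iff_add_eq, add_comm]
    exact Submodule.starProjection_add_starProjection_orthogonal (K := ℝ ∙ β) v
  rw [h, Submodule.starProjection_singleton]
  push_cast
  rw [two_smul]
  rw [show (2 * ⟪β, v⟫) / (‖β‖ ^ 2) = 2 * (⟪β, v⟫ / (‖β‖ ^ 2)) by ring]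
  rw [mul_smul, two_smul]
  abel

lemma hypReflection_apply_self {β : E} (hβ : β ≠ 0) : s β β = -β := by
  rw [hypReflection_apply, real_inner_self_eq_norm_sq]
  have h : ‖β‖ ^ 2 ≠ 0 := by
    have := norm_pos_iff.mpr hβ
    positivity
  rw [show (2 * ‖β‖^2) / (‖β‖ ^ 2) = 2 by field_simp]
  rw [two_smul]; abel

lemma hypReflection_apply_orth {β v : E} (h : ⟪β, v⟫ = 0) : s β v = v := by
  rw [hypReflection_apply, h]; simp

lemma hypReflection_mul_self (β : E) : s β * s β = 1 := by
  ext v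
  exact Submodule.reflection_reflection _ v

lemma hypReflection_inv (β : E) : (s β)⁻¹ = s β := by
  rw [eq_comm, eq_inv_iff_mul_eq_one, hypReflection_mul_self]

lemma hypReflection_smul {c : ℝ} (hc : c ≠ 0) (β : E) : s (c • β) = s β := by
  unfold hypReflection
  congr 1
  rw [Submodule.span_singleton_smul_eq (IsUnit.mk0 c hc)]

lemma hypReflection_neg (β : E) : s (-β) = s β := by
  rw [show (-β) = (-1 : ℝ) • β by module, hypReflection_smul (by norm_num)]

lemma norm_hypReflection (β v : E) : ‖s β v‖ = ‖v‖ := (s β).norm_map v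

lemma hypReflection_conj (g : E ≃ₗᵢ[ℝ] E) (β : E) :
    g * s β * g⁻¹ = s (g β) := by
  ext v
  show g (s β (g⁻¹ v)) = s (g β) v
  rw [hypReflection_apply, hypReflection_apply]
  have h1 : ⟪g β, v⟫ = ⟪β, (g⁻¹ : E ≃ₗᵢ[ℝ] E) v⟫ := by
    have := g.inner_map_map β ((g⁻¹ : E ≃ₗᵢ[ℝ] E) v)
    rw [show g ((g⁻¹ : E ≃ₗᵢ[ℝ] E) v) = v from g.apply_symm_apply v] at this
    exact this
  rw [map_sub, map_smul, h1, g.norm_map]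
  rw [show g ((g⁻¹ : E ≃ₗᵢ[ℝ] E) v) = v from g.apply_symm_apply v]

lemma hypReflection_conj' (g : E ≃ₗᵢ[ℝ] E) (β : E) :
    g * s β = s (g β) * g := by
  have := hypReflection_conj g β
  rw [mul_assoc] at this
  rw [← this, mul_assoc]
  simp [inv_mul_cancel]


noncomputable def W (l : List E) : E ≃ₗᵢ[ℝ] E := (l.map hypReflection).prod

lemma W_nil : W ([] : List E) = 1 := rfl

lemma W_cons (φ : E) (l : List E) : W (φ :: l) = s φ * W l := by
  simp [W, List.map_cons, List.prod_cons]

lemma W_append (l₁ l₂ : List E) : W (l₁ ++ l₂) = W l₁ * W l₂ := by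
  simp [W, List.map_append, List.prod_append]

lemma W_sub_mem_span (l : List E) (v : E) :
    W l v - v ∈ Submodule.span ℝ {x | x ∈ l} := by
  induction l with
  | nil => simp [W_nil]
  | cons φ t ih =>
      have h : W (φ :: t) v = W t v - ((2 * ⟪φ, W t v⟫) / (‖φ‖ ^ 2)) • φ := by
        rw [W_cons]
        exact hypReflection_apply φ (W t v)
      rw [h]
      have h1 : W t v - v ∈ Submodule.span ℝ {x | x ∈ t} := ih
      have hle : Submodule.span ℝ {x | x ∈ t} ≤ Submodule.span ℝ {x | x ∈ φ :: t} := by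
        apply Submodule.span_mono; intro x hx; exact List.mem_cons_of_mem _ hx
      have h2 : W t v - v ∈ Submodule.span ℝ {x | x ∈ φ :: t} := hle h1
      have h3 : φ ∈ Submodule.span ℝ {x | x ∈ φ :: t} :=
        Submodule.subset_span (List.mem_cons_self)
      have := Submodule.sub_mem _ h2 (Submodule.smul_mem _ ((2 * ⟪φ, W t v⟫) / (‖φ‖ ^ 2)) h3)
      convert this using 1
      abel

lemma W_fix_of_orth {l : List E} {v : E} (h : ∀ r ∈ l, ⟪r, v⟫ = 0) : W l v = v := by
  induction l with
  | nil => rfl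
  | cons φ t ih =>
      rw [W_cons]
      show s φ (W t v) = v
      rw [ih (fun r hr => h r (List.mem_cons_of_mem _ hr)), hypReflection_apply,
        h φ (List.mem_cons_self)]
      simp

lemma W_maps_rootset {Ψ : Set E} (hcl : ∀ β ∈ Ψ, ∀ γ ∈ Ψ, s β γ ∈ Ψ)
    {l : List E} (hl : ∀ r ∈ l, r ∈ Ψ) : ∀ φ ∈ Ψ, W l φ ∈ Ψ := by
  induction l with
  | nil => intro φ hφ; exact hφ
  | cons r t ih =>
      intro φ hφ
      rw [W_cons]
      exact hcl r (hl r (List.mem_cons_self)) _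
        (ih (fun x hx => hl x (List.mem_cons_of_mem _ hx)) φ hφ)

/-- The fixed subspace of an isometry. -/
noncomputable def fixedSub (g : E ≃ₗᵢ[ℝ] E) : Submodule ℝ E where
  carrier := {v | g v = v}
  add_mem' := by intro a b ha hb; simp only [Set.mem_setOf_eq, map_add] at *; rw [ha, hb]
  zero_mem' := map_zero g
  smul_mem' := by intro c x hx; simp only [Set.mem_setOf_eq, map_smul] at *; rw [hx]

omit [FiniteDimensional ℝ E] in
lemma mem_fixedSub {g : E ≃ₗᵢ[ℝ] E} {v : E} : v ∈ fixedSub g ↔ g v = v := Iff.rfl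

lemma fixedSub_eq_top_iff {g : E ≃ₗᵢ[ℝ] E} : fixedSub g = ⊤ ↔ g = 1 := by
  constructor
  · intro h
    ext v
    exact mem_fixedSub.mp (h ▸ Submodule.mem_top (R := ℝ) (x := v))
  · intro h; subst h; ext v; simp [mem_fixedSub]

/-- Key "+1" lemma: multiplying by a reflection whose root lies in the moved space strictly
increases the fixed subspace. -/
lemma fixedSub_lt_of_mem_mov {g : E ≃ₗᵢ[ℝ] E} {φ : E} (hφ0 : φ ≠ 0)
    (hφ : φ ∈ (fixedSub g)ᗮ) : fixedSub g < fixedSub (s φ * g) := by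
  have hle : fixedSub g ≤ fixedSub (s φ * g) := by
    intro u hu
    have hgu : g u = u := hu
    have horth : ⟪φ, u⟫ = 0 := by
      rw [real_inner_comm]
      exact (Submodule.mem_orthogonal _ φ).mp hφ u hu
    show s φ (g u) = u
    rw [hgu, hypReflection_apply, horth]
    simp
  -- φ lies in the range of (g - 1)
  set T : E →ₗ[ℝ] E := (g.toLinearEquiv : E →ₗ[ℝ] E) - LinearMap.id with hT
  have hker : LinearMap.ker T = fixedSub g := by
    ext v
    simp only [LinearMap.mem_ker, hT, LinearMap.sub_apply, LinearMap.id_apply, mem_fixedSub,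
      sub_eq_zero]
    rfl
  have hrange : LinearMap.range T = (fixedSub g)ᗮ := by
    apply Submodule.eq_of_le_of_finrank_le
    · rintro x ⟨v, rfl⟩
      rw [Submodule.mem_orthogonal]
      intro u hu
      have hgu : g u = u := hu
      show ⟪u, g v - v⟫ = 0
      rw [inner_sub_right]
      have : ⟪u, g v⟫ = ⟪u, v⟫ := by
        conv_lhs => rw [← hgu]
        exact g.inner_map_map u v
      rw [this, sub_self]
    · have h1 := Submodule.finrank_add_finrank_orthogonal (K := fixedSub g)
      have h2 := LinearMap.finrank_range_add_finrank_ker T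
      rw [hker] at h2
      omega
  obtain ⟨v, hv⟩ : ∃ v, T v = φ := by
    have := hrange ▸ hφ
    exact this
  have hgv : g v - v = φ := hv
  have hvnotfix : v ∉ fixedSub g := by
    intro hfix
    have : g v = v := hfix
    rw [this, sub_self] at hgv
    exact hφ0 hgv.symm
  have hvfix : v ∈ fixedSub (s φ * g) := by
    show s φ (g v) = v
    rw [hypReflection_apply]
    have hkey : 2 * ⟪φ, g v⟫ = ‖φ‖ ^ 2 := by
      have h1 : ⟪φ, g v⟫ = ‖v‖^2 - ⟪g v, v⟫ := by
        rw [← hgv, inner_sub_left, real_inner_self_eq_norm_sq, g.norm_map v,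
          real_inner_comm v (g v)]
      have h2 : ‖φ‖^2 = 2*‖v‖^2 - 2*⟪g v, v⟫ := by
        rw [← real_inner_self_eq_norm_sq, ← hgv, inner_sub_left, inner_sub_right,
          inner_sub_right, real_inner_self_eq_norm_sq, real_inner_self_eq_norm_sq,
          g.norm_map v, real_inner_comm v (g v)]
        ring
      rw [h1, h2]; ring
    have hφn : ‖φ‖ ^ 2 ≠ 0 := by
      have := norm_pos_iff.mpr hφ0; positivity
    rw [hkey, div_self hφn, one_smul, ← hgv]
    abel
  exact lt_of_le_of_ne hle (fun h => hvnotfix (h ▸ hvfix))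

lemma finrank_movedSub_lt {g : E ≃ₗᵢ[ℝ] E} {φ : E} (hφ0 : φ ≠ 0)
    (hφ : φ ∈ (fixedSub g)ᗮ) :
    Module.finrank ℝ (fixedSub (s φ * g))ᗮ < Module.finrank ℝ (fixedSub g)ᗮ := by
  have h := Submodule.finrank_lt_finrank_of_lt (fixedSub_lt_of_mem_mov hφ0 hφ)
  have h1 := Submodule.finrank_add_finrank_orthogonal (K := fixedSub g)
  have h2 := Submodule.finrank_add_finrank_orthogonal (K := fixedSub (s φ * g))
  omega


lemma setOf_mem_ofFn {n : ℕ} (f : Fin n → E) : {x | x ∈ List.ofFn f} = Set.range f := by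
  ext x; simp [List.mem_ofFn]

/-- If the roots are linearly independent, any vector fixed by the product of the reflections
is orthogonal to all the roots. -/
lemma fixed_orth_of_indep : ∀ {n : ℕ} (δ : Fin n → E), (∀ i, δ i ≠ 0) →
    LinearIndependent ℝ δ →
    ∀ v : E, W (List.ofFn δ) v = v → ∀ i, ⟪δ i, v⟫ = 0 := by
  intro n
  induction n with
  | zero => intro δ _ _ v _ i; exact absurd i.2 (by omega)
  | succ m ih =>
      intro δ hδ0 hind v hv
      have hconsform : δ = Fin.cons (δ 0) (Fin.tail δ) := (Fin.cons_self_tail δ).symm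
      have hind' : LinearIndependent ℝ (Fin.cons (δ 0) (Fin.tail δ)) := by
        rwa [← hconsform]
      rw [linearIndependent_fin_cons] at hind'
      obtain ⟨hindtail, hnotmem⟩ := hind'
      have hlist : List.ofFn δ = δ 0 :: List.ofFn (Fin.tail δ) := by
        rw [List.ofFn_succ]; rfl
      rw [hlist, W_cons] at hv
      have hv' : W (List.ofFn (Fin.tail δ)) v = s (δ 0) v := by
        have := congrArg (s (δ 0)) hv
        show _ = _
        calc W (List.ofFn (Fin.tail δ)) v
            = (s (δ 0) * (s (δ 0) * W (List.ofFn (Fin.tail δ)))) v := by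
              rw [← mul_assoc, hypReflection_mul_self]; simp
          _ = s (δ 0) v := by
              show s (δ 0) ((s (δ 0) * W (List.ofFn (Fin.tail δ))) v) = _
              rw [hv]
      set c : ℝ := (2 * ⟪δ 0, v⟫) / (‖δ 0‖ ^ 2) with hc
      have hsv : s (δ 0) v = v - c • δ 0 := hypReflection_apply _ _
      have hmem : W (List.ofFn (Fin.tail δ)) v - v ∈ Submodule.span ℝ (Set.range (Fin.tail δ)) := by
        rw [← setOf_mem_ofFn]
        exact W_sub_mem_span _ _
      rw [hv', hsv] at hmem
      have hmem' : -c • δ 0 ∈ Submodule.span ℝ (Set.range (Fin.tail δ)) := by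
        convert hmem using 1; module
      have hc0 : c = 0 := by
        by_contra hcne
        apply hnotmem
        have := Submodule.smul_mem _ (-c)⁻¹ hmem'
        rwa [smul_smul, inv_mul_cancel₀ (by simpa using hcne), one_smul] at this
      have hinner0 : ⟪δ 0, v⟫ = 0 := by
        have hn : ‖δ 0‖ ^ 2 ≠ 0 := by
          have := norm_pos_iff.mpr (hδ0 0); positivity
        rw [hc, div_eq_zero_iff] at hc0
        rcases hc0 with h | h
        · linarith
        · exact absurd h hn
      have hfixtail : W (List.ofFn (Fin.tail δ)) v = v := by
        rw [hv', hsv, hc0, zero_smul, sub_zero]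
      have htail := ih (Fin.tail δ) (fun i => hδ0 i.succ) hindtail v hfixtail
      intro i
      rcases Fin.eq_zero_or_eq_succ i with h0 | ⟨j, rfl⟩
      · rw [h0]; exact hinner0
      · exact htail j



open Classical in
/-- positive roots w.r.t. the linear functional given by `y` -/
noncomputable def Pos (Ψ : Finset E) (y : E) : Finset E := Ψ.filter (fun φ => 0 < ⟪y, φ⟫)

/-- membership in the convex cone generated by a finite set -/
def InCone (Δ : Finset E) (v : E) : Prop :=
  ∃ c : E → ℝ, (∀ x, 0 ≤ c x) ∧ v = ∑ x ∈ Δ, c x • x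

lemma mem_Pos {Ψ : Finset E} {y φ : E} : φ ∈ Pos Ψ y ↔ φ ∈ Ψ ∧ 0 < ⟪y, φ⟫ := by
  simp [Pos]

lemma ne_zero_of_mem {Ψ : Finset E} (hunit : ∀ φ ∈ Ψ, ‖φ‖ = 1) {φ : E} (hφ : φ ∈ Ψ) :
    φ ≠ 0 := by
  intro h; have := hunit φ hφ; rw [h] at this; simp at this

lemma neg_mem {Ψ : Finset E} (hunit : ∀ φ ∈ Ψ, ‖φ‖ = 1)
    (hcl : ∀ β ∈ Ψ, ∀ γ ∈ Ψ, s β γ ∈ Ψ) {φ : E} (hφ : φ ∈ Ψ) : -φ ∈ Ψ := by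
  have := hcl φ hφ φ hφ
  rwa [hypReflection_apply_self (ne_zero_of_mem hunit hφ)] at this

lemma pos_or_neg_mem_Pos {Ψ : Finset E} {y : E} (hunit : ∀ φ ∈ Ψ, ‖φ‖ = 1)
    (hcl : ∀ β ∈ Ψ, ∀ γ ∈ Ψ, s β γ ∈ Ψ) (hy : ∀ φ ∈ Ψ, ⟪y, φ⟫ ≠ 0)
    {φ : E} (hφ : φ ∈ Ψ) : φ ∈ Pos Ψ y ∨ -φ ∈ Pos Ψ y := by
  rcases lt_or_gt_of_ne (hy φ hφ) with h | h
  · right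
    rw [mem_Pos, inner_neg_right]
    exact ⟨neg_mem hunit hcl hφ, by linarith⟩
  · left; exact mem_Pos.mpr ⟨hφ, h⟩

lemma inCone_self {Δ : Finset E} {φ : E} (hφ : φ ∈ Δ) : InCone Δ φ := by
  classical
  refine ⟨fun x => if x = φ then 1 else 0, fun x => by positivity, ?_⟩
  have : ∑ x ∈ Δ, (if x = φ then (1:ℝ) else 0) • x = φ := by
    rw [Finset.sum_eq_single_of_mem φ hφ]
    · simp
    · intro b _ hb; simp [hb]
  exact this.symm

/-- there is a minimal subset of the positive roots whose cone contains all positive roots -/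
lemma exists_simple_system (Ψ : Finset E) (y : E) :
    ∃ Δ : Finset E, Δ ⊆ Pos Ψ y ∧ (∀ φ ∈ Pos Ψ y, InCone Δ φ) ∧
      ∀ Δ' : Finset E, Δ' ⊆ Pos Ψ y → (∀ φ ∈ Pos Ψ y, InCone Δ' φ) → Δ.card ≤ Δ'.card := by
  classical
  set S := (Pos Ψ y).powerset.filter (fun Δ => ∀ φ ∈ Pos Ψ y, InCone Δ φ) with hS
  have hne : S.Nonempty := by
    refine ⟨Pos Ψ y, ?_⟩
    rw [hS, Finset.mem_filter, Finset.mem_powerset]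
    exact ⟨le_refl _, fun φ hφ => inCone_self hφ⟩
  obtain ⟨Δ, hΔS, hmin⟩ := Finset.exists_min_image S Finset.card hne
  rw [hS, Finset.mem_filter, Finset.mem_powerset] at hΔS
  refine ⟨Δ, hΔS.1, hΔS.2, fun Δ' h1 h2 => ?_⟩
  apply hmin
  rw [hS, Finset.mem_filter, Finset.mem_powerset]
  exact ⟨h1, h2⟩

lemma inCone_subst [DecidableEq E] {Δ : Finset E} {α v : E} (hα : α ∈ Δ) (hv : InCone Δ v)
    (hcone : InCone (Δ.erase α) α) : InCone (Δ.erase α) v := by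
  obtain ⟨c, hc, hv⟩ := hv
  obtain ⟨u, hu, hα'⟩ := hcone
  refine ⟨fun x => c x + c α * u x,
    fun x => by have h1 := hc x; have h2 := hu x; have h3 := hc α; positivity, ?_⟩
  have hsplit : v = c α • α + ∑ x ∈ Δ.erase α, c x • x := by
    rw [hv, ← Finset.add_sum_erase _ _ hα]
  rw [hsplit, show c α • α = c α • (∑ x ∈ Δ.erase α, u x • x) from by rw [← hα'],
    Finset.smul_sum, ← Finset.sum_add_distrib]
  apply Finset.sum_congr rfl
  intro x hx
  rw [smul_smul, ← add_smul]
  ring_nf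

section SimpleSystem

variable [DecidableEq E] {Ψ : Finset E} {y : E} {Δ : Finset E}
variable (hunit : ∀ φ ∈ Ψ, ‖φ‖ = 1)
variable (hcl : ∀ β ∈ Ψ, ∀ γ ∈ Ψ, s β γ ∈ Ψ)
variable (hy : ∀ φ ∈ Ψ, ⟪y, φ⟫ ≠ 0)
variable (hΔsub : Δ ⊆ Pos Ψ y)
variable (hΔcone : ∀ φ ∈ Pos Ψ y, InCone Δ φ)
variable (hΔmin : ∀ Δ' : Finset E, Δ' ⊆ Pos Ψ y → (∀ φ ∈ Pos Ψ y, InCone Δ' φ) →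
  Δ.card ≤ Δ'.card)

include hΔsub hΔcone hΔmin in
lemma not_inCone_erase {α : E} (hα : α ∈ Δ) : ¬ InCone (Δ.erase α) α := by
  intro hcone
  have h1 : ∀ φ ∈ Pos Ψ y, InCone (Δ.erase α) φ :=
    fun φ hφ => inCone_subst hα (hΔcone φ hφ) hcone
  have h2 : Δ.erase α ⊆ Pos Ψ y := le_trans (Finset.erase_subset _ _) hΔsub
  have h3 := hΔmin _ h2 h1
  have h4 : (Δ.erase α).card < Δ.card := Finset.card_erase_lt_of_mem hα
  omega

include hunit hcl hy hΔsub hΔcone hΔmin in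
/-- Humphreys 1.4: reflection in a simple root permutes the other positive roots. -/
lemma simple_reflect_pos {α β : E} (hα : α ∈ Δ) (hβ : β ∈ Pos Ψ y) (hne : β ≠ α) :
    s α β ∈ Pos Ψ y := by
  have hαPos : α ∈ Pos Ψ y := hΔsub hα
  have hαΨ : α ∈ Ψ := (mem_Pos.mp hαPos).1
  have hβΨ : β ∈ Ψ := (mem_Pos.mp hβ).1
  have hsΨ : s α β ∈ Ψ := hcl α hαΨ β hβΨ
  by_contra hnotpos
  have hnegPos : -(s α β) ∈ Pos Ψ y := by
    rcases pos_or_neg_mem_Pos hunit hcl hy hsΨ with h | h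
    · exact absurd h hnotpos
    · exact h
  set t : ℝ := (2 * ⟪α, β⟫) / (‖α‖ ^ 2) with ht
  have hsαβ : s α β = β - t • α := hypReflection_apply α β
  obtain ⟨c, hc, hcβ⟩ := hΔcone β hβ
  obtain ⟨d, hd, hdβ⟩ := hΔcone _ hnegPos
  have hdβ' : -β + t • α = ∑ x ∈ Δ, d x • x := by
    rw [← hdβ, hsαβ]; abel
  set e : ℝ := t - c α - d α with he
  have hkey : ∑ x ∈ Δ.erase α, (c x + d x) • x = e • α := by
    have h1 : t • α = ∑ x ∈ Δ, (c x + d x) • x := by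
      have hsum : (∑ x ∈ Δ, c x • x) + (∑ x ∈ Δ, d x • x) = ∑ x ∈ Δ, (c x + d x) • x := by
        rw [← Finset.sum_add_distrib]
        exact Finset.sum_congr rfl (fun x _ => by rw [← add_smul])
      rw [← hsum, ← hcβ, ← hdβ']
      abel
    have h2 : ∑ x ∈ Δ, (c x + d x) • x
        = (c α + d α) • α + ∑ x ∈ Δ.erase α, (c x + d x) • x := by
      rw [← Finset.add_sum_erase _ _ hα]
    have h3 : t • α = (c α + d α) • α + ∑ x ∈ Δ.erase α, (c x + d x) • x := by
      rw [h1, h2]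
    have : ∑ x ∈ Δ.erase α, (c x + d x) • x = t • α - (c α + d α) • α := by
      rw [h3]; abel
    rw [this, he, ← sub_smul]
    congr 1
    ring
  by_cases hall : ∀ x ∈ Δ.erase α, c x + d x = 0
  · -- then β is a positive multiple of α, hence β = α
    have hczero : ∀ x ∈ Δ.erase α, c x = 0 := by
      intro x hx
      have h1 := hall x hx
      have h2 := hc x
      have h3 := hd x
      linarith
    have hβα : β = c α • α := by
      rw [hcβ, ← Finset.add_sum_erase _ _ hα]
      have : ∑ x ∈ Δ.erase α, c x • x = 0 := by
        apply Finset.sum_eq_zero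
        intro x hx; rw [hczero x hx, zero_smul]
      rw [this, add_zero]
    have hfβ : (0:ℝ) < ⟪y, β⟫ := (mem_Pos.mp hβ).2
    have hfα : (0:ℝ) < ⟪y, α⟫ := (mem_Pos.mp hαPos).2
    have hcαpos : 0 < c α := by
      rw [hβα, inner_smul_right] at hfβ
      nlinarith [hc α]
    have hnorm : ‖β‖ = c α * ‖α‖ := by
      rw [hβα, norm_smul, Real.norm_eq_abs, abs_of_pos hcαpos]
    rw [hunit β hβΨ, hunit α hαΨ] at hnorm
    have : c α = 1 := by linarith
    rw [this, one_smul] at hβα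
    exact hne hβα
  · push_neg at hall
    obtain ⟨x₀, hx₀mem, hx₀⟩ := hall
    have hsumpos : 0 < ∑ x ∈ Δ.erase α, (c x + d x) * ⟪y, x⟫ := by
      apply Finset.sum_pos'
      · intro x hx
        have hxPos : x ∈ Pos Ψ y := hΔsub (Finset.mem_of_mem_erase hx)
        have := (mem_Pos.mp hxPos).2
        have h2 := hc x; have h3 := hd x
        positivity
      · refine ⟨x₀, hx₀mem, ?_⟩
        have hxPos : x₀ ∈ Pos Ψ y := hΔsub (Finset.mem_of_mem_erase hx₀mem)
        have h1 := (mem_Pos.mp hxPos).2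
        have h2 := hc x₀; have h3 := hd x₀
        have h4 : 0 < c x₀ + d x₀ := lt_of_le_of_ne (by linarith) (Ne.symm hx₀)
        positivity
    have happly : ∑ x ∈ Δ.erase α, (c x + d x) * ⟪y, x⟫ = e * ⟪y, α⟫ := by
      have := congrArg (fun v => ⟪y, v⟫) hkey
      simpa [inner_sum, inner_smul_right] using this
    have hfα : (0:ℝ) < ⟪y, α⟫ := (mem_Pos.mp hαPos).2
    have hepos : 0 < e := by nlinarith
    apply not_inCone_erase hΔsub hΔcone hΔmin hα
    refine ⟨fun x => e⁻¹ * (c x + d x), ?_, ?_⟩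
    · intro x
      have h2 := hc x; have h3 := hd x
      positivity
    · have h5 := congrArg (fun v => e⁻¹ • v) hkey
      simp only [Finset.smul_sum, smul_smul] at h5
      rw [inv_mul_cancel₀ (ne_of_gt hepos), one_smul] at h5
      simpa using h5.symm

end SimpleSystem

open Classical in
/-- the set of positive roots sent to negative roots by `w` -/
noncomputable def NSet (Ψ : Finset E) (y : E) (w : E ≃ₗᵢ[ℝ] E) : Finset E :=
  (Pos Ψ y).filter (fun φ => ⟪y, w φ⟫ < 0)

lemma mem_NSet {Ψ : Finset E} {y : E} {w : E ≃ₗᵢ[ℝ] E} {φ : E} :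
    φ ∈ NSet Ψ y w ↔ φ ∈ Pos Ψ y ∧ ⟪y, w φ⟫ < 0 := by
  simp [NSet]

section NLemmas

variable [DecidableEq E] {Ψ : Finset E} {y : E} {Δ : Finset E} {w : E ≃ₗᵢ[ℝ] E}
variable (hunit : ∀ φ ∈ Ψ, ‖φ‖ = 1)
variable (hcl : ∀ β ∈ Ψ, ∀ γ ∈ Ψ, s β γ ∈ Ψ)
variable (hy : ∀ φ ∈ Ψ, ⟪y, φ⟫ ≠ 0)
variable (hΔsub : Δ ⊆ Pos Ψ y)
variable (hΔcone : ∀ φ ∈ Pos Ψ y, InCone Δ φ)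
variable (hΔmin : ∀ Δ' : Finset E, Δ' ⊆ Pos Ψ y → (∀ φ ∈ Pos Ψ y, InCone Δ' φ) →
  Δ.card ≤ Δ'.card)

lemma neg_alpha_not_Pos (hy : ∀ φ ∈ Ψ, ⟪y, φ⟫ ≠ 0) {α : E} (hα : α ∈ Pos Ψ y) :
    -α ∉ Pos Ψ y := by
  intro h
  have h1 := (mem_Pos.mp hα).2
  have h2 := (mem_Pos.mp h).2
  rw [inner_neg_right] at h2
  linarith

include hunit hcl hy hΔsub hΔcone hΔmin in
lemma NSet_descent {α : E} (hα : α ∈ Δ) (hwΨ : ∀ φ ∈ Ψ, w φ ∈ Ψ)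
    (hneg : ⟪y, w α⟫ < 0) :
    (NSet Ψ y (w * s α)).card < (NSet Ψ y w).card := by
  have hαPos : α ∈ Pos Ψ y := hΔsub hα
  have hα0 : α ≠ 0 := ne_zero_of_mem hunit (mem_Pos.mp hαPos).1
  have hαN : α ∈ NSet Ψ y w := mem_NSet.mpr ⟨hαPos, hneg⟩
  have hinj : ∀ β ∈ NSet Ψ y (w * s α), s α β ∈ (NSet Ψ y w).erase α := by
    intro β hβ
    obtain ⟨hβPos, hβneg⟩ := mem_NSet.mp hβ
    have hβne : β ≠ α := by
      intro h
      rw [h, show (w * s α) α = w (s α α) from rfl, hypReflection_apply_self hα0,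
        map_neg, inner_neg_right] at hβneg
      linarith
    have h1 : s α β ∈ Pos Ψ y := simple_reflect_pos hunit hcl hy hΔsub hΔcone hΔmin hα hβPos hβne
    have h2 : ⟪y, w (s α β)⟫ < 0 := hβneg
    refine Finset.mem_erase.mpr ⟨?_, mem_NSet.mpr ⟨h1, h2⟩⟩
    intro heq
    have : β = -α := by
      have := congrArg (s α) heq
      rwa [hypReflection_apply_apply,
        hypReflection_apply_self (ne_zero_of_mem hunit (mem_Pos.mp hαPos).1)] at this
    rw [this] at hβPos
    exact neg_alpha_not_Pos hy hαPos hβPos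
  have hcard : (NSet Ψ y (w * s α)).card ≤ ((NSet Ψ y w).erase α).card := by
    apply Finset.card_le_card_of_injOn _ hinj
    intro a _ b _ hab
    have := congrArg (s α) hab
    rwa [hypReflection_apply_apply, hypReflection_apply_apply] at this
  have := Finset.card_erase_lt_of_mem hαN
  omega

include hunit hcl hy hΔsub hΔcone hΔmin in
lemma NSet_ascent {α : E} (hα : α ∈ Δ) (hwΨ : ∀ φ ∈ Ψ, w φ ∈ Ψ)
    (hpos : 0 < ⟪y, w α⟫) :
    (NSet Ψ y w).card < (NSet Ψ y (w * s α)).card := by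
  have hαPos : α ∈ Pos Ψ y := hΔsub hα
  have hα0 : α ≠ 0 := ne_zero_of_mem hunit (mem_Pos.mp hαPos).1
  have hαN : α ∈ NSet Ψ y (w * s α) := by
    refine mem_NSet.mpr ⟨hαPos, ?_⟩
    rw [show (w * s α) α = w (s α α) from rfl, hypReflection_apply_self hα0, map_neg,
      inner_neg_right]
    linarith
  have hinj : ∀ β ∈ NSet Ψ y w, s α β ∈ (NSet Ψ y (w * s α)).erase α := by
    intro β hβ
    obtain ⟨hβPos, hβneg⟩ := mem_NSet.mp hβ
    have hβne : β ≠ α := by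
      rintro rfl
      linarith
    have h1 : s α β ∈ Pos Ψ y := simple_reflect_pos hunit hcl hy hΔsub hΔcone hΔmin hα hβPos hβne
    have h2 : ⟪y, (w * s α) (s α β)⟫ < 0 := by
      rw [show (w * s α) (s α β) = w (s α (s α β)) from rfl, hypReflection_apply_apply]
      exact hβneg
    refine Finset.mem_erase.mpr ⟨?_, mem_NSet.mpr ⟨h1, h2⟩⟩
    intro heq
    have : β = -α := by
      have := congrArg (s α) heq
      rwa [hypReflection_apply_apply, hypReflection_apply_self hα0] at this
    rw [this] at hβPos
    exact neg_alpha_not_Pos hy hαPos hβPos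
  have hcard : (NSet Ψ y w).card ≤ ((NSet Ψ y (w * s α)).erase α).card := by
    apply Finset.card_le_card_of_injOn _ hinj
    intro a _ b _ hab
    have := congrArg (s α) hab
    rwa [hypReflection_apply_apply, hypReflection_apply_apply] at this
  have := Finset.card_erase_lt_of_mem hαN
  omega

include hy hΔsub hΔcone in
lemma NSet_empty_of_simple_pos (hwΨ : ∀ φ ∈ Ψ, w φ ∈ Ψ)
    (h : ∀ α ∈ Δ, 0 < ⟪y, w α⟫) : NSet Ψ y w = ∅ := by
  rw [Finset.eq_empty_iff_forall_notMem]
  intro β hβ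
  obtain ⟨hβPos, hβneg⟩ := mem_NSet.mp hβ
  obtain ⟨c, hc, hcβ⟩ := hΔcone β hβPos
  have hwβ : w β = ∑ x ∈ Δ, c x • w x := by
    rw [hcβ, map_sum]
    apply Finset.sum_congr rfl
    intro x _
    rw [map_smul]
  have hge : 0 ≤ ⟪y, w β⟫ := by
    rw [hwβ, inner_sum]
    apply Finset.sum_nonneg
    intro x hx
    rw [inner_smul_right]
    have := h x hx
    have := hc x
    positivity
  linarith

include hunit hcl hy hΔsub hΔcone hΔmin in
lemma walk : ∀ (M : List E), (∀ r ∈ M, r ∈ Δ) → ∀ β, β ∈ Pos Ψ y →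
    ⟪y, W M β⟫ < 0 → ∃ M₁ α M₂, M = M₁ ++ α :: M₂ ∧ W M₂ β = α := by
  intro M
  induction M with
  | nil =>
      intro _ β hβ hneg
      rw [show W [] β = β from rfl] at hneg
      have := (mem_Pos.mp hβ).2
      linarith
  | cons α M' ih =>
      intro hM β hβ hneg
      have hM' : ∀ r ∈ M', r ∈ Δ := fun r hr => hM r (List.mem_cons_of_mem _ hr)
      have hαΔ : α ∈ Δ := hM α (List.mem_cons_self)
      have hWM'β : W M' β ∈ Ψ := by
        refine W_maps_rootset (Ψ := (Ψ : Set E)) ?_ ?_ β (mem_Pos.mp hβ).1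
        · intro a ha b hb; exact hcl a ha b hb
        · intro r hr
          exact (mem_Pos.mp (hΔsub (hM' r hr))).1
      rcases lt_or_gt_of_ne (hy _ hWM'β) with hcase | hcase
      · obtain ⟨M₁, γ, M₂, heq, hW⟩ := ih hM' β hβ hcase
        exact ⟨α :: M₁, γ, M₂, by rw [heq]; rfl, hW⟩
      · -- W M' β is positive; s α sends it negative, so W M' β = α
        have hWpos : W M' β ∈ Pos Ψ y := mem_Pos.mpr ⟨hWM'β, hcase⟩
        have hsneg : ⟪y, s α (W M' β)⟫ < 0 := by
          rw [show W (α :: M') β = s α (W M' β) from by rw [W_cons]; rfl] at hneg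
          exact hneg
        by_cases hne : W M' β = α
        · exact ⟨[], α, M', rfl, hne⟩
        · exfalso
          have := simple_reflect_pos hunit hcl hy hΔsub hΔcone hΔmin hαΔ hWpos hne
          have := (mem_Pos.mp this).2
          linarith

include hunit hcl hy hΔsub hΔcone hΔmin in
lemma deletion : ∀ (L : List E), (∀ r ∈ L, r ∈ Δ) →
    (NSet Ψ y (W L)).card < L.length →
    ∃ L', (∀ r ∈ L', r ∈ Δ) ∧ L'.length + 2 = L.length ∧ W L' = W L := by
  intro L
  induction L using List.reverseRecOn with
  | nil => intro _ h; simp at h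
  | append_singleton M α ih =>
      intro hL hcard
      have hM : ∀ r ∈ M, r ∈ Δ := fun r hr => hL r (by simp [hr])
      have hαΔ : α ∈ Δ := hL α (by simp)
      have hαΨ : α ∈ Ψ := (mem_Pos.mp (hΔsub hαΔ)).1
      have hWM_Ψ : ∀ φ ∈ Ψ, W M φ ∈ Ψ := by
        refine W_maps_rootset (Ψ := (Ψ : Set E)) ?_ ?_
        · intro a ha b hb; exact hcl a ha b hb
        · intro r hr; exact (mem_Pos.mp (hΔsub (hM r hr))).1
      have hWL : W (M ++ [α]) = W M * s α := by
        rw [W_append, W_cons, W_nil, mul_one]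
      rcases lt_or_gt_of_ne (hy _ (hWM_Ψ α hαΨ)) with hcase | hcase
      · -- last root goes negative: walk and cancel
        obtain ⟨M₁, γ, M₂, heq, hW⟩ :=
          walk hunit hcl hy hΔsub hΔcone hΔmin M hM α (hΔsub hαΔ) hcase
        refine ⟨M₁ ++ M₂, ?_, ?_, ?_⟩
        · intro r hr
          rcases List.mem_append.mp hr with h | h
          · exact hM r (by rw [heq]; exact List.mem_append_left _ h)
          · exact hM r (by rw [heq]; exact List.mem_append_right _ (List.mem_cons_of_mem _ h))
        · have := congrArg List.length heq
          simp at this ⊢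
          omega
        · have h1 : W M₂ * s α = s γ * W M₂ := by
            rw [hypReflection_conj' (W M₂) α, hW]
          subst heq
          simp only [W_append, W_cons, W_nil, mul_one, mul_assoc]
          rw [h1, ← mul_assoc (s γ), hypReflection_mul_self, one_mul]
      · -- last root stays positive: recurse on M
        have hasc := NSet_ascent hunit hcl hy hΔsub hΔcone hΔmin hαΔ hWM_Ψ hcase
        rw [← hWL] at hasc
        have hlen : (NSet Ψ y (W M)).card < M.length := by
          simp at hcard
          omega
        obtain ⟨M', hM', hlen', hWM'⟩ := ih hM hlen
        refine ⟨M' ++ [α], ?_, ?_, ?_⟩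
        · intro r hr
          rcases List.mem_append.mp hr with h | h
          · exact hM' r h
          · rw [List.mem_singleton.mp h]; exact hαΔ
        · simp at hlen' ⊢; omega
        · rw [hWL, W_append, W_cons, W_nil, mul_one, hWM']

include hunit hcl hy hΔsub hΔcone hΔmin in
/-- every positive-root reflection is a product of simple reflections -/
lemma simple_word_of_refl : ∀ (k : ℕ) (φ : E), φ ∈ Pos Ψ y →
    ((Pos Ψ y).filter (fun ψ => ⟪y, ψ⟫ < ⟪y, φ⟫)).card ≤ k →
    ∃ l : List E, (∀ r ∈ l, r ∈ Δ) ∧ W l = s φ := by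
  intro k
  induction k using Nat.strong_induction_on with
  | _ k IH =>
      intro φ hφ hk
      by_cases hφΔ : φ ∈ Δ
      · refine ⟨[φ], by simp [hφΔ], ?_⟩
        rw [W_cons, W_nil, mul_one]
      · have hφΨ : φ ∈ Ψ := (mem_Pos.mp hφ).1
        obtain ⟨c, hc, hcφ⟩ := hΔcone φ hφ
        have hφnorm : ⟪φ, φ⟫ = (1:ℝ) := by
          rw [real_inner_self_eq_norm_sq, hunit φ hφΨ]; norm_num
        have hexists : ∃ δ ∈ Δ, 0 < c δ * ⟪φ, δ⟫ := by
          by_contra hnone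
          push_neg at hnone
          have : ⟪φ, φ⟫ ≤ 0 := by
            conv_lhs => rw [show ⟪φ, φ⟫ = ⟪φ, ∑ x ∈ Δ, c x • x⟫ from by rw [← hcφ]]
            rw [inner_sum]
            apply Finset.sum_nonpos
            intro x hx
            rw [inner_smul_right]
            exact hnone x hx
          linarith
        obtain ⟨δ, hδΔ, hδpos⟩ := hexists
        have hinner : 0 < ⟪φ, δ⟫ := by
          rcases (mul_pos_iff.mp hδpos) with ⟨h1, h2⟩ | ⟨h1, h2⟩
          · exact h2
          · exact absurd h1 (not_lt.mpr (hc δ))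
        have hφδ : φ ≠ δ := fun h => hφΔ (h ▸ hδΔ)
        set ψ := s δ φ with hψ
        have hψPos : ψ ∈ Pos Ψ y :=
          simple_reflect_pos hunit hcl hy hΔsub hΔcone hΔmin hδΔ hφ hφδ
        have hδΨ : δ ∈ Ψ := (mem_Pos.mp (hΔsub hδΔ)).1
        have hψlt : ⟪y, ψ⟫ < ⟪y, φ⟫ := by
          rw [hψ, hypReflection_apply, inner_sub_right, inner_smul_right, hunit δ hδΨ]
          have hfδ : 0 < ⟪y, δ⟫ := (mem_Pos.mp (hΔsub hδΔ)).2
          have hδφ : (0:ℝ) < ⟪δ, φ⟫ := by rwa [real_inner_comm]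
          have : 0 < 2 * ⟪δ, φ⟫ / 1 ^ 2 * ⟪y, δ⟫ := by
            nlinarith [mul_pos hδφ hfδ]
          linarith
        have hcardlt : ((Pos Ψ y).filter (fun χ => ⟪y, χ⟫ < ⟪y, ψ⟫)).card <
            ((Pos Ψ y).filter (fun χ => ⟪y, χ⟫ < ⟪y, φ⟫)).card := by
          apply Finset.card_lt_card
          have hsub : ((Pos Ψ y).filter (fun χ => ⟪y, χ⟫ < ⟪y, ψ⟫)) ⊆
              ((Pos Ψ y).filter (fun χ => ⟪y, χ⟫ < ⟪y, φ⟫)) := by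
            intro χ hχ
            obtain ⟨h1, h2⟩ := Finset.mem_filter.mp hχ
            exact Finset.mem_filter.mpr ⟨h1, by linarith⟩
          rw [Finset.ssubset_iff_of_subset hsub]
          exact ⟨ψ, Finset.mem_filter.mpr ⟨hψPos, hψlt⟩,
            fun h => absurd (Finset.mem_filter.mp h).2 (lt_irrefl _)⟩
        obtain ⟨l, hl, hWl⟩ := IH (((Pos Ψ y).filter (fun χ => ⟪y, χ⟫ < ⟪y, ψ⟫)).card)
          (by omega) ψ hψPos (le_refl _)
        refine ⟨δ :: l ++ [δ], ?_, ?_⟩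
        · intro r hr
          rcases List.mem_cons.mp hr with h | h
          · rw [h]; exact hδΔ
          · rcases List.mem_append.mp h with h | h
            · exact hl r h
            · rw [List.mem_singleton.mp h]; exact hδΔ
        · rw [W_append, W_cons, W_cons, W_nil, mul_one, hWl]
          have hconj := hypReflection_conj (s δ) ψ
          rw [hypReflection_inv] at hconj
          calc s δ * s ψ * s δ = s (s δ ψ) := hconj
            _ = s φ := by rw [hψ, hypReflection_apply_apply]

end NLemmas

section TrivLemmas

variable [DecidableEq E] {Ψ : Finset E} {y : E} {Δ : Finset E}
variable (hunit : ∀ φ ∈ Ψ, ‖φ‖ = 1)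
variable (hcl : ∀ β ∈ Ψ, ∀ γ ∈ Ψ, s β γ ∈ Ψ)
variable (hy : ∀ φ ∈ Ψ, ⟪y, φ⟫ ≠ 0)
variable (hΔsub : Δ ⊆ Pos Ψ y)
variable (hΔcone : ∀ φ ∈ Pos Ψ y, InCone Δ φ)
variable (hΔmin : ∀ Δ' : Finset E, Δ' ⊆ Pos Ψ y → (∀ φ ∈ Pos Ψ y, InCone Δ' φ) →
  Δ.card ≤ Δ'.card)

include hunit hcl hy hΔsub hΔcone hΔmin in
lemma id_of_NSet_empty_word : ∀ (n : ℕ) (L : List E), L.length ≤ n → (∀ r ∈ L, r ∈ Δ) →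
    (NSet Ψ y (W L)).card = 0 → W L = 1 := by
  intro n
  induction n with
  | zero =>
      intro L hlen _ _
      rw [List.length_eq_zero_iff.mp (show L.length = 0 by omega)]
      exact W_nil
  | succ m ih =>
      intro L hlen hL hN
      rcases Nat.eq_zero_or_pos L.length with h0 | hpos
      · rw [List.length_eq_zero_iff.mp (show L.length = 0 by omega)]; exact W_nil
      · have : (NSet Ψ y (W L)).card < L.length := by omega
        obtain ⟨L', hL', hlen', hW'⟩ := deletion hunit hcl hy hΔsub hΔcone hΔmin L hL this
        rw [← hW']
        exact ih L' (by omega) hL' (by rw [hW']; exact hN)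

include hunit hcl in
lemma word_to_posword (hy : ∀ φ ∈ Ψ, ⟪y, φ⟫ ≠ 0) :
    ∀ (l : List E), (∀ r ∈ l, r ∈ Ψ) →
    ∃ l' : List E, (∀ r ∈ l', r ∈ Pos Ψ y) ∧ W l' = W l := by
  intro l
  induction l with
  | nil => intro _; exact ⟨[], by simp, rfl⟩
  | cons r t ih =>
      intro hl
      obtain ⟨t', ht', hWt'⟩ := ih (fun x hx => hl x (List.mem_cons_of_mem _ hx))
      have hrΨ : r ∈ Ψ := hl r (List.mem_cons_self)
      rcases pos_or_neg_mem_Pos hunit hcl hy hrΨ with h | h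
      · exact ⟨r :: t', fun x hx => by
          rcases List.mem_cons.mp hx with h' | h'
          · rw [h']; exact h
          · exact ht' x h', by rw [W_cons, W_cons, hWt']⟩
      · refine ⟨(-r) :: t', fun x hx => ?_, ?_⟩
        · rcases List.mem_cons.mp hx with h' | h'
          · rw [h']; exact h
          · exact ht' x h'
        · rw [W_cons, W_cons, hWt', hypReflection_neg]

include hunit hcl hy hΔsub hΔcone hΔmin in
lemma posword_to_simpleword :
    ∀ (l : List E), (∀ r ∈ l, r ∈ Pos Ψ y) →
    ∃ l' : List E, (∀ r ∈ l', r ∈ Δ) ∧ W l' = W l := by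
  intro l
  induction l with
  | nil => intro _; exact ⟨[], by simp, rfl⟩
  | cons r t ih =>
      intro hl
      obtain ⟨t', ht', hWt'⟩ := ih (fun x hx => hl x (List.mem_cons_of_mem _ hx))
      obtain ⟨lr, hlr, hWlr⟩ := simple_word_of_refl hunit hcl hy hΔsub hΔcone hΔmin
        (((Pos Ψ y).filter (fun ψ => ⟪y, ψ⟫ < ⟪y, r⟫)).card) r (hl r (List.mem_cons_self))
        (le_refl _)
      refine ⟨lr ++ t', fun x hx => ?_, ?_⟩
      · rcases List.mem_append.mp hx with h | h
        · exact hlr x h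
        · exact ht' x h
      · rw [W_append, W_cons, hWlr, hWt']

include hunit hcl hy hΔsub hΔcone hΔmin in
/-- the key rigidity statement: a product of root reflections with empty inversion set
is the identity -/
lemma id_of_NSet_empty {w : E ≃ₗᵢ[ℝ] E} (hw : ∃ l : List E, (∀ r ∈ l, r ∈ Ψ) ∧ W l = w)
    (hN : NSet Ψ y w = ∅) : w = 1 := by
  obtain ⟨l, hl, hWl⟩ := hw
  obtain ⟨l', hl', hWl'⟩ := word_to_posword hunit hcl hy l hl
  obtain ⟨l'', hl'', hWl''⟩ := posword_to_simpleword hunit hcl hy hΔsub hΔcone hΔmin l' hl'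
  rw [← hWl, ← hWl', ← hWl'']
  apply id_of_NSet_empty_word hunit hcl hy hΔsub hΔcone hΔmin l''.length l'' (le_refl _) hl''
  rw [hWl'', hWl', hWl, hN]
  simp

end TrivLemmas

lemma exists_generic (S : Finset E) (hS : ∀ φ ∈ S, φ ≠ 0) :
    ∃ y : E, ∀ φ ∈ S, ⟪y, φ⟫ ≠ 0 := by
  classical
  induction S using Finset.induction with
  | empty => exact ⟨0, by simp⟩
  | insert _ _ hφS ih =>
      rename_i φ S'
      obtain ⟨y, hy⟩ := ih (fun x hx => hS x (Finset.mem_insert_of_mem hx))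
      have hφ0 : φ ≠ 0 := hS φ (Finset.mem_insert_self _ _)
      by_cases hcase : ⟪y, φ⟫ ≠ 0
      · refine ⟨y, fun x hx => ?_⟩
        rcases Finset.mem_insert.mp hx with h | h
        · rw [h]; exact hcase
        · exact hy x h
      · push_neg at hcase
        -- perturb y in the direction φ
        set T : Set ℝ := {0} ∪ ((fun ψ => -⟪y, ψ⟫ / ⟪φ, ψ⟫) '' (S' : Set E)) with hT
        have hTfin : T.Finite := Set.Finite.union (Set.finite_singleton 0)
          (Set.Finite.image _ (S'.finite_toSet))
        obtain ⟨t, ht⟩ := Set.Infinite.nonempty (Set.Finite.infinite_compl hTfin)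
        have ht0 : t ≠ 0 := fun h => ht (Or.inl (by rw [h]; rfl))
        refine ⟨y + t • φ, fun x hx => ?_⟩
        rcases Finset.mem_insert.mp hx with h | h
        · subst h
          rw [inner_add_left, hcase, zero_add, real_inner_smul_left]
          have : ⟪x, x⟫ ≠ 0 := fun h => hφ0 (inner_self_eq_zero.mp h)
          exact mul_ne_zero ht0 this
        · rw [inner_add_left, real_inner_smul_left]
          by_cases hfx : ⟪φ, x⟫ = 0
          · rw [hfx, mul_zero, add_zero]; exact hy x h
          · intro habs
            apply ht
            right
            refine ⟨x, h, ?_⟩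
            field_simp
            linarith
lemma exists_adapted (Ψ : Finset E) (hΨ0 : ∀ φ ∈ Ψ, φ ≠ 0) (x : E) :
    ∃ y : E, (∀ φ ∈ Ψ, ⟪y, φ⟫ ≠ 0) ∧ (∀ φ ∈ Ψ, 0 < ⟪y, φ⟫ → 0 ≤ ⟪x, φ⟫) := by
  classical
  obtain ⟨y₀, hy₀⟩ := exists_generic Ψ hΨ0
  set B := Ψ.filter (fun φ => ⟪x, φ⟫ ≠ 0) with hB
  have hex : ∃ ε : ℝ, 0 < ε ∧ ∀ φ ∈ B, ε * |⟪y₀, φ⟫| < |⟪x, φ⟫| := by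
    rcases B.eq_empty_or_nonempty with hBe | hBne
    · exact ⟨1, one_pos, fun φ hφ => by rw [hBe] at hφ; simp at hφ⟩
    · obtain ⟨φ₀, hφ₀B, hφ₀min⟩ :=
        Finset.exists_min_image B (fun φ => |⟪x, φ⟫| / (1 + |⟪y₀, φ⟫|)) hBne
      set ε := |⟪x, φ₀⟫| / (1 + |⟪y₀, φ₀⟫|) with hε
      have hεpos : 0 < ε := by
        have h1 : ⟪x, φ₀⟫ ≠ 0 := (Finset.mem_filter.mp hφ₀B).2
        have h2 : (0:ℝ) < |⟪x, φ₀⟫| := abs_pos.mpr h1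
        have h3 : (0:ℝ) < 1 + |⟪y₀, φ₀⟫| := by positivity
        positivity
      refine ⟨ε, hεpos, fun φ hφ => ?_⟩
      have hle : ε ≤ |⟪x, φ⟫| / (1 + |⟪y₀, φ⟫|) := hφ₀min φ hφ
      have h3 : (0:ℝ) < 1 + |⟪y₀, φ⟫| := by positivity
      have h4 : ε * (1 + |⟪y₀, φ⟫|) ≤ |⟪x, φ⟫| := (le_div_iff₀ h3).mp hle
      nlinarith [abs_nonneg (⟪y₀, φ⟫)]
  obtain ⟨ε, hεpos, hεsmall⟩ := hex
  refine ⟨x + ε • y₀, fun φ hφ => ?_, fun φ hφ => ?_⟩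
  · rw [inner_add_left, real_inner_smul_left]
    by_cases hxφ : ⟪x, φ⟫ = 0
    · rw [hxφ, zero_add]
      exact mul_ne_zero (ne_of_gt hεpos) (hy₀ φ hφ)
    · have hφB : φ ∈ B := Finset.mem_filter.mpr ⟨hφ, hxφ⟩
      have hsm := hεsmall φ hφB
      intro habs
      have h1 : ⟪x, φ⟫ = -(ε * ⟪y₀, φ⟫) := by linarith
      have h2 : |⟪x, φ⟫| = ε * |⟪y₀, φ⟫| := by
        rw [h1, abs_neg, abs_mul, abs_of_pos hεpos]
      linarith
  · intro hpos
    rw [inner_add_left, real_inner_smul_left] at hpos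
    by_contra hneg
    push_neg at hneg
    have hxφ : ⟪x, φ⟫ ≠ 0 := ne_of_lt hneg
    have hφB : φ ∈ B := Finset.mem_filter.mpr ⟨hφ, hxφ⟩
    have hsm := hεsmall φ hφB
    have h1 : |⟪x, φ⟫| = -⟪x, φ⟫ := abs_of_neg hneg
    have h2 : ε * ⟪y₀, φ⟫ ≤ ε * |⟪y₀, φ⟫| := by
      have := le_abs_self (⟪y₀, φ⟫)
      nlinarith
    linarith

/-- Steinberg's theorem: an element of the reflection group fixing `x` is a product of
reflections in roots orthogonal to `x`. -/
lemma steinberg {Ψ : Finset E} (hunit : ∀ φ ∈ Ψ, ‖φ‖ = 1)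
    (hcl : ∀ β ∈ Ψ, ∀ γ ∈ Ψ, s β γ ∈ Ψ) (x : E) {w : E ≃ₗᵢ[ℝ] E}
    (hw : ∃ l : List E, (∀ r ∈ l, r ∈ Ψ) ∧ W l = w) (hx : w x = x) :
    ∃ K : List E, (∀ r ∈ K, r ∈ Ψ ∧ ⟪x, r⟫ = 0) ∧ W K = w := by
  classical
  obtain ⟨y, hy, hdom⟩ := exists_adapted Ψ (fun φ hφ => ne_zero_of_mem hunit hφ) x
  obtain ⟨Δ, hΔsub, hΔcone, hΔmin⟩ := exists_simple_system Ψ y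
  -- strong induction on the size of the inversion set
  suffices h : ∀ (k : ℕ) (w : E ≃ₗᵢ[ℝ] E),
      (∃ l : List E, (∀ r ∈ l, r ∈ Ψ) ∧ W l = w) → w x = x →
      (NSet Ψ y w).card ≤ k → ∃ K : List E, (∀ r ∈ K, r ∈ Ψ ∧ ⟪x, r⟫ = 0) ∧ W K = w by
    exact h (NSet Ψ y w).card w hw hx (le_refl _)
  intro k
  induction k using Nat.strong_induction_on with
  | _ k IH =>
      intro w hw hx hk
      obtain ⟨l, hl, hWl⟩ := hw
      have hwΨ : ∀ φ ∈ Ψ, w φ ∈ Ψ := by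
        intro φ hφ
        rw [← hWl]
        refine W_maps_rootset (Ψ := (Ψ : Set E)) ?_ ?_ φ hφ
        · intro a ha b hb; exact hcl a ha b hb
        · intro r hr; exact hl r hr
      by_cases hcase : ∃ α ∈ Δ, ⟪y, w α⟫ < 0
      · obtain ⟨α, hαΔ, hαneg⟩ := hcase
        have hαPos : α ∈ Pos Ψ y := hΔsub hαΔ
        have hαΨ : α ∈ Ψ := (mem_Pos.mp hαPos).1
        -- α is orthogonal to x
        have hxα : ⟪x, α⟫ = 0 := by
          have h1 : 0 ≤ ⟪x, α⟫ := hdom α hαΨ (mem_Pos.mp hαPos).2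
          have h2 : ⟪x, w α⟫ = ⟪x, α⟫ := by
            conv_lhs => rw [← hx]
            exact w.inner_map_map x α
          have h3 : -(w α) ∈ Ψ := neg_mem hunit hcl (hwΨ α hαΨ)
          have h4 : 0 < ⟪y, -(w α)⟫ := by rw [inner_neg_right]; linarith
          have h5 : 0 ≤ ⟪x, -(w α)⟫ := hdom _ h3 h4
          rw [inner_neg_right] at h5
          linarith
        have hsx : s α x = x := by
          apply hypReflection_apply_orth
          rw [real_inner_comm]; exact hxα
        set w' := w * s α with hw'
        have hw'x : w' x = x := by
          rw [hw']
          show w (s α x) = x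
          rw [hsx, hx]
        have hw'word : ∃ l' : List E, (∀ r ∈ l', r ∈ Ψ) ∧ W l' = w' := by
          refine ⟨l ++ [α], fun r hr => ?_, ?_⟩
          · rcases List.mem_append.mp hr with h | h
            · exact hl r h
            · rw [List.mem_singleton.mp h]; exact hαΨ
          · rw [W_append, W_cons, W_nil, mul_one, hWl, hw']
        have hdesc := NSet_descent hunit hcl hy hΔsub hΔcone hΔmin hαΔ hwΨ hαneg
        rw [← hw'] at hdesc
        obtain ⟨K', hK', hWK'⟩ := IH (NSet Ψ y w').card (by omega) w' hw'word hw'x (le_refl _)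
        refine ⟨K' ++ [α], fun r hr => ?_, ?_⟩
        · rcases List.mem_append.mp hr with h | h
          · exact hK' r h
          · rw [List.mem_singleton.mp h]; exact ⟨hαΨ, hxα⟩
        · rw [W_append, W_cons, W_nil, mul_one, hWK', hw', mul_assoc,
            hypReflection_mul_self, mul_one]
      · push_neg at hcase
        have hallpos : ∀ α ∈ Δ, 0 < ⟪y, w α⟫ := by
          intro α hα
          have hαΨ : α ∈ Ψ := (mem_Pos.mp (hΔsub hα)).1
          rcases lt_or_gt_of_ne (hy _ (hwΨ α hαΨ)) with h | h
          · exact absurd h (not_lt.mpr (hcase α hα))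
          · exact h
        have hNempty := NSet_empty_of_simple_pos hy hΔsub hΔcone hwΨ hallpos
        have hwid : w = 1 := id_of_NSet_empty hunit hcl hy hΔsub hΔcone hΔmin
          ⟨l, hl, hWl⟩ hNempty
        exact ⟨[], by simp, by rw [W_nil, hwid]⟩

lemma mem_orth_span_of_forall {S : Set E} {v : E} (h : ∀ u ∈ S, ⟪u, v⟫ = 0) :
    v ∈ (Submodule.span ℝ S)ᗮ := by
  rw [Submodule.mem_orthogonal]
  intro u hu
  have hle : Submodule.span ℝ S ≤ (ℝ ∙ v)ᗮ := by
    rw [Submodule.span_le]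
    intro x hx
    rw [SetLike.mem_coe, Submodule.mem_orthogonal_singleton_iff_inner_right,
      real_inner_comm]
    exact h x hx
  have := hle hu
  rw [Submodule.mem_orthogonal_singleton_iff_inner_right] at this
  rw [real_inner_comm]
  exact this

lemma span_eq_moved_of_indep {m : ℕ} {ε : Fin m → E} (hε0 : ∀ i, ε i ≠ 0)
    (hind : LinearIndependent ℝ ε) {w : E ≃ₗᵢ[ℝ] E} (hW : W (List.ofFn ε) = w) :
    Submodule.span ℝ (Set.range ε) = (fixedSub w)ᗮ := by
  have hfix : fixedSub w = (Submodule.span ℝ (Set.range ε))ᗮ := by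
    apply le_antisymm
    · intro v hv
      apply mem_orth_span_of_forall
      rintro u ⟨i, rfl⟩
      exact fixed_orth_of_indep ε hε0 hind v (by rw [hW]; exact mem_fixedSub.mp hv) i
    · intro v hv
      rw [mem_fixedSub, ← hW]
      apply W_fix_of_orth
      intro r hr
      obtain ⟨i, hi⟩ := List.mem_ofFn.mp hr
      rw [← hi]
      rw [Submodule.mem_orthogonal] at hv
      exact hv (ε i) (Submodule.subset_span ⟨i, rfl⟩)
  rw [hfix, Submodule.orthogonal_orthogonal]

/-- If `w ≠ 1` is a product of reflections with roots in `Ψ`, some root of `Ψ` lies in the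
moved space of `w`. -/
lemma exists_root_in_moved : ∀ (k : ℕ) (Ψ : Finset E), Ψ.card ≤ k →
    (∀ φ ∈ Ψ, ‖φ‖ = 1) → (∀ β ∈ Ψ, ∀ γ ∈ Ψ, s β γ ∈ Ψ) →
    ∀ w : E ≃ₗᵢ[ℝ] E, (∃ l : List E, (∀ r ∈ l, r ∈ Ψ) ∧ W l = w) → w ≠ 1 →
    ∃ φ ∈ Ψ, φ ∈ (fixedSub w)ᗮ := by
  classical
  intro k
  induction k using Nat.strong_induction_on with
  | _ k IH =>
      intro Ψ hcard hunit hcl w hw hw1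
      obtain ⟨l, hl, hWl⟩ := hw
      have hlne : l ≠ [] := by
        rintro rfl
        exact hw1 ((W_nil (E := E)).symm.trans hWl).symm
      obtain ⟨φ₀, hφ₀l⟩ := List.exists_mem_of_ne_nil l hlne
      have hφ₀Ψ : φ₀ ∈ Ψ := hl φ₀ hφ₀l
      set Vs := Submodule.span ℝ (Ψ : Set E) with hVs
      by_cases hint : ∀ v, v ∈ fixedSub w ⊓ Vs → v = 0
      · -- the fixed space is orthogonal to the span of the roots
        refine ⟨φ₀, hφ₀Ψ, ?_⟩
        rw [Submodule.mem_orthogonal]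
        intro u hu
        have hproj : u - ↑(Submodule.orthogonalProjection Vs u) ∈ Vsᗮ :=
          Submodule.sub_starProjection_mem_orthogonal u
        have hfixdiff : (u - ↑(Submodule.orthogonalProjection Vs u)) ∈ fixedSub w := by
          rw [mem_fixedSub, ← hWl]
          apply W_fix_of_orth
          intro r hr
          rw [Submodule.mem_orthogonal] at hproj
          exact hproj r (Submodule.subset_span (hl r hr))
        have hpfix : (↑(Submodule.orthogonalProjection Vs u) : E) ∈ fixedSub w := by
          have := Submodule.sub_mem (fixedSub w) hu hfixdiff
          simpa using this
        have hp0 : (↑(Submodule.orthogonalProjection Vs u) : E) = 0 :=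
          hint _ (Submodule.mem_inf.mpr ⟨hpfix, (Submodule.orthogonalProjection Vs u).2⟩)
        have huorth : u ∈ Vsᗮ := by
          have := hproj
          rwa [hp0, sub_zero] at this
        rw [Submodule.mem_orthogonal] at huorth
        rw [real_inner_comm]
        exact huorth φ₀ (Submodule.subset_span hφ₀Ψ)
      · push_neg at hint
        obtain ⟨x, hxmem, hx0⟩ := hint
        obtain ⟨hxfix, hxVs⟩ := Submodule.mem_inf.mp hxmem
        -- Steinberg: w is a product of reflections orthogonal to x
        obtain ⟨K, hK, hWK⟩ := steinberg hunit hcl x ⟨l, hl, hWl⟩ (mem_fixedSub.mp hxfix)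
        set Ψx := Ψ.filter (fun φ => ⟪x, φ⟫ = 0) with hΨx
        have hKx : ∀ r ∈ K, r ∈ Ψx := by
          intro r hr
          exact Finset.mem_filter.mpr ⟨(hK r hr).1, (hK r hr).2⟩
        have hwitness : ∃ φ ∈ Ψ, ⟪x, φ⟫ ≠ 0 := by
          by_contra hnone
          push_neg at hnone
          have hle : Vs ≤ (ℝ ∙ x)ᗮ := by
            rw [hVs, Submodule.span_le]
            intro φ hφ
            rw [SetLike.mem_coe, Submodule.mem_orthogonal_singleton_iff_inner_right]
            exact hnone φ hφ
          have := hle hxVs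
          rw [Submodule.mem_orthogonal_singleton_iff_inner_right] at this
          exact hx0 (inner_self_eq_zero.mp this)
        have hssub : Ψx ⊂ Ψ := by
          rw [Finset.ssubset_iff_of_subset (Finset.filter_subset _ _)]
          obtain ⟨φw, hφwΨ, hφwx⟩ := hwitness
          exact ⟨φw, hφwΨ, fun h => hφwx (Finset.mem_filter.mp h).2⟩
        have hcardx : Ψx.card < Ψ.card := Finset.card_lt_card hssub
        have hunitx : ∀ φ ∈ Ψx, ‖φ‖ = 1 := fun φ hφ => hunit φ (Finset.filter_subset _ _ hφ)
        have hclx : ∀ β ∈ Ψx, ∀ γ ∈ Ψx, s β γ ∈ Ψx := by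
          intro β hβ γ hγ
          obtain ⟨hβΨ, hβx⟩ := Finset.mem_filter.mp hβ
          obtain ⟨hγΨ, hγx⟩ := Finset.mem_filter.mp hγ
          refine Finset.mem_filter.mpr ⟨hcl β hβΨ γ hγΨ, ?_⟩
          rw [hypReflection_apply, inner_sub_right, inner_smul_right, hβx, hγx]
          ring
        obtain ⟨φ, hφΨx, hφmov⟩ := IH Ψx.card (by omega) Ψx (le_refl _) hunitx hclx w
          ⟨K, hKx, hWK⟩ hw1
        exact ⟨φ, Finset.filter_subset _ _ hφΨx, hφmov⟩

/-- Every product of root reflections admits a factorization with linearly independent roots. -/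
lemma exists_indep_factorization {Ψ : Finset E} (hunit : ∀ φ ∈ Ψ, ‖φ‖ = 1)
    (hcl : ∀ β ∈ Ψ, ∀ γ ∈ Ψ, s β γ ∈ Ψ) :
    ∀ (d : ℕ) (w : E ≃ₗᵢ[ℝ] E), (∃ l : List E, (∀ r ∈ l, r ∈ Ψ) ∧ W l = w) →
    Module.finrank ℝ ((fixedSub w)ᗮ) ≤ d →
    ∃ (m : ℕ) (ε : Fin m → E), (∀ i, ε i ∈ Ψ) ∧ LinearIndependent ℝ ε ∧
      W (List.ofFn ε) = w := by
  intro d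
  induction d with
  | zero =>
      intro w hw hrank
      have hmov : (fixedSub w)ᗮ = ⊥ := by
        have := Submodule.finrank_eq_zero (R := ℝ) (M := E) (S := (fixedSub w)ᗮ)
        exact this.mp (by omega)
      have hfix : fixedSub w = ⊤ := Submodule.orthogonal_eq_bot_iff.mp hmov
      have hw1 : w = 1 := fixedSub_eq_top_iff.mp hfix
      refine ⟨0, Fin.elim0, fun i => i.elim0, linearIndependent_empty_type, ?_⟩
      rw [hw1]
      rfl
  | succ d ih =>
      intro w hw hrank
      by_cases hle : Module.finrank ℝ ((fixedSub w)ᗮ) ≤ d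
      · exact ih w hw hle
      · have hw1 : w ≠ 1 := by
          intro h
          apply hle
          have hfix : fixedSub w = ⊤ := fixedSub_eq_top_iff.mpr h
          rw [hfix, Submodule.top_orthogonal_eq_bot]
          simp
        obtain ⟨l, hl, hWl⟩ := hw
        obtain ⟨φ, hφΨ, hφmov⟩ := exists_root_in_moved Ψ.card Ψ (le_refl _) hunit hcl w
          ⟨l, hl, hWl⟩ hw1
        have hφ0 : φ ≠ 0 := ne_zero_of_mem hunit hφΨ
        set w' := s φ * w with hw'
        have hw'word : ∃ l' : List E, (∀ r ∈ l', r ∈ Ψ) ∧ W l' = w' := by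
          refine ⟨φ :: l, fun r hr => ?_, ?_⟩
          · rcases List.mem_cons.mp hr with h | h
            · rw [h]; exact hφΨ
            · exact hl r h
          · rw [W_cons, hWl, hw']
        have hrank' : Module.finrank ℝ ((fixedSub w')ᗮ) ≤ d := by
          have := finrank_movedSub_lt hφ0 hφmov
          rw [← hw'] at this
          omega
        obtain ⟨m', ε', hε'Ψ, hε'ind, hε'W⟩ := ih w' hw'word hrank'
        have hweq : w = s φ * w' := by
          rw [hw', ← mul_assoc, hypReflection_mul_self, one_mul]
        have hε'0 : ∀ i, ε' i ≠ 0 := fun i => ne_zero_of_mem hunit (hε'Ψ i)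
        have hspan' : Submodule.span ℝ (Set.range ε') = (fixedSub w')ᗮ :=
          span_eq_moved_of_indep hε'0 hε'ind hε'W
        have hφnotmem : φ ∉ Submodule.span ℝ (Set.range ε') := by
          rw [hspan']
          intro habs
          have h1 : fixedSub w' < fixedSub (s φ * w') := fixedSub_lt_of_mem_mov hφ0 habs
          rw [← hweq] at h1
          have h2 : fixedSub w < fixedSub (s φ * w) := fixedSub_lt_of_mem_mov hφ0 hφmov
          rw [← hw'] at h2
          exact lt_asymm h1 h2
        refine ⟨m' + 1, Fin.cons φ ε', ?_, ?_, ?_⟩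
        · intro i
          rcases Fin.eq_zero_or_eq_succ i with h0 | ⟨j, rfl⟩
          · rw [h0, Fin.cons_zero]; exact hφΨ
          · rw [Fin.cons_succ]; exact hε'Ψ j
        · exact linearIndependent_fin_cons.mpr ⟨hε'ind, hφnotmem⟩
        · have hofn : List.ofFn (Fin.cons φ ε' : Fin (m'+1) → E) = φ :: List.ofFn ε' := by
            rw [List.ofFn_succ]
            congr 1
          rw [hofn, W_cons, hε'W]
          exact hweq.symm

lemma indep_triangular {n : ℕ} (β γ : Fin n → E) (hβ : LinearIndependent ℝ β)
    (h : ∀ i : Fin n, γ i - β i ∈ Submodule.span ℝ (β '' {j : Fin n | j < i})) :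
    LinearIndependent ℝ γ := by
  classical
  rw [linearIndependent_iff']
  intro t g hsum i hit
  by_contra hgi
  set t' := t.filter (fun j => g j ≠ 0) with ht'
  have ht'ne : t'.Nonempty := ⟨i, Finset.mem_filter.mpr ⟨hit, hgi⟩⟩
  obtain ⟨i₀, hi₀t', hi₀max⟩ := Finset.exists_max_image t' id ht'ne
  obtain ⟨hi₀t, hgi₀⟩ := Finset.mem_filter.mp hi₀t'
  simp only [id] at hi₀max
  have hsum' : ∑ j ∈ t', g j • γ j = 0 := by
    rw [← hsum]
    apply Finset.sum_subset (Finset.filter_subset _ _)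
    intro x hx hx'
    have hgx : g x = 0 := by
      by_contra hh
      exact hx' (Finset.mem_filter.mpr ⟨hx, hh⟩)
    rw [hgx, zero_smul]
  set V := Submodule.span ℝ (β '' {j : Fin n | j < i₀}) with hV
  have hsplit : ∑ j ∈ t', g j • γ j
      = (∑ j ∈ t', g j • β j) + ∑ j ∈ t', g j • (γ j - β j) := by
    rw [← Finset.sum_add_distrib]
    apply Finset.sum_congr rfl
    intro j _
    rw [← smul_add]
    congr 1
    abel
  have hz : ∑ j ∈ t', g j • (γ j - β j) ∈ V := by
    apply Submodule.sum_mem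
    intro j hjt'
    apply Submodule.smul_mem
    have hj : j ≤ i₀ := hi₀max j hjt'
    refine Submodule.span_mono ?_ (h j)
    rintro x ⟨k, hk, rfl⟩
    exact ⟨k, lt_of_lt_of_le hk hj, rfl⟩
  have hβsum : ∑ j ∈ t', g j • β j = g i₀ • β i₀ + ∑ j ∈ t'.erase i₀, g j • β j := by
    rw [← Finset.add_sum_erase _ _ hi₀t']
  have hrest : ∑ j ∈ t'.erase i₀, g j • β j ∈ V := by
    apply Submodule.sum_mem
    intro j hj
    apply Submodule.smul_mem
    apply Submodule.subset_span
    have hjne := Finset.ne_of_mem_erase hj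
    have hjle : j ≤ i₀ := hi₀max j (Finset.mem_of_mem_erase hj)
    exact ⟨j, lt_of_le_of_ne hjle hjne, rfl⟩
  have h1 : (g i₀ • β i₀ + ∑ j ∈ t'.erase i₀, g j • β j) + ∑ j ∈ t', g j • (γ j - β j) = 0 := by
    rw [← hβsum, ← hsplit]
    exact hsum'
  have hmem : g i₀ • β i₀ ∈ V := by
    have h0 : g i₀ • β i₀ = -(∑ j ∈ t'.erase i₀, g j • β j) - ∑ j ∈ t', g j • (γ j - β j) := by
      calc g i₀ • β i₀
          = ((g i₀ • β i₀ + ∑ j ∈ t'.erase i₀, g j • β j) + ∑ j ∈ t', g j • (γ j - β j))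
            - (∑ j ∈ t'.erase i₀, g j • β j) - ∑ j ∈ t', g j • (γ j - β j) := by abel
        _ = -(∑ j ∈ t'.erase i₀, g j • β j) - ∑ j ∈ t', g j • (γ j - β j) := by
            rw [h1]; abel
    rw [h0]
    exact Submodule.sub_mem _ (Submodule.neg_mem _ hrest) hz
  have hfin : β i₀ ∈ V := by
    have := Submodule.smul_mem V (g i₀)⁻¹ hmem
    rwa [smul_smul, inv_mul_cancel₀ hgi₀, one_smul] at this
  exact hβ.notMem_span_image (by simp) hfin

end Carter

open Carter in
set_option maxHeartbeats 1000000 in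
/-- Carter's lemma: if `c = s_{β₁} ⋯ s_{βₙ}` is a minimal-length factorization of
an element `c` of a finite reflection (Weyl) group into reflections `s_{βᵢ}` with
roots `βᵢ ∈ Φ`, then the roots `γᵢ := s_{β₁} ⋯ s_{β_{i−1}}(βᵢ)` are linearly
independent. -/
theorem linearIndependent_of_minimal_reflection_factorization
    {E : Type*} [NormedAddCommGroup E] [InnerProductSpace ℝ E] [FiniteDimensional ℝ E]
    (Φ : Set E) (hΦfin : Φ.Finite) (hΦ0 : (0 : E) ∉ Φ)
    (hΦclosed : ∀ β ∈ Φ, ∀ γ ∈ Φ, hypReflection β γ ∈ Φ)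
    (n : ℕ) (β : Fin n → E) (hβ : ∀ i, β i ∈ Φ)
    (c : E ≃ₗᵢ[ℝ] E) (hc : c = (List.ofFn fun i => hypReflection (β i)).prod)
    (hmin : ∀ (m : ℕ) (δ : Fin m → E), (∀ i, δ i ∈ Φ) →
      (List.ofFn fun i => hypReflection (δ i)).prod = c → n ≤ m) :
    LinearIndependent ℝ
      (fun i : Fin n => ((List.ofFn fun j => hypReflection (β j)).take i).prod (β i)) := by
  classical
  have hΦne0 : ∀ φ ∈ Φ, φ ≠ 0 := fun φ hφ h => hΦ0 (h ▸ hφ)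
  set N : E → E := fun v => ‖v‖⁻¹ • v with hNdef
  have hΨsfin : (N '' Φ).Finite := hΦfin.image _
  set Ψ : Finset E := hΨsfin.toFinset with hΨdef
  have hmemΨ : ∀ {v : E}, v ∈ Ψ ↔ ∃ φ ∈ Φ, N φ = v := by
    intro v
    rw [hΨdef, Set.Finite.mem_toFinset]
    exact Set.mem_image _ _ _
  have hunit : ∀ φ ∈ Ψ, ‖φ‖ = 1 := by
    intro φ hφ
    obtain ⟨ψ, hψΦ, rfl⟩ := hmemΨ.mp hφ
    have hψ0 : ψ ≠ 0 := hΦne0 ψ hψΦ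
    have : ‖ψ‖ ≠ 0 := norm_ne_zero_iff.mpr hψ0
    rw [hNdef]
    simp only [norm_smul, norm_inv, norm_norm]
    field_simp
  have hsN : ∀ φ ∈ Φ, hypReflection (N φ) = hypReflection φ := by
    intro φ hφ
    rw [hNdef]
    exact hypReflection_smul (inv_ne_zero (norm_ne_zero_iff.mpr (hΦne0 φ hφ))) φ
  have hclΨ : ∀ b ∈ Ψ, ∀ g ∈ Ψ, hypReflection b g ∈ Ψ := by
    intro b hb g hg
    obtain ⟨b', hb'Φ, rfl⟩ := hmemΨ.mp hb
    obtain ⟨g', hg'Φ, rfl⟩ := hmemΨ.mp hg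
    rw [hsN b' hb'Φ]
    refine hmemΨ.mpr ⟨hypReflection b' g', hΦclosed b' hb'Φ g' hg'Φ, ?_⟩
    rw [hNdef]
    simp only
    rw [map_smul, (hypReflection b').norm_map]
  set L : List E := List.ofFn (fun i => N (β i)) with hLdef
  have hLΨ : ∀ r ∈ L, r ∈ Ψ := by
    intro r hr
    obtain ⟨i, hi⟩ := List.mem_ofFn.mp hr
    exact hmemΨ.mpr ⟨β i, hβ i, hi⟩
  have hcW : W L = c := by
    rw [hc, hLdef]
    show (List.map hypReflection (List.ofFn fun i => N (β i))).prod = _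
    rw [List.map_ofFn]
    have hfun : (hypReflection ∘ fun i : Fin n => N (β i)) = fun i => hypReflection (β i) := by
      funext i
      exact hsN (β i) (hβ i)
    rw [hfun]
  have hword : ∃ l : List E, (∀ r ∈ l, r ∈ Ψ) ∧ W l = c := ⟨L, hLΨ, hcW⟩
  -- the moved space is inside the span of the roots β
  have hfixge : (Submodule.span ℝ (Set.range β))ᗮ ≤ fixedSub c := by
    intro v hv
    rw [mem_fixedSub, ← hcW]
    apply W_fix_of_orth
    intro r hr
    obtain ⟨i, hi⟩ := List.mem_ofFn.mp hr
    rw [Submodule.mem_orthogonal] at hv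
    have hβi : β i ∈ Submodule.span ℝ (Set.range β) := Submodule.subset_span ⟨i, rfl⟩
    have h1 := hv (β i) hβi
    rw [← hi, hNdef]
    simp only [real_inner_smul_left]
    rw [h1, mul_zero]
  have hmovle : (fixedSub c)ᗮ ≤ Submodule.span ℝ (Set.range β) := by
    calc (fixedSub c)ᗮ ≤ ((Submodule.span ℝ (Set.range β))ᗮ)ᗮ :=
          Submodule.orthogonal_le hfixge
      _ = Submodule.span ℝ (Set.range β) := Submodule.orthogonal_orthogonal _
  obtain ⟨m, ε, hεΨ, hεind, hεW⟩ := exists_indep_factorization hunit hclΨ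
    (Module.finrank ℝ ((fixedSub c)ᗮ)) c hword (le_refl _)
  have hε0 : ∀ i, ε i ≠ 0 := fun i => ne_zero_of_mem hunit (hεΨ i)
  have hspan : Submodule.span ℝ (Set.range ε) = (fixedSub c)ᗮ :=
    span_eq_moved_of_indep hε0 hεind hεW
  have hm : m = Module.finrank ℝ ((fixedSub c)ᗮ) := by
    rw [← hspan, finrank_span_eq_card hεind, Fintype.card_fin]
  -- pull the roots back to Φ and apply minimality
  choose δ hδΦ hδN using fun i => hmemΨ.mp (hεΨ i)
  have hprod : (List.ofFn fun i => hypReflection (δ i)).prod = c := by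
    have heq : (List.ofFn fun i => hypReflection (δ i)) = List.map hypReflection (List.ofFn ε) := by
      rw [List.map_ofFn]
      have hfun2 : (hypReflection ∘ ε) = fun i => hypReflection (δ i) := by
        funext i
        show hypReflection (ε i) = hypReflection (δ i)
        rw [← hδN i]
        exact hsN (δ i) (hδΦ i)
      rw [hfun2]
    rw [heq]
    exact hεW
  have hnm : n ≤ m := hmin m δ hδΦ hprod
  have hspanle : Module.finrank ℝ (Submodule.span ℝ (Set.range β)) ≤ n := by
    simpa [Set.finrank] using finrank_range_le_card (R := ℝ) β
  have hmovrank : Module.finrank ℝ ((fixedSub c)ᗮ) ≤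
      Module.finrank ℝ (Submodule.span ℝ (Set.range β)) :=
    Submodule.finrank_mono hmovle
  have hβrank : Module.finrank ℝ (Submodule.span ℝ (Set.range β)) = n := by omega
  have hβind : LinearIndependent ℝ β := by
    rw [linearIndependent_iff_card_eq_finrank_span]
    rw [Fintype.card_fin]
    exact hβrank.symm
  -- triangular change of family
  apply indep_triangular β _ hβind
  intro i
  have hstep : ((List.ofFn fun j => hypReflection (β j)).take (i : ℕ)).prod
      = W ((List.ofFn β).take (i : ℕ)) := by
    have h0 : (List.ofFn fun j => hypReflection (β j)) = List.map hypReflection (List.ofFn β) := by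
      rw [List.map_ofFn, Function.comp_def]
    show _ = (List.map hypReflection ((List.ofFn β).take (i : ℕ))).prod
    rw [h0, List.map_take]
  rw [hstep]
  have hmem := W_sub_mem_span ((List.ofFn β).take (i : ℕ)) (β i)
  refine Submodule.span_mono ?_ hmem
  intro x hx
  rw [Set.mem_setOf_eq, List.mem_take_iff_getElem] at hx
  obtain ⟨k, hk, hxk⟩ := hx
  have hklen : k < n := by
    have := lt_min_iff.mp hk
    simpa using this.2
  refine ⟨⟨k, hklen⟩, ?_, ?_⟩
  · show (⟨k, hklen⟩ : Fin n) < i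
    rw [Fin.lt_def]
    exact (lt_min_iff.mp hk).1
  · rw [← hxk]
    simp
end

section
/- Let W be a finite Coxeter group and c a Coxeter element with absolute length n. If φ₁, …, φₙ are the skip reflections of a c-sortable element x (defined from the skip positions of the c-sorting word of x in c^∞), then φ₁φ₂⋯φₙ = c. More precisely: if x has c-sorting word a₁a₂⋯a_ℓ as a subword of c^∞, the j-th skip reflection is φⱼ = (a₁⋯a_{rⱼ}) sⱼ (a_{rⱼ}⋯a₁) where sⱼ is the simple letter at the j-th skip position and a₁⋯a_{rⱼ} is the prefix of the sorting word before that position, then the product of all n skip reflections, taken in order of skip position, equals c. -/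


private lemma aux_sort_insert_max (m : ℕ) (Q : Finset ℕ) (h : ∀ x ∈ Q, x < m) :
    (insert m Q).sort (· ≤ ·) = Q.sort (· ≤ ·) ++ [m] := by
  have hm : m ∉ Q := fun hmem => lt_irrefl m (h m hmem)
  have hperm : ((insert m Q).sort (· ≤ ·)).Perm (Q.sort (· ≤ ·) ++ [m]) := by
    refine (Finset.sort_perm_toList _ _).trans ?_
    refine (Finset.toList_insert hm).trans ?_
    refine (((Finset.sort_perm_toList Q (· ≤ ·)).symm).cons m).trans ?_
    exact (List.perm_append_singleton m _).symm
  refine List.Perm.eq_of_pairwise' (Finset.pairwise_sort _ _) ?_ hperm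
  rw [List.pairwise_append]
  refine ⟨Finset.pairwise_sort _ _, List.pairwise_singleton _ _, fun x hx y hy => ?_⟩
  simp only [List.mem_singleton] at hy
  subst hy
  exact (h x ((Finset.mem_sort _).mp hx)).le

private lemma aux_card_filter_lt (n v : ℕ) (hv : v ≤ n) :
    (Finset.univ.filter (fun j : Fin n => (j : ℕ) < v)).card = v := by
  have himg : (Finset.univ.filter (fun j : Fin n => (j : ℕ) < v)).image Fin.val
      = Finset.range v := by
    ext x
    simp only [Finset.mem_image, Finset.mem_filter, Finset.mem_univ, true_and,
      Finset.mem_range]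
    constructor
    · rintro ⟨a, ha, rfl⟩; exact ha
    · intro hx; exact ⟨⟨x, lt_of_lt_of_le hx hv⟩, hx, rfl⟩
  rw [← Finset.card_image_of_injective _ Fin.val_injective, himg, Finset.card_range]

private def uu {B W : Type*} [Group W] {M : CoxeterMatrix B} (cs : CoxeterSystem M W)
    (wordOf : Finset ℕ → List B) (P : Finset ℕ) (m : ℕ) : W :=
  cs.wordProd (wordOf (P.filter (· < m)))

private def GG {B W : Type*} [Group W] {M : CoxeterMatrix B} (cs : CoxeterSystem M W)
    (wordOf : Finset ℕ → List B) (P : Finset ℕ) (cword : List B) (m : ℕ) : W :=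
  cs.wordProd (cword.take m) * uu cs wordOf P (m - cword.length) * (uu cs wordOf P m)⁻¹

private def cntF {k : ℕ} (q : Fin k → ℕ) (m : ℕ) : ℕ :=
  (Finset.univ.filter (fun j => q j < m)).card


/-- **Product of skip reflections.**  Fix a Coxeter system with finitely many simple
reflections, a reduced word `cword` for a Coxeter element `c` in which every simple
reflection appears exactly once, and let `letter p` be the letter of the infinite word
`c^∞ = cword cword cword ⋯` at position `p`.  Let `P` be the set of positions of a
reduced subword of `c^∞` (its word being `wordOf P`, the letters at the positions of
`P` in increasing order) satisfying the syllable-containment (c-sortability)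
condition, so that it is the `c`-sorting word of a `c`-sortable element.  A skip
position is a position `p ∉ P` such that all earlier occurrences of the letter of `p`
are used; there is one for each simple reflection, enumerated in increasing order as
`q 0 < q 1 < ⋯`.  The `j`-th skip reflection is
`φ j = (prefix before q j) · s_{letter (q j)} · (prefix before q j)⁻¹`, where the
prefix is the product of the letters of `P` before position `q j`.  Then the product
of the skip reflections, in order of skip position, equals `c`. -/
theorem prod_skip_reflections_eq_coxeter_element
    {B W : Type*} [Group W] [Fintype B] [DecidableEq B] {M : CoxeterMatrix B}
    (cs : CoxeterSystem M W)
    (cword : List B) (hnd : cword.Nodup) (hall : ∀ i : B, i ∈ cword)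
    (hlen : 0 < cword.length)
    (c : W) (hc : c = cs.wordProd cword)
    (letter : ℕ → B)
    (hletter : ∀ p : ℕ, letter p = cword.get ⟨p % cword.length, Nat.mod_lt p hlen⟩)
    (wordOf : Finset ℕ → List B)
    (hwordOf : ∀ Q : Finset ℕ, wordOf Q = (Q.sort (· ≤ ·)).map letter)
    (P : Finset ℕ)
    (hred : cs.IsReduced (wordOf P))
    (hsortable : ∀ p ∈ P, cword.length ≤ p → p - cword.length ∈ P)
    (q : Fin (Fintype.card B) → ℕ) (hqmono : StrictMono q)
    (hq : ∀ p : ℕ, (p ∉ P ∧ ∀ r < p, letter r = letter p → r ∈ P) ↔ p ∈ Set.range q)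
    (φ : Fin (Fintype.card B) → W)
    (hφ : ∀ j, φ j = cs.wordProd (wordOf (P.filter (· < q j))) *
        cs.simple (letter (q j)) * (cs.wordProd (wordOf (P.filter (· < q j))))⁻¹) :
    (List.ofFn φ).prod = c := by
  have hLpos : 0 < cword.length := hlen
  -- card of B equals cword.length
  have huniv : cword.toFinset = Finset.univ :=
    Finset.eq_univ_iff_forall.mpr fun i => List.mem_toFinset.mpr (hall i)
  have hcard : Fintype.card B = cword.length := by
    rw [← Finset.card_univ, ← huniv, List.toFinset_card_of_nodup hnd]
  have hnpos : 0 < Fintype.card B := by omega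
  have hpred : Fintype.card B - 1 < Fintype.card B := by omega
  -- letter lemmas
  have hlmodeq : ∀ a b : ℕ, a % cword.length = b % cword.length → letter a = letter b := by
    intro a b h
    rw [hletter, hletter]
    congr 1
    exact Fin.mk_eq_mk.mpr h
  have hlinj : ∀ a b : ℕ, letter a = letter b → a % cword.length = b % cword.length := by
    intro a b h
    rw [hletter, hletter] at h
    exact congrArg Fin.val ((hnd.get_inj_iff).mp h)
  have hlsub : ∀ m : ℕ, cword.length ≤ m → letter (m - cword.length) = letter m := by
    intro m hLm
    apply hlmodeq
    conv_rhs => rw [show m = (m - cword.length) + cword.length from by omega]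
    rw [Nat.add_mod_right]
  -- downward closure
  have hdc : ∀ t r, r + t * cword.length ∈ P → r ∈ P := by
    intro t
    induction t with
    | zero => intro r h; simpa using h
    | succ t ih =>
      intro r h
      apply ih
      have hmul : (t + 1) * cword.length = t * cword.length + cword.length :=
        Nat.succ_mul t cword.length
      have h2 : cword.length ≤ r + (t + 1) * cword.length := by omega
      have h3 := hsortable _ h h2
      have he : r + (t + 1) * cword.length - cword.length = r + t * cword.length := by omega
      rwa [he] at h3
  have hdc' : ∀ r m : ℕ, r % cword.length = m % cword.length → r ≤ m → m ∈ P → r ∈ P := by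
    intro r m hmod hle hm
    obtain ⟨t, ht⟩ := (Nat.modEq_iff_dvd' hle).mp hmod
    have he : m = r + t * cword.length := by rw [mul_comm]; omega
    exact hdc t r (he ▸ hm)
  -- skip characterization
  have hchar : ∀ m : ℕ,
      m ∈ Set.range q ↔ (m ∉ P ∧ (m < cword.length ∨ m - cword.length ∈ P)) := by
    intro m
    rw [← hq]
    constructor
    · rintro ⟨hmP, hall'⟩
      refine ⟨hmP, ?_⟩
      by_cases h : m < cword.length
      · exact Or.inl h
      · exact Or.inr (hall' (m - cword.length) (by omega) (hlsub m (by omega)))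
    · rintro ⟨hmP, hor⟩
      refine ⟨hmP, fun r hr hlet => ?_⟩
      have hmod := hlinj r m hlet
      by_cases hmL : m < cword.length
      · exfalso
        have h1 : r % cword.length = r := Nat.mod_eq_of_lt (lt_trans hr hmL)
        have h2 : m % cword.length = m := Nat.mod_eq_of_lt hmL
        omega
      · have hmem : m - cword.length ∈ P := hor.resolve_left hmL
        have hrm : r + cword.length ≤ m := by
          obtain ⟨t, ht⟩ := (Nat.modEq_iff_dvd' hr.le).mp hmod
          rcases Nat.eq_zero_or_pos t with h0 | h0
          · rw [h0, mul_zero] at ht; omega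
          · have h1 : cword.length * 1 ≤ cword.length * t := Nat.mul_le_mul_left _ h0
            rw [mul_one] at h1
            omega
        have hmodeq2 : r % cword.length = (m - cword.length) % cword.length := by
          have h2 : (m - cword.length) % cword.length = m % cword.length := by
            conv_rhs => rw [show m = (m - cword.length) + cword.length from by omega]
            rw [Nat.add_mod_right]
          omega
        exact hdc' r (m - cword.length) hmodeq2 (by omega) hmem
  -- prefix product lemmas
  have hu0 : uu cs wordOf P 0 = 1 := by
    have hf : P.filter (· < 0) = ∅ := by ext p; simp
    simp only [uu, hf, hwordOf, Finset.sort_empty, List.map_nil, cs.wordProd_nil]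
  have hu_mem : ∀ m, m ∈ P →
      uu cs wordOf P (m + 1) = uu cs wordOf P m * cs.simple (letter m) := by
    intro m hm
    have hfil : P.filter (· < m + 1) = insert m (P.filter (· < m)) := by
      ext p
      simp only [Finset.mem_filter, Finset.mem_insert]
      constructor
      · rintro ⟨hp, hlt⟩
        rcases Nat.lt_succ_iff_lt_or_eq.mp hlt with h | h
        · exact Or.inr ⟨hp, h⟩
        · exact Or.inl h
      · rintro (rfl | ⟨hp, hlt⟩)
        · exact ⟨hm, Nat.lt_succ_self _⟩
        · exact ⟨hp, Nat.lt_succ_of_lt hlt⟩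
    have hsort := aux_sort_insert_max m (P.filter (· < m))
      (fun x hx => (Finset.mem_filter.mp hx).2)
    simp only [uu]
    rw [hfil, hwordOf, hwordOf, hsort, List.map_append, cs.wordProd_append,
      List.map_singleton, cs.wordProd_singleton]
  have hu_not : ∀ m, m ∉ P → uu cs wordOf P (m + 1) = uu cs wordOf P m := by
    intro m hm
    have hfil : P.filter (· < m + 1) = P.filter (· < m) := by
      ext p
      simp only [Finset.mem_filter]
      constructor
      · rintro ⟨hp, hlt⟩
        have : p ≠ m := fun h => hm (h ▸ hp)
        exact ⟨hp, by omega⟩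
      · rintro ⟨hp, hlt⟩
        exact ⟨hp, Nat.lt_succ_of_lt hlt⟩
    simp only [uu, hfil]
  -- taking one more letter of cword
  have htake : ∀ m, m < cword.length → cs.wordProd (cword.take (m + 1))
      = cs.wordProd (cword.take m) * cs.simple (letter m) := by
    intro m hm
    have h1 : cword.take (m + 1) = cword.take m ++ [cword.get ⟨m, hm⟩] := by
      rw [List.take_succ]
      congr 1
      rw [List.getElem?_eq_getElem hm]
      rfl
    rw [h1, cs.wordProd_append, cs.wordProd_singleton]
    congr 2
    rw [hletter]
    congr 1
    exact Fin.mk_eq_mk.mpr (Nat.mod_eq_of_lt hm).symm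
  -- step lemmas for G
  have hstep_not : ∀ m, m ∉ Set.range q →
      GG cs wordOf P cword (m + 1) = GG cs wordOf P cword m := by
    intro m hm
    by_cases hmP : m ∈ P
    · by_cases hmL : m < cword.length
      · have h1 : m + 1 - cword.length = 0 := by omega
        have h2 : m - cword.length = 0 := by omega
        simp only [GG]
        rw [h1, h2, hu0, htake m hmL, hu_mem m hmP]
        group
      · have hLm : cword.length ≤ m := by omega
        have h1 : m + 1 - cword.length = (m - cword.length) + 1 := by omega
        have hmem : m - cword.length ∈ P := hsortable m hmP hLm
        have htk : cword.take (m + 1) = cword.take m := by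
          rw [List.take_of_length_le (show cword.length ≤ m + 1 by omega),
            List.take_of_length_le hLm]
        simp only [GG]
        rw [htk, h1, hu_mem _ hmem, hu_mem _ hmP, hlsub m hLm]
        group
    · have hnot : ¬(m < cword.length ∨ m - cword.length ∈ P) :=
        fun h => hm ((hchar m).mpr ⟨hmP, h⟩)
      push_neg at hnot
      obtain ⟨hmL, hnmem⟩ := hnot
      have h1 : m + 1 - cword.length = (m - cword.length) + 1 := by omega
      simp only [GG]
      rw [List.take_of_length_le (show cword.length ≤ m + 1 by omega),
        List.take_of_length_le (show cword.length ≤ m by omega), h1,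
        hu_not _ hnmem, hu_not _ hmP]
  have hstep_skip : ∀ j,
      GG cs wordOf P cword (q j + 1) = GG cs wordOf P cword (q j) * φ j := by
    intro j
    obtain ⟨hmP, hor⟩ := (hchar (q j)).mp ⟨j, rfl⟩
    have hphi : φ j = uu cs wordOf P (q j) * cs.simple (letter (q j)) *
        (uu cs wordOf P (q j))⁻¹ := by
      simp only [uu]; exact hφ j
    rw [hphi]
    by_cases hmL : q j < cword.length
    · have h1 : q j + 1 - cword.length = 0 := by omega
      have h2 : q j - cword.length = 0 := by omega
      simp only [GG]
      rw [h1, h2, hu0, htake _ hmL, hu_not _ hmP]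
      group
    · have hLm : cword.length ≤ q j := by omega
      have hmem : q j - cword.length ∈ P := hor.resolve_left hmL
      have h1 : q j + 1 - cword.length = (q j - cword.length) + 1 := by omega
      simp only [GG]
      rw [List.take_of_length_le (show cword.length ≤ q j + 1 by omega),
        List.take_of_length_le hLm, h1, hu_mem _ hmem, hu_not _ hmP, hlsub _ hLm]
      group
  -- counting lemmas
  have hcnt0 : cntF q 0 = 0 := by
    have hf : Finset.univ.filter (fun j : Fin (Fintype.card B) => q j < 0) = ∅ := by
      ext j; simp
    simp only [cntF, hf, Finset.card_empty]
  have hcnt_at : ∀ j, cntF q (q j) = (j : ℕ) := by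
    intro j
    have hfe : (Finset.univ.filter (fun j' : Fin (Fintype.card B) => q j' < q j))
        = (Finset.univ.filter (fun j' : Fin (Fintype.card B) => (j' : ℕ) < (j : ℕ))) := by
      ext j'
      simp only [Finset.mem_filter, Finset.mem_univ, true_and]
      rw [hqmono.lt_iff_lt, Fin.lt_def]
    simp only [cntF]
    rw [hfe, aux_card_filter_lt _ j j.isLt.le]
  have hcnt_at_succ : ∀ j, cntF q (q j + 1) = (j : ℕ) + 1 := by
    intro j
    have hfe : (Finset.univ.filter (fun j' : Fin (Fintype.card B) => q j' < q j + 1))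
        = (Finset.univ.filter (fun j' : Fin (Fintype.card B) => (j' : ℕ) < (j : ℕ) + 1)) := by
      ext j'
      simp only [Finset.mem_filter, Finset.mem_univ, true_and, Nat.lt_succ_iff]
      rw [hqmono.le_iff_le, Fin.le_def]
    simp only [cntF]
    rw [hfe, aux_card_filter_lt _ ((j : ℕ) + 1) j.isLt]
  have hcnt_not : ∀ m, m ∉ Set.range q → cntF q (m + 1) = cntF q m := by
    intro m hm
    simp only [cntF]
    congr 1
    ext j'
    simp only [Finset.mem_filter, Finset.mem_univ, true_and]
    have : q j' ≠ m := fun h => hm ⟨j', h⟩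
    omega
  -- main induction
  have key : ∀ m, ((List.ofFn φ).take (cntF q m)).prod = GG cs wordOf P cword m := by
    intro m
    induction m with
    | zero =>
      rw [hcnt0]
      simp only [GG, List.take_zero, List.prod_nil, Nat.zero_sub, hu0, cs.wordProd_nil]
      group
    | succ m ih =>
      by_cases hm : m ∈ Set.range q
      · obtain ⟨j, hj⟩ := hm
        subst hj
        rw [hcnt_at_succ j]
        have hjlt : (j : ℕ) < (List.ofFn φ).length := by
          rw [List.length_ofFn]; exact j.isLt
        rw [List.prod_take_succ _ _ hjlt]
        rw [hcnt_at j] at ih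
        rw [ih, hstep_skip j]
        simp [List.getElem_ofFn]
      · rw [hcnt_not m hm, ih, hstep_not m hm]
  -- conclusion
  have hjlast : ∀ j, q j ≤ q ⟨Fintype.card B - 1, hpred⟩ := by
    intro j
    refine hqmono.monotone ?_
    rw [Fin.le_def]
    simp only []
    have := j.isLt
    omega
  have hPbound : ∀ p ∈ P, p + cword.length ≤ q ⟨Fintype.card B - 1, hpred⟩ := by
    intro p hp
    have hex : ∃ t, p + t * cword.length ∉ P := by
      refine ⟨(P.sup id) + 1, fun hmem => ?_⟩
      have h1 : p + (P.sup id + 1) * cword.length ≤ P.sup id := Finset.le_sup (f := id) hmem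
      have h2 : P.sup id + 1 ≤ (P.sup id + 1) * cword.length :=
        Nat.le_mul_of_pos_right _ hLpos
      omega
    have ht0 : p + Nat.find hex * cword.length ∉ P := Nat.find_spec hex
    have ht0pos : 0 < Nat.find hex :=
      Nat.pos_of_ne_zero fun h => ht0 (by simpa [h] using hp)
    have hprev : p + (Nat.find hex - 1) * cword.length ∈ P := by
      by_contra hcon
      exact Nat.find_min hex (show Nat.find hex - 1 < Nat.find hex by omega) hcon
    have hmul : Nat.find hex * cword.length
        = (Nat.find hex - 1) * cword.length + cword.length := by
      conv_lhs => rw [show Nat.find hex = (Nat.find hex - 1) + 1 by omega]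
      exact Nat.succ_mul _ _
    have hmem_range : (p + Nat.find hex * cword.length) ∈ Set.range q := by
      rw [hchar]
      refine ⟨ht0, Or.inr ?_⟩
      have he : p + Nat.find hex * cword.length - cword.length
          = p + (Nat.find hex - 1) * cword.length := by omega
      rwa [he]
    obtain ⟨j, hjq⟩ := hmem_range
    have hle := hjlast j
    omega
  have hufinal : uu cs wordOf P (q ⟨Fintype.card B - 1, hpred⟩ + cword.length + 1
      - cword.length) = uu cs wordOf P (q ⟨Fintype.card B - 1, hpred⟩ + cword.length + 1) := by
    have hfe : P.filter (· < q ⟨Fintype.card B - 1, hpred⟩ + cword.length + 1 - cword.length)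
        = P.filter (· < q ⟨Fintype.card B - 1, hpred⟩ + cword.length + 1) := by
      ext p
      simp only [Finset.mem_filter]
      constructor
      · rintro ⟨hp, hlt⟩
        exact ⟨hp, by omega⟩
      · rintro ⟨hp, hlt⟩
        have hb := hPbound p hp
        exact ⟨hp, by omega⟩
    simp only [uu, hfe]
  have hcntM : cntF q (q ⟨Fintype.card B - 1, hpred⟩ + cword.length + 1) = Fintype.card B := by
    have hfe : Finset.univ.filter
        (fun j : Fin (Fintype.card B) => q j < q ⟨Fintype.card B - 1, hpred⟩ + cword.length + 1)
        = Finset.univ := by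
      apply Finset.filter_true_of_mem
      intro j _
      have := hjlast j
      omega
    simp only [cntF]
    rw [hfe, Finset.card_univ, Fintype.card_fin]
  have hfin := key (q ⟨Fintype.card B - 1, hpred⟩ + cword.length + 1)
  rw [hcntM, List.take_of_length_le (le_of_eq (List.length_ofFn (f := φ)))] at hfin
  rw [hfin]
  simp only [GG]
  rw [List.take_of_length_le
      (show cword.length ≤ q ⟨Fintype.card B - 1, hpred⟩ + cword.length + 1 by omega),
    hufinal, hc]
  group
end

section
/- Let W be a finite Coxeter group, x ∈ W, and let s be a simple reflection with xsx⁻¹ a cover reflection of x (i.e. ℓ(xs) < ℓ(x)), and let s_j be a simple reflection with ℓ(xs_j) > ℓ(x) such that xsx⁻¹ is also equal to (xs_j)s'(xs_j)⁻¹ for some simple reflection s' with ℓ(xs_j s') < ℓ(xs_j). Then s = s', s commutes with s_j, and consequently the reflections xsx⁻¹ and xs_jx⁻¹ commute. -/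
namespace CoverReflAux

open Classical

variable {B W : Type*} [Group W] {M : CoxeterMatrix B} (cs : CoxeterSystem M W)

/-- The Björner–Brenti style sign map associated to a simple reflection:
conjugate by `s a` and flip the sign when the first component equals `s a`. -/
noncomputable def sigmaFun (a : B) : W × ℤˣ → W × ℤˣ :=
  fun p => (cs.simple a * p.1 * cs.simple a, if p.1 = cs.simple a then -p.2 else p.2)

lemma conj_simple_eq_iff (a : B) (w v : W) :
    cs.simple a * w * cs.simple a = v ↔ w = cs.simple a * v * cs.simple a := by
  constructor
  · rintro rfl
    simp [mul_assoc, cs.simple_mul_simple_cancel_left, cs.simple_mul_simple_self]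
  · rintro rfl
    simp [mul_assoc, cs.simple_mul_simple_cancel_left, cs.simple_mul_simple_self]

lemma sigmaFun_invol (a : B) : Function.Involutive (sigmaFun cs a) := by
  rintro ⟨w, ε⟩
  unfold sigmaFun
  have h2 : cs.simple a * (cs.simple a * w * cs.simple a) * cs.simple a = w := by
    simp [mul_assoc, cs.simple_mul_simple_cancel_left, cs.simple_mul_simple_self]
  have h3 : (cs.simple a * w * cs.simple a = cs.simple a) ↔ (w = cs.simple a) := by
    rw [conj_simple_eq_iff cs]
    simp [cs.simple_mul_simple_self]
  simp only [h2, h3]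
  split_ifs <;> simp

/-- The permutation of `W × ℤˣ` induced by a simple reflection. -/
noncomputable def sigmaPerm (a : B) : Equiv.Perm (W × ℤˣ) :=
  (sigmaFun_invol cs a).toPerm _

lemma sigma_pow_apply (a b : B) (r : ℕ) (w : W) (ε : ℤˣ) :
    ((sigmaPerm cs a * sigmaPerm cs b) ^ r) (w, ε) =
      ((cs.simple a * cs.simple b) ^ r * w * (cs.simple b * cs.simple a) ^ r,
        ε * ∏ t ∈ Finset.range (2 * r),
          (if w = (cs.simple b * cs.simple a) ^ t * cs.simple b then (-1 : ℤˣ) else 1)) := by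
  set sa := cs.simple a
  set sb := cs.simple b
  induction r generalizing w ε with
  | zero => simp
  | succ r ih =>
    have hshift : ∀ t : ℕ,
        sb * (sa * ((sb * sa) ^ t * sb) * sa) * sb = (sb * sa) ^ (2 + t) * sb := by
      intro t
      have e1 : sb * (sa * ((sb * sa) ^ t * sb) * sa) * sb
          = (sb * sa) * ((sb * sa) ^ t * (sb * (sa * sb))) := by
        simp [mul_assoc]
      have e2 : (sb * sa) * ((sb * sa) ^ t * (sb * (sa * sb)))
          = (sb * sa) ^ (1 + t) * ((sb * sa) * sb) := by
        rw [pow_add, pow_one]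
        simp [mul_assoc]
      have e3 : (sb * sa) ^ (1 + t) * ((sb * sa) * sb) = (sb * sa) ^ (2 + t) * sb := by
        rw [show 2 + t = (1 + t) + 1 by omega, pow_succ]
        simp [mul_assoc]
      rw [e1, e2, e3]
    have hc1 : (sb * w * sb = sa) ↔ (w = sb * sa * sb) := conj_simple_eq_iff cs b w sa
    have hcond : ∀ t : ℕ,
        (sa * (sb * w * sb) * sa = (sb * sa) ^ t * sb) ↔ (w = (sb * sa) ^ (2 + t) * sb) := by
      intro t
      rw [conj_simple_eq_iff cs a, conj_simple_eq_iff cs b, hshift t]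
    have hone : (sigmaPerm cs a * sigmaPerm cs b) (w, ε) =
        (sa * (sb * w * sb) * sa,
          (if w = sb * sa * sb then (-1 : ℤˣ) else 1) *
            ((if w = sb then (-1 : ℤˣ) else 1) * ε)) := by
      simp only [Equiv.Perm.mul_apply, sigmaPerm, Function.Involutive.coe_toPerm, sigmaFun]
      refine Prod.ext rfl ?_
      simp only [show (cs.simple b * w * cs.simple b = cs.simple a) ↔ (w = sb * sa * sb) from hc1]
      split_ifs <;> simp
    rw [pow_succ, Equiv.Perm.mul_apply, hone, ih]
    refine Prod.ext ?_ ?_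
    · show (sa * sb) ^ r * (sa * (sb * w * sb) * sa) * (sb * sa) ^ r
        = (sa * sb) ^ (r + 1) * w * (sb * sa) ^ (r + 1)
      rw [pow_succ (sa * sb) r, pow_succ' (sb * sa) r]
      simp [mul_assoc]
    · show ((if w = sb * sa * sb then (-1 : ℤˣ) else 1) *
            ((if w = sb then (-1 : ℤˣ) else 1) * ε)) *
          ∏ t ∈ Finset.range (2 * r),
            (if sa * (sb * w * sb) * sa = (sb * sa) ^ t * sb then (-1 : ℤˣ) else 1)
        = ε * ∏ t ∈ Finset.range (2 * (r + 1)),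
            (if w = (sb * sa) ^ t * sb then (-1 : ℤˣ) else 1)
      have hprod : ∏ t ∈ Finset.range (2 * r),
            (if sa * (sb * w * sb) * sa = (sb * sa) ^ t * sb then (-1 : ℤˣ) else 1)
          = ∏ t ∈ Finset.range (2 * r),
            (if w = (sb * sa) ^ (2 + t) * sb then (-1 : ℤˣ) else 1) := by
        refine Finset.prod_congr rfl fun t _ => ?_
        rw [if_congr (hcond t) rfl rfl]
      rw [hprod, show 2 * (r + 1) = 2 + 2 * r by ring, Finset.prod_range_add]
      have h2 : ∏ t ∈ Finset.range 2, (if w = (sb * sa) ^ t * sb then (-1 : ℤˣ) else 1)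
          = (if w = sb then (-1 : ℤˣ) else 1) * (if w = sb * sa * sb then (-1 : ℤˣ) else 1) := by
        rw [Finset.prod_range_succ, Finset.prod_range_one, pow_zero, pow_one, one_mul]
      rw [h2]
      ac_rfl

lemma sigma_liftable : CoxeterMatrix.IsLiftable M (fun a => sigmaPerm cs a) := by
  intro a b
  set m := M a b with hm
  ext ⟨w, ε⟩ : 1
  rw [Equiv.Perm.one_apply, sigma_pow_apply]
  refine Prod.ext ?_ ?_
  · show (cs.simple a * cs.simple b) ^ m * w * (cs.simple b * cs.simple a) ^ m = w
    rw [hm, cs.simple_mul_simple_pow a b, cs.simple_mul_simple_pow' a b]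
    simp
  · show ε * ∏ t ∈ Finset.range (2 * m),
        (if w = (cs.simple b * cs.simple a) ^ t * cs.simple b then (-1 : ℤˣ) else 1) = ε
    have hQ : (cs.simple b * cs.simple a) ^ m = 1 := by
      rw [hm]; exact cs.simple_mul_simple_pow' a b
    have : ∏ t ∈ Finset.range (2 * m),
        (if w = (cs.simple b * cs.simple a) ^ t * cs.simple b then (-1 : ℤˣ) else 1) = 1 := by
      rw [two_mul, Finset.prod_range_add]
      have heq : ∀ t, (if w = (cs.simple b * cs.simple a) ^ (m + t) * cs.simple b
            then (-1 : ℤˣ) else 1)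
          = (if w = (cs.simple b * cs.simple a) ^ t * cs.simple b then (-1 : ℤˣ) else 1) := by
        intro t
        rw [pow_add, hQ, one_mul]
      rw [Finset.prod_congr rfl fun t _ => heq t]
      exact Int.units_mul_self _
    rw [this, mul_one]

/-- Key fact: if the conjugate `s_j s_k s_j` of a simple reflection `s_k` by another simple
reflection `s_j` is itself simple, then `s_j` and `s_k` commute and the conjugate is `s_k`. -/
lemma key {i j k : B} (hjk : cs.simple j ≠ cs.simple k)
    (h : cs.simple i = cs.simple j * cs.simple k * cs.simple j) :
    cs.simple k * cs.simple j = cs.simple j * cs.simple k ∧ cs.simple i = cs.simple k := by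
  have hij : cs.simple i ≠ cs.simple j := by
    intro hh
    rw [hh] at h
    have h2 := (conj_simple_eq_iff cs j (cs.simple k) (cs.simple j)).mp h.symm
    apply hjk
    rw [h2]
    simp [mul_assoc, cs.simple_mul_simple_cancel_left, cs.simple_mul_simple_self]
  have hperm : sigmaPerm cs i = sigmaPerm cs j * sigmaPerm cs k * sigmaPerm cs j := by
    have hφ := congrArg (cs.lift ⟨fun a => sigmaPerm cs a, sigma_liftable cs⟩) h
    simpa only [map_mul, CoxeterSystem.lift_apply_simple] using hφ
  have happ := congrArg (fun f : Equiv.Perm (W × ℤˣ) => (f (cs.simple j, (1 : ℤˣ))).2) hperm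
  simp only [Equiv.Perm.mul_apply, sigmaPerm, Function.Involutive.coe_toPerm] at happ
  have e0 : sigmaFun cs i (cs.simple j, (1 : ℤˣ)) = (cs.simple i * cs.simple j * cs.simple i, 1) := by
    simp only [sigmaFun, if_neg (fun hh => hij hh.symm : ¬ cs.simple j = cs.simple i)]
  have e1 : sigmaFun cs j (cs.simple j, (1 : ℤˣ)) = (cs.simple j, -1) := by
    simp [sigmaFun, cs.simple_mul_simple_self]
  have e2 : sigmaFun cs k (cs.simple j, (-1 : ℤˣ))
      = (cs.simple k * cs.simple j * cs.simple k, -1) := by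
    simp only [sigmaFun, if_neg hjk]
  rw [e0, e1, e2] at happ
  by_cases hc : cs.simple k * cs.simple j * cs.simple k = cs.simple j
  · have hcomm : cs.simple k * cs.simple j = cs.simple j * cs.simple k := by
      have h4 := congrArg (· * cs.simple k) hc
      simpa [cs.simple_mul_simple_cancel_right] using h4
    refine ⟨hcomm, ?_⟩
    rw [h, mul_assoc, hcomm, ← mul_assoc, cs.simple_mul_simple_self, one_mul]
  · exfalso
    simp only [sigmaFun, if_neg hc] at happ
    exact absurd happ (by decide)

end CoverReflAux

/-- Let `x ∈ W` (a finite Coxeter group), `s` a simple reflection with `x s x⁻¹` a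
cover reflection of `x` (i.e. `ℓ(xs) < ℓ(x)`), and `s_j` a simple reflection with
`ℓ(x s_j) > ℓ(x)` such that `x s x⁻¹ = (x s_j) s' (x s_j)⁻¹` for some simple
reflection `s'` with `ℓ(x s_j s') < ℓ(x s_j)`.  Then `s = s'`, `s` commutes with
`s_j`, and consequently the reflections `x s x⁻¹` and `x s_j x⁻¹` commute. -/
theorem cover_reflection_commutes
    {B W : Type*} [Group W] [Finite W] {M : CoxeterMatrix B} (cs : CoxeterSystem M W)
    (x : W) (s sj s' : B)
    (h1 : cs.length (x * cs.simple s) < cs.length x)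
    (h2 : cs.length x < cs.length (x * cs.simple sj))
    (h3 : cs.length (x * cs.simple sj * cs.simple s') < cs.length (x * cs.simple sj))
    (heq : x * cs.simple s * x⁻¹ =
      (x * cs.simple sj) * cs.simple s' * (x * cs.simple sj)⁻¹) :
    cs.simple s = cs.simple s' ∧
    cs.simple s * cs.simple sj = cs.simple sj * cs.simple s ∧
    (x * cs.simple s * x⁻¹) * (x * cs.simple sj * x⁻¹) =
      (x * cs.simple sj * x⁻¹) * (x * cs.simple s * x⁻¹) := by
  -- extract the group-theoretic content of `heq`
  have h0 : cs.simple s = cs.simple sj * cs.simple s' * cs.simple sj := by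
    have h := heq
    rw [mul_inv_rev, cs.inv_simple] at h
    have h' : x * (cs.simple s * x⁻¹) =
        x * (cs.simple sj * (cs.simple s' * (cs.simple sj * x⁻¹))) := by
      simpa [mul_assoc] using h
    have h'' := mul_left_cancel h'
    have h''' : cs.simple s * x⁻¹ =
        cs.simple sj * cs.simple s' * cs.simple sj * x⁻¹ := by
      simpa [mul_assoc] using h''
    exact mul_right_cancel h'''
  have hne : cs.simple sj ≠ cs.simple s' := by
    intro hh
    rw [← hh] at h0
    have hs : cs.simple s = cs.simple sj := by
      rw [h0, cs.simple_mul_simple_self, one_mul]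
    rw [hs] at h1
    omega
  obtain ⟨hcomm, hss'⟩ := CoverReflAux.key cs hne h0
  refine ⟨hss', ?_, ?_⟩
  · rw [hss']
    exact hcomm
  · have hc : cs.simple s * cs.simple sj = cs.simple sj * cs.simple s := by
      rw [hss']; exact hcomm
    calc (x * cs.simple s * x⁻¹) * (x * cs.simple sj * x⁻¹)
        = x * (cs.simple s * cs.simple sj) * x⁻¹ := by
          simp [mul_assoc]
      _ = x * (cs.simple sj * cs.simple s) * x⁻¹ := by rw [hc]
      _ = (x * cs.simple sj * x⁻¹) * (x * cs.simple s * x⁻¹) := by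
          simp [mul_assoc]
end
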